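/- arXiv:2605.27169 — 9 statements merged into one kernel-verified Lean document; each statement's English description precedes it below -/
import Mathlib

section
/- Let q = 2n+1 be an odd prime power. Then R_q(χ_q) is independent of the choice of the generator χ_q: for any two generators χ and χ' of the group of multiplicative characters of F_q, one has R_q(χ) = R_q(χ'). -/
/-!
Put `T ρ = ρ (-1) * (J(φ, ρ) + J(φ, ρ⁻¹))`, so that the factor of `R_q(χ)` at `k` is
`χ^k(-1) * T(χ^k)`. The substitution `x ↦ x⁻¹` gives `J(φ, φψ) = φ(-1) J(φ, ψ⁻¹)`, which makes `T`
invariant under `ρ ↦ ρ⁻¹` and `ρ ↦ φρ`. As `φ = χ^n`, `k ↦ T(χ^k)` is then an even function on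
`ZMod n`. Another generator is `χ' = χ^m` with `m` prime to `2n`: multiplication by `m` permutes
the classes `±k` for `0 < k < n/2`, so `∏ T(χ'^k) = ∏ T(χ^k)`, and since `m` is odd the signs
`χ'^k(-1) = χ^k(-1)` agree.
-/

open Finset

def halfRange (n : ℕ) : Finset ℕ := (range n).filter (fun k => 0 < k ∧ 2 * k < n)

namespace ZMod

variable {n : ℕ}

lemma natCast_natAbs_valMinAbs_eq_or [NeZero n] (x : ZMod n) :
    (x.valMinAbs.natAbs : ZMod n) = x ∨ (x.valMinAbs.natAbs : ZMod n) = -x := by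
  rw [natCast_natAbs_valMinAbs]
  split_ifs
  exacts [.inl rfl, .inr rfl]

lemma natAbs_valMinAbs_mem_halfRange [NeZero n] {x : ZMod n} (hx : x ≠ 0) (h2x : 2 * x ≠ 0) :
    x.valMinAbs.natAbs ∈ halfRange n := by
  have hle := natAbs_valMinAbs_le x
  have hne : 2 * x.valMinAbs.natAbs ≠ n := fun h => by
    apply h2x
    have h' : ((2 * x.valMinAbs.natAbs : ℕ) : ZMod n) = 0 := by rw [h, natCast_self]
    rcases natCast_natAbs_valMinAbs_eq_or x with e | e <;>
      simpa [e] using h'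
  have hpos : 0 < x.valMinAbs.natAbs := by simpa using hx
  simp only [halfRange, mem_filter, mem_range]
  omega

lemma natCast_ne_zero_of_mem_halfRange {k : ℕ} (hk : k ∈ halfRange n) :
    (k : ZMod n) ≠ 0 ∧ 2 * (k : ZMod n) ≠ 0 := by
  simp only [halfRange, mem_filter, mem_range] at hk
  refine ⟨fun h => ?_, fun h => ?_⟩
  · rw [natCast_eq_zero_iff] at h
    exact absurd (Nat.le_of_dvd hk.2.1 h) (by omega)
  · rw [← Nat.cast_ofNat, ← Nat.cast_mul, natCast_eq_zero_iff] at h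
    exact absurd (Nat.le_of_dvd (by omega) h) (by omega)

lemma natAbs_valMinAbs_natCast_of_mem_halfRange {k : ℕ} (hk : k ∈ halfRange n) :
    (k : ZMod n).valMinAbs.natAbs = k := by
  simp only [halfRange, mem_filter, mem_range] at hk
  rw [valMinAbs_natCast_of_le_half (by omega), Int.natAbs_natCast]

lemma natAbs_valMinAbs_unit_mul_mem_halfRange [NeZero n] (u : (ZMod n)ˣ) {k : ℕ}
    (hk : k ∈ halfRange n) : (u * k : ZMod n).valMinAbs.natAbs ∈ halfRange n := by
  obtain ⟨h1, h2⟩ := natCast_ne_zero_of_mem_halfRange hk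
  refine natAbs_valMinAbs_mem_halfRange ?_ ?_
  · simpa using h1
  · rw [mul_left_comm]; simpa using h2

lemma natAbs_valMinAbs_inv_mul_natAbs_valMinAbs_mul [NeZero n] (u : (ZMod n)ˣ) {k : ℕ}
    (hk : k ∈ halfRange n) :
    ((u⁻¹ : (ZMod n)ˣ) * ((u * k : ZMod n).valMinAbs.natAbs : ZMod n)).valMinAbs.natAbs = k := by
  rcases natCast_natAbs_valMinAbs_eq_or (u * k : ZMod n) with e | e <;>
    simp [e, natAbs_valMinAbs_natCast_of_mem_halfRange hk]

/-- `k ↦ |u k|`, with `|·|` the least absolute residue, permutes `halfRange n`. -/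
theorem prod_halfRange_unit_mul {M : Type*} [CommMonoid M] (g : ZMod n → M)
    (hg : ∀ x, g (-x) = g x) (u : (ZMod n)ˣ) :
    ∏ k ∈ halfRange n, g (u * k) = ∏ k ∈ halfRange n, g k := by
  rcases eq_zero_or_neZero n with rfl | _
  · rfl
  refine prod_nbij' (fun k => (u * k : ZMod n).valMinAbs.natAbs)
    (fun k => ((u⁻¹ : (ZMod n)ˣ) * k : ZMod n).valMinAbs.natAbs)
    (fun k hk => natAbs_valMinAbs_unit_mul_mem_halfRange u hk)
    (fun k hk => natAbs_valMinAbs_unit_mul_mem_halfRange u⁻¹ hk)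
    (fun k hk => natAbs_valMinAbs_inv_mul_natAbs_valMinAbs_mul u hk)
    (fun k hk => by simpa using natAbs_valMinAbs_inv_mul_natAbs_valMinAbs_mul u⁻¹ hk)
    (fun k _ => ?_)
  rcases natCast_natAbs_valMinAbs_eq_or (u * k : ZMod n) with e | e <;> simp [e, hg]

end ZMod

section Cyclic

variable {G : Type*} [Group G] [Finite G]

lemma exists_coprime_pow_eq_of_forall_mem_zpowers {c d : G} (hc : ∀ x, x ∈ Subgroup.zpowers c)
    (hd : ∀ x, x ∈ Subgroup.zpowers d) : ∃ m : ℕ, m.Coprime (orderOf c) ∧ c ^ m = d := by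
  obtain ⟨m, rfl⟩ := mem_powers_iff_mem_zpowers.mpr (hc d)
  refine ⟨m, ?_, rfl⟩
  have h := orderOf_pow (n := m) c
  rw [orderOf_eq_card_of_forall_mem_zpowers hd, ← orderOf_eq_card_of_forall_mem_zpowers hc,
    eq_comm, Nat.div_eq_self] at h
  exact Nat.coprime_comm.mp (h.resolve_left (orderOf_pos c).ne')

lemma pow_eq_of_orderOf_eq_two_mul {c φ : G} {n : ℕ} (hc : orderOf c = 2 * n)
    (hφ : φ ∈ Subgroup.zpowers c) (h2 : φ ^ 2 = 1) (h1 : φ ≠ 1) : c ^ n = φ := by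
  obtain ⟨i, rfl : c ^ i = φ⟩ := mem_powers_iff_mem_zpowers.mpr hφ
  rw [← pow_mul, ← orderOf_dvd_iff_pow_eq_one, hc, mul_comm i] at h2
  obtain ⟨t, rfl : i = n * t⟩ := Nat.dvd_of_mul_dvd_mul_left two_pos h2
  have hn : (c ^ n) ^ 2 = 1 := by rw [← pow_mul, mul_comm, ← hc, pow_orderOf_eq_one]
  rw [pow_mul, pow_eq_pow_mod t hn] at h1 ⊢
  rcases Nat.mod_two_eq_zero_or_one t with ht | ht
  · simp [ht] at h1
  · rw [ht, pow_one]

end Cyclic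

lemma prod_halfRange_pow_mul {G M : Type*} [Group G] [CommMonoid M] (c : G) {n m : ℕ}
    (hm : m.Coprime n) (T : G → M) (hmul : ∀ ρ, T (c ^ n * ρ) = T ρ)
    (hinv : ∀ ρ, T ρ⁻¹ = T ρ) :
    ∏ k ∈ halfRange n, T (c ^ (m * k)) = ∏ k ∈ halfRange n, T (c ^ k) := by
  rcases eq_zero_or_neZero n with rfl | _
  · rfl
  have hmod (a : ℕ) : T (c ^ a) = T (c ^ (a % n)) := by
    have hpow (j : ℕ) (ρ : G) : T (c ^ (n * j) * ρ) = T ρ := by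
      induction j generalizing ρ with
      | zero => simp
      | succ j ih => rw [mul_add, mul_one, pow_add, mul_assoc, ih, hmul]
    conv_lhs => rw [← Nat.div_add_mod a n, pow_add, hpow]
  let g : ZMod n → M := fun x => T (c ^ x.val)
  have hg : ∀ x, g (-x) = g x := by
    intro x
    rcases eq_or_ne x 0 with rfl | hx
    · rw [neg_zero]
    have : c ^ (-x).val = c ^ n * (c ^ x.val)⁻¹ := by
      rw [ZMod.neg_val, if_neg hx, eq_mul_inv_iff_mul_eq, ← pow_add,
        Nat.sub_add_cancel x.val_le]
    simp only [g, this, hmul, hinv]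
  have hcast (a : ℕ) : g a = T (c ^ a) := by simp only [g, ZMod.val_natCast, ← hmod]
  have h := ZMod.prod_halfRange_unit_mul g hg (ZMod.unitOfCoprime m hm)
  simp only [ZMod.coe_unitOfCoprime, ← Nat.cast_mul, hcast] at h
  exact h

namespace MulChar

variable {R R' : Type*} [CommRing R] [CommRing R']

lemma apply_neg_one_mul_self (ρ : MulChar R R') : ρ (-1) * ρ (-1) = 1 := by
  rw [← map_mul, neg_one_mul, neg_neg, map_one]

lemma pow_apply_neg_one_of_odd (ρ : MulChar R R') {m : ℕ} (hm : Odd m) :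
    (ρ ^ m) (-1) = ρ (-1) := by
  rw [ρ.pow_apply' (Nat.ne_of_odd_add hm),
    pow_eq_pow_mod m (by rw [sq, ρ.apply_neg_one_mul_self]), Nat.odd_iff.mp hm, pow_one]

end MulChar

section JacobiSum

variable {F R : Type*} [Field F] [Fintype F] [CommRing R]

/-- The substitution `x ↦ x⁻¹` in the Jacobi sum. -/
lemma jacobiSum_mul_inv_left (χ ψ : MulChar F R) :
    jacobiSum (χ * ψ)⁻¹ ψ = ψ (-1) * jacobiSum χ ψ := by
  rw [jacobiSum, jacobiSum, mul_sum, eq_comm]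
  refine Fintype.sum_equiv (Equiv.inv F) _ _ fun x => ?_
  rcases eq_or_ne x 0 with rfl | hx
  · rw [Equiv.inv_apply, inv_zero, MulChar.map_nonunit χ not_isUnit_zero,
      MulChar.map_nonunit (χ * ψ)⁻¹ not_isUnit_zero, zero_mul, mul_zero]
  have hψ : ψ x * ψ x⁻¹ = 1 := by rw [← map_mul, mul_inv_cancel₀ hx, map_one]
  have hsub : 1 - x⁻¹ = -1 * (1 - x) * x⁻¹ := by field_simp; ring
  rw [Equiv.inv_apply, MulChar.inv_apply', inv_inv, MulChar.mul_apply, hsub, map_mul, map_mul]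
  linear_combination -(χ x * ψ (-1) * ψ (1 - x)) * hψ

lemma jacobiSum_mul_right_of_sq_eq_one {φ : MulChar F R} (hφ : φ ^ 2 = 1) (ψ : MulChar F R) :
    jacobiSum φ (φ * ψ) = φ (-1) * jacobiSum φ ψ⁻¹ := by
  have hφinv : φ⁻¹ = φ := inv_eq_of_mul_eq_one_right (by rw [← sq, hφ])
  rw [jacobiSum_comm, jacobiSum_comm φ, ← jacobiSum_mul_inv_left, mul_inv, inv_inv, hφinv,
    mul_comm]

noncomputable def twistedJacobiPair (φ ρ : MulChar F R) : R :=
  ρ (-1) * (jacobiSum φ ρ + jacobiSum φ ρ⁻¹)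

lemma twistedJacobiPair_inv (φ ρ : MulChar F R) :
    twistedJacobiPair φ ρ⁻¹ = twistedJacobiPair φ ρ := by
  rw [twistedJacobiPair, twistedJacobiPair, MulChar.inv_apply', inv_neg, inv_one, inv_inv,
    add_comm]

lemma twistedJacobiPair_mul_left {φ : MulChar F R} (hφ : φ ^ 2 = 1) (ρ : MulChar F R) :
    twistedJacobiPair φ (φ * ρ) = twistedJacobiPair φ ρ := by
  have hφinv : φ⁻¹ = φ := inv_eq_of_mul_eq_one_right (by rw [← sq, hφ])
  have h : jacobiSum φ (φ * ρ)⁻¹ = φ (-1) * jacobiSum φ ρ := by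
    rw [mul_inv, hφinv, jacobiSum_mul_right_of_sq_eq_one hφ, inv_inv]
  rw [twistedJacobiPair, twistedJacobiPair, h, jacobiSum_mul_right_of_sq_eq_one hφ,
    MulChar.mul_apply]
  linear_combination (ρ (-1) * (jacobiSum φ ρ⁻¹ + jacobiSum φ ρ)) * φ.apply_neg_one_mul_self

lemma jacobiSum_add_jacobiSum_inv (φ ρ : MulChar F R) :
    jacobiSum φ ρ + jacobiSum φ ρ⁻¹ = ρ (-1) * twistedJacobiPair φ ρ := by
  rw [twistedJacobiPair, ← mul_assoc, ρ.apply_neg_one_mul_self, one_mul]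

end JacobiSum

/-- Let `q = 2n+1` be an odd prime power. Then `R_q(χ_q)` is independent of
the choice of the generator `χ_q` of the group of multiplicative characters of `F_q`:
for any two generators `χ` and `χ'`, one has `R_q(χ) = R_q(χ')`. -/
theorem stmt_1 {F : Type*} [Field F] [Fintype F] (n : ℕ)
    (hcard : Fintype.card F = 2 * n + 1)
    (φ χ χ' : MulChar F ℂ)
    (hφ : φ ^ 2 = 1 ∧ φ ≠ 1)
    (hχ : ∀ ψ : MulChar F ℂ, ψ ∈ Subgroup.zpowers χ)
    (hχ' : ∀ ψ : MulChar F ℂ, ψ ∈ Subgroup.zpowers χ') :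
    (∏ k ∈ (Finset.range n).filter (fun k => 0 < k ∧ 2 * k < n),
        (jacobiSum φ (χ ^ k) + jacobiSum φ (χ ^ (-(k : ℤ))))) =
      (∏ k ∈ (Finset.range n).filter (fun k => 0 < k ∧ 2 * k < n),
        (jacobiSum φ (χ' ^ k) + jacobiSum φ (χ' ^ (-(k : ℤ))))) := by
  classical
  have hχord : orderOf χ = 2 * n := by
    rw [orderOf_eq_card_of_forall_mem_zpowers hχ,
      MulChar.card_eq_card_units_of_hasEnoughRootsOfUnity, Nat.card_eq_fintype_card,
      Fintype.card_units, hcard, Nat.add_sub_cancel]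
  obtain ⟨m, hm, rfl⟩ := exists_coprime_pow_eq_of_forall_mem_zpowers hχ hχ'
  rw [hχord] at hm
  have hφχ : χ ^ n = φ := pow_eq_of_orderOf_eq_two_mul hχord (hχ φ) hφ.1 hφ.2
  have hperm := prod_halfRange_pow_mul χ (Nat.Coprime.coprime_mul_left_right hm)
    (twistedJacobiPair φ) (by rw [hφχ]; exact twistedJacobiPair_mul_left hφ.1)
    (twistedJacobiPair_inv φ)
  have hsign (k : ℕ) : (χ ^ (m * k)) (-1) = (χ ^ k) (-1) := by
    rw [mul_comm, pow_mul,
      MulChar.pow_apply_neg_one_of_odd _ (Nat.Coprime.coprime_mul_right_right hm).odd_of_right]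
  simp only [zpow_neg, zpow_natCast, jacobiSum_add_jacobiSum_inv, hsign, ← pow_mul]
  rw [← halfRange, prod_mul_distrib, prod_mul_distrib, hperm]
end

section
/- Let q = 2n+1 ≡ 3 (mod 4) be an odd prime power. Then −det A_q = x_q², where x_q = R_q/2^⌊n/2⌋ ∈ ℤ. Equivalently, −2^{n−1}·det A_q = R_q². -/
open Finset

section StmtTwoAux

variable {F : Type*} [Field F] [Fintype F]

private lemma aux_ne_zero (ψ : MulChar F ℂ) {a : F} (ha : a ≠ 0) : ψ a ≠ 0 := by
  intro h
  have h1 : (ψ⁻¹ * ψ) a = 1 := by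
    rw [MulChar.inv_mul]; exact MulChar.one_apply (isUnit_iff_ne_zero.mpr ha)
  rw [MulChar.mul_apply, h, mul_zero] at h1
  exact zero_ne_one h1

private lemma aux_pow_apply (ψ : MulChar F ℂ) (k : ℕ) {a : F} (ha : a ≠ 0) :
    (ψ ^ k) a = ψ a ^ k := by
  rcases Nat.eq_zero_or_pos k with hk | hk
  · subst hk; rw [pow_zero, pow_zero]; exact MulChar.one_apply (isUnit_iff_ne_zero.mpr ha)
  · exact MulChar.pow_apply' ψ hk.ne' a

private lemma aux_zpow_apply (ψ : MulChar F ℂ) (m : ℤ) {a : F} (ha : a ≠ 0) :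
    (ψ ^ m) a = ψ a ^ m := by
  rcases m with k | k
  · rw [Int.ofNat_eq_coe, zpow_natCast, zpow_natCast]; exact aux_pow_apply ψ k ha
  · rw [zpow_negSucc, zpow_negSucc, MulChar.inv_apply_eq_inv', aux_pow_apply ψ (k+1) ha]

private lemma aux_phi_mul_self {φ : MulChar F ℂ} (hφ2 : φ ^ 2 = 1) {a : F} (ha : a ≠ 0) :
    φ a * φ a = 1 := by
  have := aux_pow_apply φ 2 ha
  rw [hφ2, MulChar.one_apply (isUnit_iff_ne_zero.mpr ha)] at this
  rw [← sq]; exact this.symm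

private lemma aux_phi_square {φ : MulChar F ℂ} (hφ2 : φ ^ 2 = 1) {a : F} (ha : a ≠ 0)
    (hsq : IsSquare a) : φ a = 1 := by
  obtain ⟨b, rfl⟩ := hsq
  have hb : b ≠ 0 := by rintro rfl; simp at ha
  rw [map_mul]; exact aux_phi_mul_self hφ2 hb

private lemma aux_phi_nonsquare {φ : MulChar F ℂ} (hφ2 : φ ^ 2 = 1) (hφ1 : φ ≠ 1) {a : F}
    (ha : a ≠ 0) (hsq : ¬ IsSquare a) : φ a = -1 := by
  classical
  obtain ⟨u, hu⟩ := MulChar.ne_one_iff.mp hφ1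
  have hu0 : (u : F) ≠ 0 := u.ne_zero
  have hval : φ (u : F) = -1 := by
    rcases mul_self_eq_one_iff.mp (aux_phi_mul_self hφ2 hu0) with h | h
    · exact absurd h hu
    · exact h
  have huns : ¬ IsSquare (u : F) := fun h => by
    rw [aux_phi_square hφ2 hu0 h] at hval; norm_num at hval
  -- a * u⁻¹ is a square
  have hq1 : quadraticChar F a = -1 := (quadraticChar_neg_one_iff_not_isSquare).mpr hsq
  have hq2 : quadraticChar F (u : F) = -1 := (quadraticChar_neg_one_iff_not_isSquare).mpr huns
  have hqi : quadraticChar F ((u : F)⁻¹) = -1 := by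
    have := map_mul (quadraticChar F) (u : F) (u : F)⁻¹
    rw [mul_inv_cancel₀ hu0, map_one, hq2] at this
    linarith [this]
  have hsq' : IsSquare (a * (u : F)⁻¹) := by
    have h0 : a * (u : F)⁻¹ ≠ 0 := mul_ne_zero ha (inv_ne_zero hu0)
    refine (quadraticChar_one_iff_isSquare h0).mp ?_
    rw [map_mul, hq1, hqi]; ring
  have : φ a = φ (a * (u : F)⁻¹) * φ (u : F) := by
    rw [← map_mul, mul_assoc, inv_mul_cancel₀ hu0, mul_one]
  rw [this, aux_phi_square hφ2 (mul_ne_zero ha (inv_ne_zero hu0)) hsq', hval, one_mul]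


/-- Sum of a character with conditions over the set of nonzero squares vanishes. -/
private lemma aux_sum_S {S : Finset F} (hS : ∀ x, x ∈ S ↔ x ≠ 0 ∧ IsSquare x)
    {φ : MulChar F ℂ} (hsq : ∀ x : F, x ≠ 0 → IsSquare x → φ x = 1)
    (hns : ∀ x : F, x ≠ 0 → ¬ IsSquare x → φ x = -1)
    {ψ : MulChar F ℂ} (hψ : ψ ≠ 1) (hψφ : ψ * φ ≠ 1) :
    ∑ t ∈ S, ψ t = 0 := by
  have key : ∑ x : F, (ψ x + (ψ * φ) x) = 0 := by
    rw [Finset.sum_add_distrib, MulChar.sum_eq_zero_of_ne_one hψ,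
      MulChar.sum_eq_zero_of_ne_one hψφ, add_zero]
  have key2 : ∑ x : F, (ψ x + (ψ * φ) x) = ∑ t ∈ S, 2 * ψ t := by
    rw [← Finset.sum_subset (Finset.subset_univ S) (fun x _ hx => ?_)]
    · refine Finset.sum_congr rfl fun x hx => ?_
      obtain ⟨hx0, hxs⟩ := (hS x).1 hx
      rw [MulChar.mul_apply, hsq x hx0 hxs, mul_one]; ring
    · rcases eq_or_ne x 0 with rfl | hx0
      · rw [MulChar.map_nonunit ψ not_isUnit_zero, MulChar.map_nonunit (ψ * φ) not_isUnit_zero,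
          add_zero]
      · have hxs : ¬ IsSquare x := fun h => hx ((hS x).2 ⟨hx0, h⟩)
        rw [MulChar.mul_apply, hns x hx0 hxs]; ring
  rw [key2, ← Finset.mul_sum] at key
  have := mul_eq_zero.mp key
  simpa using this

/-- The eigenvalue formula: `2 * c(ψ) = ψ(-1) * (J(φ,ψ) + J(φ,ψ⁻¹))`. -/
private lemma aux_two_c {S : Finset F} (hS : ∀ x, x ∈ S ↔ x ≠ 0 ∧ IsSquare x)
    {φ : MulChar F ℂ} (hφ2 : φ ^ 2 = 1)
    (hsq : ∀ x : F, x ≠ 0 → IsSquare x → φ x = 1)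
    (hns : ∀ x : F, x ≠ 0 → ¬ IsSquare x → φ x = -1)
    (ψ : MulChar F ℂ) :
    2 * ∑ t ∈ S, φ (1 + t) * ψ t
      = ψ (-1) * (jacobiSum φ ψ + jacobiSum φ ψ⁻¹) := by
  have hm1 : (-1 : F) ≠ 0 := neg_ne_zero.mpr one_ne_zero
  -- step 2 (general): for any mulchar ξ, `∑ x, φ(1+x) ξ x = ξ(-1) * jacobiSum ξ φ`
  have st2 : ∀ ξ : MulChar F ℂ, ∑ x : F, φ (1 + x) * ξ x = ξ (-1) * jacobiSum ξ φ := by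
    intro ξ
    have hemm : ξ (-1) * ξ (-1) = 1 := by
      rw [← map_mul]; norm_num
    have : jacobiSum ξ φ = ∑ x : F, ξ (-1) * (φ (1 + x) * ξ x) := by
      unfold jacobiSum
      rw [← Equiv.sum_comp (Equiv.neg F) (fun x => ξ x * φ (1 - x))]
      refine Finset.sum_congr rfl fun x _ => ?_
      have h1 : ((Equiv.neg F) x : F) = -x := rfl
      rw [h1, sub_neg_eq_add, show (-x : F) = -1 * x by ring, map_mul]
      ring
    rw [this, ← Finset.mul_sum, ← mul_assoc, hemm, one_mul]
  -- step 3: `∑ x, φ(1+x) (ψ*φ) x = ∑ x, φ(1+x) ψ⁻¹ x`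
  have st3 : ∑ x : F, φ (1 + x) * (ψ * φ) x = ∑ x : F, φ (1 + x) * ψ⁻¹ x := by
    rw [← Equiv.sum_comp (Equiv.inv F) (fun x => φ (1 + x) * (ψ * φ) x)]
    refine Finset.sum_congr rfl fun x _ => ?_
    have h1 : ((Equiv.inv F) x : F) = x⁻¹ := rfl
    rw [h1]
    rcases eq_or_ne x 0 with rfl | hx0
    · simp [MulChar.mul_apply, MulChar.map_nonunit ψ⁻¹ not_isUnit_zero,
        MulChar.map_nonunit ψ not_isUnit_zero]
    · have hxi : x⁻¹ ≠ 0 := inv_ne_zero hx0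
      have hsplit : (1 : F) + x⁻¹ = x⁻¹ * (x + 1) := by field_simp
      rw [hsplit, map_mul, MulChar.mul_apply, MulChar.inv_apply' ψ x, add_comm x 1]
      have hφx : φ x⁻¹ * φ x⁻¹ = 1 := aux_phi_mul_self hφ2 hxi
      rw [show φ x⁻¹ * φ (1+x) * (ψ x⁻¹ * φ x⁻¹) = (φ x⁻¹ * φ x⁻¹) * (φ (1+x) * ψ x⁻¹) from by
        ring, hφx, one_mul]
  -- main computation
  have key2 : ∑ x : F, (φ (1 + x) * ψ x + φ (1 + x) * (ψ * φ) x) = ∑ t ∈ S, 2 * (φ (1 + t) * ψ t) := by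
    rw [← Finset.sum_subset (Finset.subset_univ S) (fun x _ hx => ?_)]
    · refine Finset.sum_congr rfl fun x hx => ?_
      obtain ⟨hx0, hxs⟩ := (hS x).1 hx
      rw [MulChar.mul_apply, hsq x hx0 hxs, mul_one]; ring
    · rcases eq_or_ne x 0 with rfl | hx0
      · rw [MulChar.map_nonunit ψ not_isUnit_zero, MulChar.map_nonunit (ψ * φ) not_isUnit_zero]
        ring
      · have hxs : ¬ IsSquare x := fun h => hx ((hS x).2 ⟨hx0, h⟩)
        rw [MulChar.mul_apply, hns x hx0 hxs]; ring
  have hinv1 : ψ⁻¹ (-1) = ψ (-1) := by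
    rw [MulChar.inv_apply' ψ (-1), inv_neg, inv_one]
  calc 2 * ∑ t ∈ S, φ (1 + t) * ψ t
      = ∑ t ∈ S, 2 * (φ (1 + t) * ψ t) := by rw [Finset.mul_sum]
    _ = ∑ x : F, (φ (1 + x) * ψ x + φ (1 + x) * (ψ * φ) x) := key2.symm
    _ = (∑ x : F, φ (1 + x) * ψ x) + ∑ x : F, φ (1 + x) * (ψ * φ) x := Finset.sum_add_distrib
    _ = ψ (-1) * jacobiSum ψ φ + ψ⁻¹ (-1) * jacobiSum ψ⁻¹ φ := by rw [st2 ψ, st3, st2 ψ⁻¹]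
    _ = ψ (-1) * (jacobiSum φ ψ + jacobiSum φ ψ⁻¹) := by
        rw [hinv1, jacobiSum_comm ψ φ, jacobiSum_comm ψ⁻¹ φ]; ring


private lemma aux_ringChar_ne : ringChar ℂ ≠ ringChar F := by
  simpa only [ringChar.eq_zero] using (CharP.ringChar_ne_zero_of_finite F).symm

/-- `J(φ, φa) = φ(-1) * J(φ, a⁻¹)` for the quadratic character `φ`. -/
private lemma aux_jacobi_flip {φ a : MulChar F ℂ} (hφ1 : φ ≠ 1) (hφ2 : φ ^ 2 = 1)
    (ha : a ≠ 1) (hφa : φ * a ≠ 1) :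
    jacobiSum φ (φ * a) = φ (-1) * jacobiSum φ a⁻¹ := by
  have hφq : φ.IsQuadratic := MulChar.isQuadratic_iff_sq_eq_one.mpr hφ2
  have hcard0 : ((Fintype.card F : ℂ)) ≠ 0 := Nat.cast_ne_zero.mpr Fintype.card_ne_zero
  set ψ := AddChar.FiniteField.primitiveChar_to_Complex F with hψdef
  have hψ : ψ.IsPrimitive := AddChar.FiniteField.primitiveChar_to_Complex_isPrimitive F
  have hg := fun {ξ : MulChar F ℂ} (hξ : ξ ≠ 1) => gaussSum_ne_zero_of_nontrivial hcard0 hξ hψ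
  have h1 : gaussSum (φ * a) ψ * jacobiSum φ a = gaussSum φ ψ * gaussSum a ψ :=
    jacobiSum_mul_nontrivial hφa ψ
  have hself : φ * (φ * a) = a := by
    rw [← mul_assoc, ← pow_two, hφ2, one_mul]
  have h2 : gaussSum a ψ * jacobiSum φ (φ * a) = gaussSum φ ψ * gaussSum (φ * a) ψ := by
    have := jacobiSum_mul_nontrivial (show φ * (φ * a) ≠ 1 by rw [hself]; exact ha) ψ
    rwa [hself] at this
  -- J(φ,φa) * J(φ,a) = g(φ)^2 = φ(-1) * q
  have hmul : jacobiSum φ (φ * a) * jacobiSum φ a = φ (-1) * (Fintype.card F : ℂ) := by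
    have hga := hg ha
    have hgφa := hg hφa
    have := congrArg₂ (· * ·) h1 h2
    have h3 : gaussSum (φ * a) ψ * gaussSum a ψ * (jacobiSum φ (φ * a) * jacobiSum φ a)
        = gaussSum (φ * a) ψ * gaussSum a ψ * (gaussSum φ ψ * gaussSum φ ψ) := by
      ring_nf
      ring_nf at this
      linear_combination this
    have h4 := mul_left_cancel₀ (mul_ne_zero hgφa hga) h3
    rw [h4, ← pow_two, gaussSum_sq hφ1 hφq hψ]
  -- J(φ,a) * J(φ,a⁻¹) = q
  have hinv : jacobiSum φ a * jacobiSum φ a⁻¹ = (Fintype.card F : ℂ) := by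
    have := jacobiSum_mul_jacobiSum_inv (F := F) (F' := ℂ) aux_ringChar_ne hφ1 ha hφa
    rwa [hφq.inv] at this
  have hJa : jacobiSum φ a ≠ 0 := by
    intro h
    rw [h, zero_mul] at hinv
    exact hcard0 hinv.symm
  have := congrArg₂ (· * ·) hmul hinv.symm
  -- φ(-1) * q * J(φ,a) * J(φ,a⁻¹) pattern
  have h5 : jacobiSum φ a * ((Fintype.card F : ℂ) * jacobiSum φ (φ * a))
      = jacobiSum φ a * ((Fintype.card F : ℂ) * (φ (-1) * jacobiSum φ a⁻¹)) := by
    linear_combination this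
  exact mul_left_cancel₀ hcard0 (mul_left_cancel₀ hJa h5)


private lemma aux_det {n : ℕ} (hn : 0 < n) {s : Fin n → F}
    (hs' : ∀ x : F, (∃ i, s i = x) ↔ (x ≠ 0 ∧ IsSquare x))
    {S : Finset F} (hS : ∀ x, x ∈ S ↔ x ≠ 0 ∧ IsSquare x)
    (hsum : ∀ f : F → ℂ, ∑ t ∈ S, f t = ∑ j : Fin n, f (s j))
    {φ : MulChar F ℂ}
    (hsq : ∀ x : F, x ≠ 0 → IsSquare x → φ x = 1)
    (hns : ∀ x : F, x ≠ 0 → ¬ IsSquare x → φ x = -1)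
    {χ : MulChar F ℂ}
    (hdist : ∀ k l : Fin n, k ≠ l →
      (χ ^ (l : ℕ)) * (χ ^ (k : ℕ))⁻¹ ≠ 1 ∧ (χ ^ (l : ℕ)) * (χ ^ (k : ℕ))⁻¹ * φ ≠ 1) :
    (Matrix.of fun i j : Fin n => φ (s i + s j)).det
      = ∏ k : Fin n, ∑ t ∈ S, φ (1 + t) * (χ ^ (k : ℕ)) t := by
  classical
  have hsmem : ∀ i : Fin n, s i ≠ 0 ∧ IsSquare (s i) := fun i => (hs' (s i)).1 ⟨i, rfl⟩
  set c : Fin n → ℂ := fun k => ∑ t ∈ S, φ (1 + t) * (χ ^ (k : ℕ)) t with hc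
  set M : Matrix (Fin n) (Fin n) ℂ := Matrix.of fun i j : Fin n => φ (s i + s j) with hM
  set V : Matrix (Fin n) (Fin n) ℂ := Matrix.of fun i k : Fin n => (χ ^ (k : ℕ)) (s i) with hV
  set W : Matrix (Fin n) (Fin n) ℂ := Matrix.of fun k j : Fin n => (χ ^ (k : ℕ))⁻¹ (s j) with hW
  -- M * V = V * diagonal c
  have hMV : M * V = V * Matrix.diagonal c := by
    ext i k
    rw [Matrix.mul_diagonal, Matrix.mul_apply]
    show (∑ j, φ (s i + s j) * (χ ^ (k : ℕ)) (s j)) = (χ ^ (k : ℕ)) (s i) * c k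
    obtain ⟨hsi0, hsisq⟩ := hsmem i
    rw [hc]
    simp only
    rw [← hsum (fun t => φ (s i + t) * (χ ^ (k : ℕ)) t), Finset.mul_sum]
    refine Finset.sum_nbij' (fun t => (s i)⁻¹ * t) (fun u => s i * u) ?_ ?_ ?_ ?_ ?_
    · intro t ht
      obtain ⟨ht0, htsq⟩ := (hS t).1 ht
      exact (hS _).2 ⟨mul_ne_zero (inv_ne_zero hsi0) ht0, (hsisq.inv).mul htsq⟩
    · intro u hu
      obtain ⟨hu0, husq⟩ := (hS u).1 hu
      exact (hS _).2 ⟨mul_ne_zero hsi0 hu0, hsisq.mul husq⟩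
    · intro t _; exact mul_inv_cancel_left₀ hsi0 t
    · intro u _; exact inv_mul_cancel_left₀ hsi0 u
    · intro t ht
      obtain ⟨ht0, htsq⟩ := (hS t).1 ht
      have h1 : s i + t = s i * (1 + (s i)⁻¹ * t) := by field_simp
      have h2 : (χ ^ (k : ℕ)) t = (χ ^ (k : ℕ)) (s i) * (χ ^ (k : ℕ)) ((s i)⁻¹ * t) := by
        rw [← map_mul, mul_inv_cancel_left₀ hsi0]
      rw [h1, h2, map_mul, hsq (s i) hsi0 hsisq, one_mul]
      ring
  -- W * V = n • 1
  have hWV : W * V = (n : ℂ) • (1 : Matrix (Fin n) (Fin n) ℂ) := by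
    ext k l
    rw [Matrix.mul_apply]
    show (∑ j, (χ ^ (k : ℕ))⁻¹ (s j) * (χ ^ (l : ℕ)) (s j)) = _
    rcases eq_or_ne k l with rfl | hkl
    · have : ∀ j : Fin n, (χ ^ (k : ℕ))⁻¹ (s j) * (χ ^ (k : ℕ)) (s j) = 1 := by
        intro j
        rw [← MulChar.mul_apply, MulChar.inv_mul]
        exact MulChar.one_apply (isUnit_iff_ne_zero.mpr (hsmem j).1)
      simp only [this, Finset.sum_const, Finset.card_univ, Fintype.card_fin, nsmul_eq_mul,
        mul_one, Matrix.smul_apply, Matrix.one_apply_eq, smul_eq_mul]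
    · have h0 : ∑ j : Fin n, (χ ^ (k : ℕ))⁻¹ (s j) * (χ ^ (l : ℕ)) (s j) = 0 := by
        rw [← hsum (fun t => (χ ^ (k : ℕ))⁻¹ t * (χ ^ (l : ℕ)) t)]
        have := aux_sum_S hS hsq hns (hdist k l hkl).1 (hdist k l hkl).2
        rw [← this]
        refine Finset.sum_congr rfl fun t _ => ?_
        rw [MulChar.mul_apply]; ring
      rw [h0, Matrix.smul_apply, Matrix.one_apply_ne hkl, smul_eq_mul, mul_zero]
  -- conclude
  have hdetWV : W.det * V.det = (n : ℂ) ^ n := by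
    rw [← Matrix.det_mul, hWV, Matrix.det_smul, Matrix.det_one, Fintype.card_fin, mul_one]
  have hVdet : V.det ≠ 0 := by
    intro h
    rw [h, mul_zero] at hdetWV
    exact (pow_ne_zero n (Nat.cast_ne_zero.mpr hn.ne')) hdetWV.symm
  have hd := congrArg Matrix.det hMV
  rw [Matrix.det_mul, Matrix.det_mul, Matrix.det_diagonal] at hd
  exact mul_right_cancel₀ hVdet (hd.trans (mul_comm _ _))


end StmtTwoAux

/-- Let `q = 2n+1 ≡ 3 (mod 4)` be an odd prime power. Then
`-det A_q = x_q²`, where `x_q = R_q / 2^⌊n/2⌋ ∈ ℤ`, and `A_q` is the `n × n` matrix with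
entries `φ_q(s_i + s_j)` for an enumeration `s_1, …, s_n` of the nonzero squares of `F_q`. -/
theorem stmt_2 {F : Type*} [Field F] [Fintype F] (n : ℕ)
    (hcard : Fintype.card F = 2 * n + 1)
    (hq : Fintype.card F % 4 = 3)
    (φ χ : MulChar F ℂ)
    (hφ : φ ^ 2 = 1 ∧ φ ≠ 1)
    (hχ : ∀ ψ : MulChar F ℂ, ψ ∈ Subgroup.zpowers χ)
    (s : Fin n → F)
    (hs : Function.Injective s)
    (hs' : ∀ x : F, (∃ i, s i = x) ↔ (x ≠ 0 ∧ IsSquare x))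
    (x : ℤ)
    (hx : (∏ k ∈ (Finset.range n).filter (fun k => 0 < k ∧ 2 * k < n),
        (jacobiSum φ (χ ^ k) + jacobiSum φ (χ ^ (-(k : ℤ))))) = ((2 ^ (n / 2) * x : ℤ) : ℂ)) :
    -(Matrix.of fun i j : Fin n => φ (s i + s j)).det = ((x : ℂ)) ^ 2 := by
  classical
  obtain ⟨hφ2, hφ1⟩ := hφ
  have hn : 0 < n := by
    have := Fintype.one_lt_card (α := F); omega
  have hnodd : n % 2 = 1 := by omega
  set m := n / 2 with hm
  have hnm : n = 2 * m + 1 := by omega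
  have hm1F : (-1 : F) ≠ 0 := neg_ne_zero.mpr one_ne_zero
  have hsq : ∀ x : F, x ≠ 0 → IsSquare x → φ x = 1 := fun x hx0 h => aux_phi_square hφ2 hx0 h
  have hns : ∀ x : F, x ≠ 0 → ¬ IsSquare x → φ x = -1 :=
    fun x hx0 h => aux_phi_nonsquare hφ2 hφ1 hx0 h
  have hphim1 : φ (-1) = -1 :=
    hns (-1) hm1F (fun h => (FiniteField.isSquare_neg_one_iff.mp h) hq)
  -- the order of χ is 2n
  haveI : Fintype (MulChar F ℂ) := Fintype.ofFinite _
  haveI : NeZero (Monoid.exponent Fˣ) := ⟨Monoid.exponent_ne_zero_of_finite⟩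
  have horder : orderOf χ = 2 * n := by
    rw [orderOf_eq_card_of_forall_mem_zpowers hχ,
      MulChar.card_eq_card_units_of_hasEnoughRootsOfUnity F ℂ, Nat.card_eq_fintype_card,
      Fintype.card_units, hcard]
    omega
  have hχpow : ∀ v : ℤ, χ ^ v = 1 ↔ ((2 * n : ℕ) : ℤ) ∣ v := by
    intro v
    rw [← horder, orderOf_dvd_iff_zpow_eq_one]
  have hχ2n : χ ^ ((2 * n : ℕ) : ℤ) = 1 := (hχpow _).2 dvd_rfl
  have hχne1 : ∀ v : ℤ, 0 < v → v < 2 * (n : ℤ) → χ ^ v ≠ 1 := by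
    intro v hv1 hv2 h
    have hdvd := (hχpow v).1 h
    have : v = 0 := Int.eq_zero_of_abs_lt_dvd (by exact_mod_cast hdvd) (by
      rw [abs_of_pos hv1]; push_cast; omega)
    omega
  -- χ (-1) = -1
  obtain ⟨mφ, hmφ⟩ := Subgroup.mem_zpowers_iff.mp (hχ φ)
  have hχm1 : χ (-1) = -1 := by
    have h1 : χ (-1) * χ (-1) = 1 := by rw [← map_mul]; norm_num
    rcases mul_self_eq_one_iff.mp h1 with h | h
    · exfalso
      have h2 := aux_zpow_apply χ mφ hm1F
      rw [hmφ, h, one_zpow, hphim1] at h2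
      norm_num at h2
    · exact h
  -- φ = χ ^ n
  have hφn : χ ^ ((n : ℕ) : ℤ) = φ := by
    have h2m : χ ^ (mφ + mφ) = 1 := by
      rw [zpow_add, hmφ, ← sq, hφ2]
    have hdvd : ((2 * n : ℕ) : ℤ) ∣ (mφ + mφ) := (hχpow _).1 h2m
    have hndvd : (n : ℤ) ∣ mφ := by
      obtain ⟨c, hc⟩ := hdvd
      exact ⟨c, by push_cast at hc; linarith⟩
    obtain ⟨t, ht⟩ := hndvd
    rcases Int.even_or_odd t with ⟨u, hu⟩ | ⟨u, hu⟩
    · exfalso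
      apply hφ1
      rw [← hmφ, ht, hu, show (n : ℤ) * (u + u) = ((2 * n : ℕ) : ℤ) * u by push_cast; ring,
        zpow_mul, hχ2n, one_zpow]
    · rw [← hmφ, ht, hu, show (n : ℤ) * (2 * u + 1) = ((2 * n : ℕ) : ℤ) * u + (n : ℤ) by
        push_cast; ring, zpow_add, zpow_mul, hχ2n, one_zpow, one_mul]
  -- distinctness hypothesis for the determinant lemma
  have hdist : ∀ k l : Fin n, k ≠ l →
      (χ ^ (l : ℕ)) * (χ ^ (k : ℕ))⁻¹ ≠ 1 ∧ (χ ^ (l : ℕ)) * (χ ^ (k : ℕ))⁻¹ * φ ≠ 1 := by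
    intro k l hkl
    have hkn := k.isLt
    have hln := l.isLt
    have hkl' : (k : ℕ) ≠ (l : ℕ) := fun h => hkl (Fin.ext h)
    have hzz : (χ ^ (l : ℕ)) * (χ ^ (k : ℕ))⁻¹ = χ ^ (((l : ℕ) : ℤ) - ((k : ℕ) : ℤ)) := by
      rw [zpow_sub, zpow_natCast, zpow_natCast]
    constructor
    · rw [hzz, Ne, hχpow]
      intro hdvd
      have : ((l : ℕ) : ℤ) - ((k : ℕ) : ℤ) = 0 := Int.eq_zero_of_abs_lt_dvd hdvd (by
        rw [abs_sub_lt_iff]; push_cast; omega)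
      omega
    · rw [hzz, ← hφn, ← zpow_add, Ne, hχpow]
      intro hdvd
      have : ((l : ℕ) : ℤ) - ((k : ℕ) : ℤ) + ((n : ℕ) : ℤ) = 0 :=
        Int.eq_zero_of_abs_lt_dvd hdvd (by rw [abs_lt]; push_cast; omega)
      omega
  -- the set of nonzero squares
  set S : Finset F := Finset.image s Finset.univ with hSdef
  have hS : ∀ y, y ∈ S ↔ y ≠ 0 ∧ IsSquare y := by
    intro y
    rw [hSdef, Finset.mem_image]
    constructor
    · rintro ⟨i, -, rfl⟩; exact (hs' (s i)).1 ⟨i, rfl⟩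
    · intro h; obtain ⟨i, hi⟩ := (hs' y).2 h; exact ⟨i, Finset.mem_univ i, hi⟩
  have hsum : ∀ f : F → ℂ, ∑ t ∈ S, f t = ∑ j : Fin n, f (s j) := fun f =>
    Finset.sum_image fun i _ j _ h => hs h
  -- determinant = product of eigenvalues
  have hdet := aux_det hn hs' hS hsum hsq hns hdist
  have hrange : (∏ k : Fin n, ∑ t ∈ S, φ (1 + t) * (χ ^ (k : ℕ)) t)
      = ∏ k ∈ range n, ∑ t ∈ S, φ (1 + t) * (χ ^ k) t :=
    Fin.prod_univ_eq_prod_range (fun k => ∑ t ∈ S, φ (1 + t) * (χ ^ k) t) n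
  -- eigenvalues via Jacobi sums
  set T : ℕ → ℂ := fun k => jacobiSum φ (χ ^ k) + jacobiSum φ (χ ^ (-(k : ℤ))) with hT
  have h2c : ∀ k : ℕ, 2 * ∑ t ∈ S, φ (1 + t) * (χ ^ k) t = (-1) ^ k * T k := by
    intro k
    have haux := aux_two_c hS hφ2 hsq hns (χ ^ k)
    have hval : (χ ^ k) (-1) = (-1) ^ k := by rw [aux_pow_apply χ k hm1F, hχm1]
    have hinv : (χ ^ k)⁻¹ = χ ^ (-(k : ℤ)) := by rw [← zpow_natCast, ← zpow_neg]
    rw [haux, hval, hinv]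
  -- the flip identity
  have hflip : ∀ k : ℕ, 0 < k → 2 * k < n → T (n - k) = - T k := by
    intro k hk0 h2k
    have hkn : k < n := by omega
    have e1 : χ ^ ((n - k : ℕ)) = φ * (χ ^ (-(k : ℤ))) := by
      rw [← hφn, ← zpow_add, ← zpow_natCast χ (n - k)]
      congr 1
      push_cast [Nat.cast_sub hkn.le]
      ring
    have e2 : χ ^ (-((n - k : ℕ) : ℤ)) = φ * (χ ^ ((k : ℕ) : ℤ)) := by
      rw [← hφn, ← zpow_add,
        show -((n - k : ℕ) : ℤ) = ((n : ℕ) : ℤ) + ((k : ℕ) : ℤ) + (-((2 * n : ℕ) : ℤ)) by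
          push_cast [Nat.cast_sub hkn.le]; ring,
        zpow_add, zpow_neg, hχ2n, inv_one, mul_one]
    have c1 : χ ^ (-(k : ℤ)) ≠ 1 := by
      rw [Ne, hχpow]
      intro hdvd
      have : (-(k : ℤ)) = 0 := Int.eq_zero_of_abs_lt_dvd hdvd (by rw [abs_lt]; push_cast; omega)
      omega
    have c2 : φ * χ ^ (-(k : ℤ)) ≠ 1 := by
      rw [← hφn, ← zpow_add, Ne, hχpow]
      intro hdvd
      have : ((n : ℕ) : ℤ) + (-(k : ℤ)) = 0 :=
        Int.eq_zero_of_abs_lt_dvd hdvd (by rw [abs_lt]; push_cast; omega)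
      omega
    have c3 : χ ^ ((k : ℕ) : ℤ) ≠ 1 := by
      rw [Ne, hχpow]
      intro hdvd
      have : ((k : ℕ) : ℤ) = 0 := Int.eq_zero_of_abs_lt_dvd hdvd (by rw [abs_lt]; push_cast; omega)
      omega
    have c4 : φ * χ ^ ((k : ℕ) : ℤ) ≠ 1 := by
      rw [← hφn, ← zpow_add, Ne, hχpow]
      intro hdvd
      have : ((n : ℕ) : ℤ) + ((k : ℕ) : ℤ) = 0 :=
        Int.eq_zero_of_abs_lt_dvd hdvd (by rw [abs_lt]; push_cast; omega)
      omega
    have f1 : jacobiSum φ (χ ^ (n - k : ℕ)) = - jacobiSum φ (χ ^ ((k : ℕ) : ℤ)) := by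
      rw [e1, aux_jacobi_flip hφ1 hφ2 c1 c2, hphim1, zpow_neg, inv_inv]
      ring
    have f2 : jacobiSum φ (χ ^ (-((n - k : ℕ) : ℤ))) = - jacobiSum φ (χ ^ (-(k : ℤ))) := by
      rw [e2, aux_jacobi_flip hφ1 hφ2 c3 c4, hphim1, zpow_neg]
      ring
    rw [hT]
    simp only
    rw [f1, f2, zpow_natCast]
    ring
  -- product bookkeeping
  have hT0 : T 0 = -2 := by
    have hJ1 : jacobiSum φ 1 = -1 := by
      rw [jacobiSum_comm]; exact jacobiSum_one_nontrivial hφ1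
    rw [hT]
    simp only [pow_zero, Nat.cast_zero, neg_zero, zpow_zero, hJ1]
    norm_num
  set A1 : Finset ℕ := (Finset.range n).filter (fun k => 0 < k ∧ 2 * k < n) with hA1
  have hcardA1 : A1.card = m := by
    have : A1 = Finset.Ico 1 (m + 1) := by
      ext k
      simp only [hA1, Finset.mem_filter, Finset.mem_range, Finset.mem_Ico]
      omega
    rw [this, Nat.card_Ico]
    omega
  have hR : ∏ k ∈ A1, T k = ((2 ^ m * x : ℤ) : ℂ) := hx
  -- split the product over range n
  have hsplit0 : ∏ k ∈ range n, T k
      = T 0 * ∏ k ∈ (range n).filter (fun k => 0 < k), T k := by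
    rw [← Finset.prod_filter_mul_prod_filter_not (range n) (fun k => 0 < k) T]
    have h00 : (range n).filter (fun k => ¬ 0 < k) = {0} := by
      ext k
      simp only [Finset.mem_filter, Finset.mem_range, Finset.mem_singleton]
      omega
    rw [h00, Finset.prod_singleton]
    ring
  have hsplit1 : ∏ k ∈ (range n).filter (fun k => 0 < k), T k
      = (∏ k ∈ A1, T k) * ∏ k ∈ ((range n).filter (fun k => 0 < k)).filter (fun k => ¬ 2 * k < n), T k := by
    rw [← Finset.prod_filter_mul_prod_filter_not ((range n).filter (fun k => 0 < k))
      (fun k => 2 * k < n) T, Finset.filter_filter]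
  have hA2 : ∏ k ∈ ((range n).filter (fun k => 0 < k)).filter (fun k => ¬ 2 * k < n), T k
      = ∏ k ∈ A1, (- T k) := by
    refine Finset.prod_nbij' (fun k => n - k) (fun k => n - k) ?_ ?_ ?_ ?_ ?_
    · intro a ha
      simp only [Finset.mem_filter, Finset.mem_range] at ha
      simp only [hA1, Finset.mem_filter, Finset.mem_range]
      omega
    · intro a ha
      simp only [hA1, Finset.mem_filter, Finset.mem_range] at ha
      simp only [Finset.mem_filter, Finset.mem_range]
      omega
    · intro a ha
      simp only [Finset.mem_filter, Finset.mem_range] at ha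
      show n - (n - a) = a
      omega
    · intro a ha
      simp only [hA1, Finset.mem_filter, Finset.mem_range] at ha
      show n - (n - a) = a
      omega
    · intro a ha
      simp only [Finset.mem_filter, Finset.mem_range] at ha
      have h1 : 0 < n - a := by omega
      have h2 : 2 * (n - a) < n := by omega
      have h3 := hflip (n - a) h1 h2
      rw [show n - (n - a) = a by omega] at h3
      show T a = - T (n - a)
      exact h3
  have hprodA2 : ∏ k ∈ A1, (- T k) = (-1 : ℂ) ^ m * ∏ k ∈ A1, T k := by
    rw [show (∏ k ∈ A1, (- T k)) = ∏ k ∈ A1, ((-1) * T k) by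
      exact Finset.prod_congr rfl fun k _ => by ring, Finset.prod_mul_distrib,
      Finset.prod_const, hcardA1]
  have hsign : ∏ k ∈ range n, ((-1 : ℂ)) ^ k = (-1) ^ m := by
    rw [Finset.prod_pow_eq_pow_sum]
    have hsumid : (∑ i ∈ range n, i) = m * (2 * m + 1) := by
      have h := Finset.sum_range_id_mul_two n
      have h2 : n * (n - 1) = (m * (2 * m + 1)) * 2 := by
        rw [hnm]
        rw [show 2 * m + 1 - 1 = 2 * m by omega]
        ring
      have h3 : (∑ i ∈ range n, i) * 2 = (m * (2 * m + 1)) * 2 := by rw [h, h2]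
      exact Nat.eq_of_mul_eq_mul_right (by norm_num) h3
    rw [hsumid, mul_comm, pow_mul, Odd.neg_one_pow ⟨m, by ring⟩]
  -- assemble
  have hbig : (2 : ℂ) ^ n * (Matrix.of fun i j : Fin n => φ (s i + s j)).det
      = -(2 : ℂ) ^ n * ((x : ℂ)) ^ 2 := by
    rw [hdet, hrange]
    calc (2 : ℂ) ^ n * ∏ k ∈ range n, ∑ t ∈ S, φ (1 + t) * (χ ^ k) t
        = ∏ k ∈ range n, (2 * ∑ t ∈ S, φ (1 + t) * (χ ^ k) t) := by
          rw [Finset.prod_mul_distrib, Finset.prod_const, Finset.card_range]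
      _ = ∏ k ∈ range n, ((-1 : ℂ) ^ k * T k) := Finset.prod_congr rfl fun k _ => h2c k
      _ = (∏ k ∈ range n, ((-1 : ℂ)) ^ k) * ∏ k ∈ range n, T k := Finset.prod_mul_distrib
      _ = (-1 : ℂ) ^ m * (T 0 * ((∏ k ∈ A1, T k) * ((-1 : ℂ) ^ m * ∏ k ∈ A1, T k))) := by
          rw [hsign, hsplit0, hsplit1, hA2, hprodA2]
      _ = - 2 * (((-1 : ℂ) ^ m) * ((-1 : ℂ) ^ m)) * (∏ k ∈ A1, T k) ^ 2 := by
          rw [hT0]; ring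
      _ = - 2 * (∏ k ∈ A1, T k) ^ 2 := by
          rw [← pow_add, ← two_mul, pow_mul, neg_one_sq, one_pow, mul_one]
      _ = - 2 * (((2 : ℂ) ^ m * (x : ℂ)) ^ 2) := by
          rw [hR]; push_cast; ring
      _ = -(2 : ℂ) ^ n * ((x : ℂ)) ^ 2 := by
          rw [hnm]; ring
  have h2n : ((2 : ℂ) ^ n) ≠ 0 := pow_ne_zero n two_ne_zero
  have hfin : (Matrix.of fun i j : Fin n => φ (s i + s j)).det = -((x : ℂ)) ^ 2 :=
    mul_left_cancel₀ h2n (hbig.trans (by ring))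
  rw [hfin]
  ring
end

section
/- Let q = p^f = 2n+1 be an odd prime power with p prime and f > 1, and suppose q ≠ 9. Then p divides the integer R_q. -/
open Finset

set_option maxHeartbeats 1600000
set_option synthInstance.maxHeartbeats 400000

/-- Let `q = p^f = 2n+1` be an odd prime power with `p` prime and `f > 1`,
and suppose `q ≠ 9`. Then `p` divides the integer `R_q`. -/
theorem stmt_5 {F : Type*} [Field F] [Fintype F] (p f n : ℕ)
    (hp : p.Prime)
    (hf : 1 < f)
    (hcard : Fintype.card F = p ^ f)
    (hn : Fintype.card F = 2 * n + 1)
    (h9 : Fintype.card F ≠ 9)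
    (φ χ : MulChar F ℂ)
    (hφ : φ ^ 2 = 1 ∧ φ ≠ 1)
    (hχ : ∀ ψ : MulChar F ℂ, ψ ∈ Subgroup.zpowers χ)
    (r : ℤ)
    (hr : (∏ k ∈ (Finset.range n).filter (fun k => 0 < k ∧ 2 * k < n),
        (jacobiSum φ (χ ^ k) + jacobiSum φ (χ ^ (-(k : ℤ))))) = (r : ℂ)) :
    (p : ℤ) ∣ r := by
  classical
  haveI := Fact.mk hp
  set q := Fintype.card F with hqdef
  -- p is odd
  have hp2 : p ≠ 2 := by
    rintro rfl
    have h2 : (2:ℕ) ∣ 2 ^ f := dvd_pow_self 2 (by omega)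
    rw [hcard] at hn; omega
  obtain ⟨h, hh⟩ : Odd p := hp.odd_of_ne_two hp2
  have hp3 : 3 ≤ p := by have := hp.two_le; omega
  have hh1 : 1 ≤ h := by omega
  -- q is large
  have hq25 : 25 ≤ q := by
    rcases eq_or_ne p 3 with rfl | hpne3
    · have hf3 : 3 ≤ f := by
        rcases Nat.lt_or_ge f 3 with hf' | hf'
        · interval_cases f
          · exact absurd (by rw [hcard]; norm_num) h9
        · exact hf'
      calc 25 ≤ 3 ^ 3 := by norm_num
        _ ≤ 3 ^ f := Nat.pow_le_pow_right (by norm_num) hf3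
        _ = q := hcard.symm
    · have hp5 : 5 ≤ p := by omega
      calc 25 ≤ p ^ 2 := by nlinarith
        _ ≤ p ^ f := Nat.pow_le_pow_right hp.pos hf
        _ = q := hcard.symm
  have hq2n : q - 1 = 2 * n := by omega
  have hq2p3 : 2 * p + 3 < q := by
    rcases eq_or_ne p 3 with rfl | hpne3
    · omega
    · have hp5 : 5 ≤ p := by omega
      have : p ^ 2 ≤ p ^ f := Nat.pow_le_pow_right hp.pos hf
      nlinarith
  set k₀ := h + 1 with hk₀def
  have hk₀n : 2 * k₀ < n := by omega
  have hn0 : 0 < n := by omega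
  set b₀ := q - 1 - k₀ with hb₀def
  have hk₀mem : k₀ ∈ (Finset.range n).filter (fun k => 0 < k ∧ 2 * k < n) := by
    simp only [Finset.mem_filter, Finset.mem_range]
    omega
  -- characteristic of F is p
  have hchar : CharP F p := by
    have h1 : CharP F (ringChar F) := ringChar.charP F
    obtain ⟨m, hrp, hm⟩ := FiniteField.card F (ringChar F)
    have : p = ringChar F := by
      have hdvd : p ∣ ringChar F ^ (m : ℕ) := by
        rw [← hm, ← hqdef, hcard]
        exact dvd_pow_self p (by omega)
      exact (Nat.prime_dvd_prime_iff_eq hp hrp).mp (hp.dvd_of_dvd_pow hdvd)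
    rwa [this]
  haveI := hchar
  -- the binomial coefficient divisibility
  have hpq : p ∣ q := by rw [hcard]; exact dvd_pow_self p (by omega)
  have e1 : 2 * n + 1 ≡ 0 [MOD p] := Nat.modEq_zero_iff_dvd.mpr (hn ▸ hpq)
  have e2 : 2 * h + 1 ≡ 0 [MOD p] := Nat.modEq_zero_iff_dvd.mpr (hh ▸ dvd_refl p)
  have e4 : 2 * n ≡ 2 * h [MOD p] := Nat.ModEq.add_right_cancel' 1 (e1.trans e2.symm)
  have hcop : Nat.Coprime 2 p := Nat.coprime_two_left.mpr ⟨h, hh⟩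
  have e5 : n ≡ h [MOD p] := Nat.ModEq.cancel_left_of_coprime (Nat.coprime_comm.mp hcop) e4
  have hnp : n % p = h := by
    have := e5; unfold Nat.ModEq at this
    rwa [Nat.mod_eq_of_lt (show h < p by omega)] at this
  have e6 : b₀ + (h + 1) ≡ (h - 1) + (h + 1) [MOD p] := by
    have hb : b₀ + (h + 1) = 2 * n := by omega
    have hb' : (h - 1) + (h + 1) = 2 * h := by omega
    rw [hb, hb']; exact e4
  have hbp : b₀ % p = h - 1 := by
    have := Nat.ModEq.add_right_cancel' _ e6; unfold Nat.ModEq at this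
    rwa [Nat.mod_eq_of_lt (show h - 1 < p by omega)] at this
  have hchoose : p ∣ b₀.choose n := by
    have hl := Choose.choose_modEq_choose_mod_mul_choose_div_nat (p := p) (n := b₀) (k := n)
    rw [hbp, hnp, Nat.choose_eq_zero_of_lt (show h - 1 < h by omega), zero_mul] at hl
    exact Nat.modEq_zero_iff_dvd.mp hl
  have hcast : ((b₀.choose n : F)) = 0 := (CharP.cast_eq_zero_iff F p _).mpr hchoose
  -- generator of Fˣ
  obtain ⟨g, hg⟩ := IsCyclic.exists_generator (α := Fˣ)
  have hgord : orderOf g = q - 1 := by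
    have hcardu := orderOf_eq_card_of_forall_mem_zpowers hg
    rwa [Nat.card_units, Nat.card_eq_fintype_card] at hcardu
  -- order of χ is q - 1
  have hper : χ ^ (q - 1) = 1 := by
    apply MulChar.ext
    intro a
    rw [MulChar.pow_apply_coe, MulChar.one_apply_coe, ← map_pow,
      FiniteField.pow_card_sub_one_eq_one (a : F) (Units.ne_zero a), map_one]
  haveI : NeZero ((Monoid.exponent Fˣ : ℂ)) :=
    ⟨Nat.cast_ne_zero.mpr Monoid.exponent_ne_zero_of_finite⟩
  obtain ⟨e⟩ := MulChar.mulEquiv_units F ℂ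
  have hψord : orderOf (e.symm g) = q - 1 := by
    rw [MulEquiv.orderOf_eq e.symm g]; exact hgord
  have hχord : orderOf χ = q - 1 := by
    refine Nat.dvd_antisymm (orderOf_dvd_of_pow_eq_one hper) ?_
    obtain ⟨m, hm⟩ := hχ (e.symm g)
    have h1 : (e.symm g) ^ (orderOf χ) = 1 := by
      rw [← hm, ← zpow_natCast, ← zpow_mul, mul_comm, zpow_mul, zpow_natCast,
        pow_orderOf_eq_one, one_zpow]
    rw [← hψord]; exact orderOf_dvd_of_pow_eq_one h1
  -- φ = χ ^ n
  have hφn : φ = χ ^ n := by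
    obtain ⟨m, hm⟩ := hχ φ
    set m' := (m % ((q - 1 : ℕ) : ℤ)).toNat with hm'def
    have hq1z : (0:ℤ) < ((q - 1 : ℕ) : ℤ) := by exact_mod_cast (show 0 < q - 1 by omega)
    have hnn := Int.emod_nonneg m (ne_of_gt hq1z)
    have hlt := Int.emod_lt_of_pos m hq1z
    have hmod : χ ^ m' = φ := by
      have h1 : ((m' : ℤ)) = m % ((q - 1 : ℕ) : ℤ) := Int.toNat_of_nonneg hnn
      rw [← hm, ← zpow_natCast, h1, ← hχord]
      exact zpow_mod_orderOf χ m
    have hm'lt : m' < q - 1 := by omega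
    have h2m : (q - 1) ∣ 2 * m' := by
      rw [← hχord]
      apply orderOf_dvd_of_pow_eq_one
      rw [mul_comm, pow_mul, hmod]; exact hφ.1
    obtain ⟨t, ht⟩ := h2m
    have hcases : m' = 0 ∨ m' = n := by
      rcases Nat.lt_or_ge t 2 with ht2 | ht2
      · interval_cases t <;> omega
      · have : (q - 1) * 2 ≤ (q - 1) * t := Nat.mul_le_mul_left _ ht2
        omega
    rcases hcases with h0 | hn'
    · rw [h0, pow_zero] at hmod; exact absurd hmod.symm hφ.2
    · rw [← hmod, hn']
  -- ζ := χ g is a primitive (q-1)-th root of unity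
  set ζ : ℂ := χ (g : F) with hζdef
  have hmempow : ∀ x : Fˣ, ∃ m : ℕ, g ^ m = x := by
    intro x
    have hx := hg x
    rwa [← mem_powers_iff_mem_zpowers, Submonoid.mem_powers_iff] at hx
  have hζprim : IsPrimitiveRoot ζ (q - 1) := by
    constructor
    · rw [hζdef, ← map_pow, FiniteField.pow_card_sub_one_eq_one _ (Units.ne_zero g), map_one]
    · intro l hl
      have hχl : χ ^ l = 1 := by
        apply MulChar.ext
        intro a
        obtain ⟨m, hm⟩ := hmempow a
        subst hm
        rw [MulChar.pow_apply_coe, MulChar.one_apply_coe, Units.val_pow_eq_pow_val,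
          map_pow, ← hζdef, ← pow_mul, Nat.mul_comm, pow_mul, hl, one_pow]
      rw [← hχord]; exact orderOf_dvd_of_pow_eq_one hχl
  have hq1pos : 0 < q - 1 := by omega
  have hζint : IsIntegral ℤ ζ := hζprim.isIntegral hq1pos
  set A := Algebra.adjoin ℤ ({ζ} : Set ℂ) with hAdef
  have hζmem : ζ ∈ A := Algebra.self_mem_adjoin_singleton ℤ ζ
  set pb := Algebra.adjoin.powerBasis' hζint with hpbdef
  have hgen : pb.gen = ⟨ζ, hζmem⟩ := Algebra.adjoin.powerBasis'_gen hζint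
  have hgprim : IsPrimitiveRoot ((g : F)) (q - 1) := by
    have h1 := IsPrimitiveRoot.orderOf ((g : F))
    rwa [orderOf_units, hgord] at h1
  have hminp : minpoly ℤ pb.gen = Polynomial.cyclotomic (q - 1) ℤ := by
    have h1 := minpoly.algHom_eq A.val Subtype.val_injective (⟨ζ, hζmem⟩ : A)
    rw [hgen, ← h1]
    exact (Polynomial.cyclotomic_eq_minpoly hζprim hq1pos).symm
  have hroot : (Polynomial.aeval ((g : F))) (minpoly ℤ pb.gen) = 0 := by
    rw [hminp, Polynomial.aeval_def, Polynomial.eval₂_eq_eval_map, Polynomial.map_cyclotomic]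
    exact hgprim.isRoot_cyclotomic hq1pos
  set σ := pb.lift ((g : F)) hroot with hσdef
  have hσζ : σ ⟨ζ, hζmem⟩ = (g : F) := by rw [← hgen]; exact pb.lift_gen _ hroot
  have hrep : ∀ x : F, x ≠ 0 → ∃ m : ℕ, x = (g : F) ^ m := by
    intro x hx
    obtain ⟨m, hm⟩ := hmempow (Units.mk0 x hx)
    refine ⟨m, ?_⟩
    rw [← Units.val_pow_eq_pow_val, hm, Units.val_mk0]
  have hmemχ : ∀ x : F, χ x ∈ A := by
    intro x
    rcases eq_or_ne x 0 with rfl | hx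
    · rw [MulChar.map_nonunit χ not_isUnit_zero]
      exact Subalgebra.zero_mem A
    · obtain ⟨m, rfl⟩ := hrep x hx
      rw [map_pow, ← hζdef]
      exact pow_mem hζmem m
  set c : F → A := fun x => ⟨χ x, hmemχ x⟩ with hcdef
  have hc : ∀ x : F, σ (c x) = x := by
    intro x
    rcases eq_or_ne x 0 with rfl | hx
    · have h0 : c 0 = 0 := Subtype.ext (by simp [hcdef, MulChar.map_nonunit χ not_isUnit_zero])
      rw [h0, map_zero]
    · obtain ⟨m, rfl⟩ := hrep x hx
      have h1 : c ((g : F) ^ m) = (⟨ζ, hζmem⟩ : A) ^ m :=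
        Subtype.ext (by simp [hcdef, map_pow, hζdef])
      rw [h1, map_pow, hσζ]
  -- bundled Jacobi sums
  set Jb : ℕ → ℕ → A := fun a b => ∑ x : F, (c x) ^ a * (c (1 - x)) ^ b with hJbdef
  have hJbcoe : ∀ a b : ℕ, a ≠ 0 → b ≠ 0 → A.val (Jb a b) = jacobiSum (χ ^ a) (χ ^ b) := by
    intro a b ha hb
    rw [hJbdef, map_sum]
    unfold jacobiSum
    refine Finset.sum_congr rfl fun x _ => ?_
    rw [map_mul, map_pow, map_pow, MulChar.pow_apply' χ ha, MulChar.pow_apply' χ hb]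
    rfl
  have hσJb : ∀ a b : ℕ, σ (Jb a b) = ∑ x : F, x ^ a * (1 - x) ^ b := by
    intro a b
    rw [hJbdef, map_sum]
    refine Finset.sum_congr rfl fun x _ => ?_
    rw [map_mul, map_pow, map_pow, hc, hc]
  -- power sums over F
  have hps : ∀ m : ℕ, m < q - 1 → ∑ x : F, x ^ m = 0 :=
    fun m hm => FiniteField.sum_pow_lt_card_sub_one F m hm
  have hps2 : ∀ m : ℕ, q - 1 < m → m < 2 * (q - 1) → ∑ x : F, x ^ m = 0 := by
    intro m h1 h2
    have h3 : ∀ x : F, x ^ m = x ^ (m - (q - 1)) := by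
      intro x
      rcases eq_or_ne x 0 with rfl | hx
      · rw [zero_pow (by omega), zero_pow (by omega)]
      · have h4 : m = (m - (q - 1)) + (q - 1) := by omega
        conv_lhs => rw [h4]
        rw [pow_add, FiniteField.pow_card_sub_one_eq_one x hx, mul_one]
    rw [Finset.sum_congr rfl fun x _ => h3 x]
    exact hps _ (by omega)
  -- binomial expansion of the double sums
  have hexp : ∀ b : ℕ, (∑ x : F, x ^ n * (1 - x) ^ b)
      = ∑ j ∈ Finset.range (b + 1), ((-1) ^ j * (b.choose j : F)) * ∑ x : F, x ^ (n + j) := by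
    intro b
    have h1 : ∀ x : F, x ^ n * (1 - x) ^ b
        = ∑ j ∈ Finset.range (b + 1), ((-1) ^ j * (b.choose j : F)) * x ^ (n + j) := by
      intro x
      have h2 : (1 - x) ^ b = ((-x) + 1) ^ b := by ring_nf
      rw [h2, add_pow, Finset.mul_sum]
      refine Finset.sum_congr rfl fun j _ => ?_
      rw [one_pow, mul_one, neg_pow]
      ring
    rw [Finset.sum_congr rfl fun x _ => h1 x, Finset.sum_comm]
    refine Finset.sum_congr rfl fun j _ => ?_
    exact (Finset.mul_sum _ _ _).symm
  have hTk₀ : ∑ x : F, x ^ n * (1 - x) ^ k₀ = 0 := by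
    rw [hexp k₀]
    refine Finset.sum_eq_zero fun j hj => ?_
    rw [Finset.mem_range] at hj
    rw [hps (n + j) (by omega), mul_zero]
  have hTb₀ : ∑ x : F, x ^ n * (1 - x) ^ b₀ = 0 := by
    rw [hexp b₀]
    refine Finset.sum_eq_zero fun j hj => ?_
    rw [Finset.mem_range] at hj
    rcases eq_or_ne j n with rfl | hjn
    · rw [hcast, mul_zero, zero_mul]
    · rcases Nat.lt_or_ge (n + j) (q - 1) with hlt | hge
      · rw [hps _ hlt, mul_zero]
      · rw [hps2 _ (by omega) (by omega), mul_zero]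
  -- negative powers of χ
  have hneg : ∀ k : ℕ, 0 < k → k < q - 1 → χ ^ (-(k : ℤ)) = χ ^ ((q - 1 - k : ℕ)) := by
    intro k hk hk'
    have h1 : χ ^ ((q - 1 - k : ℕ)) * χ ^ (k : ℕ) = 1 := by
      rw [← pow_add, Nat.sub_add_cancel (le_of_lt hk'), hper]
    rw [zpow_neg, zpow_natCast]
    exact inv_eq_of_mul_eq_one_left h1
  -- assembling the product
  set s := (Finset.range n).filter (fun k => 0 < k ∧ 2 * k < n) with hsdef
  have hfac : ∀ k ∈ s, A.val (Jb n k + Jb n (q - 1 - k))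
      = jacobiSum φ (χ ^ k) + jacobiSum φ (χ ^ (-(k : ℤ))) := by
    intro k hk
    rw [hsdef, Finset.mem_filter, Finset.mem_range] at hk
    have hkq : k < q - 1 := by omega
    rw [map_add, hJbcoe n k (by omega) (by omega),
      hJbcoe n (q - 1 - k) (by omega) (by omega), hφn, hneg k (by omega) hkq]
  have h2 : A.val ((r : ℤ) : A) = (r : ℂ) := map_intCast A.val r
  have hprodA : A.val (∏ k ∈ s, (Jb n k + Jb n (q - 1 - k))) = (r : ℂ) := by
    rw [map_prod]
    rw [Finset.prod_congr rfl hfac]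
    exact hr
  have hPr : (∏ k ∈ s, (Jb n k + Jb n (q - 1 - k))) = ((r : ℤ) : A) :=
    Subtype.val_injective (hprodA.trans h2.symm)
  have hσP : σ (∏ k ∈ s, (Jb n k + Jb n (q - 1 - k))) = 0 := by
    rw [map_prod]
    apply Finset.prod_eq_zero hk₀mem
    rw [map_add, hσJb, hσJb, ← hb₀def, hTk₀, hTb₀, add_zero]
  rw [hPr, map_intCast] at hσP
  exact (CharP.intCast_eq_zero_iff F p r).mp hσP
end

section
/- Let p ≡ 3 (mod 4) be a prime. Then the Legendre symbol (R_p/p) equals (−1)^{(p−3)/4}. -/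
/-
Let `g` generate `(ZMod p)ˣ`, so that `ζ = χ g` is a primitive `(p - 1)`-th root of unity.
Writing every `x ≠ 0` as a power of `g`, each Jacobi sum `J(χⁿ, χᵏ)` is the value at `ζ` of an
integer polynomial whose value at `g ∈ ZMod p` is `∑ xⁿ (1 - x)ᵏ`. Both `ζ` and `g` are roots of
the cyclotomic polynomial `Φ_{p-1}`, which is the minimal polynomial of `ζ` over `ℤ`, so the
integer `R_p` is congruent mod `p` to the product of these power sums; for `p = 4M + 3` this is
`∏_{k=1}^{M} C(2n - k, n)`. By Wilson's theorem its Legendre symbol is a sign times the symbols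
of `2`, `M!` and `n! = (2M+1)‼ 2ᴹ M!`, and these are determined by counting the quadratic
residues in `[1, M]` (for `M` even) or among the odd numbers up to `n` (for `M` odd).
-/
open Finset Polynomial

section Elementary

open scoped Nat

lemma prod_eq_neg_one_pow_of_sum_eq_zero {ι : Type*} {s : Finset ι} {f : ι → ℤ}
    (hf : ∀ i ∈ s, f i = 1 ∨ f i = -1) (hsum : ∑ i ∈ s, f i = 0) :
    ∏ i ∈ s, f i = (-1) ^ (#s / 2) := by
  classical
  have hneg : ∀ i ∈ s.filter (f · = -1), f i = -1 := fun i hi => (mem_filter.1 hi).2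
  have hone : ∀ i ∈ s.filter (¬f · = -1), f i = 1 := fun i hi =>
    (hf i (mem_filter.1 hi).1).resolve_right (mem_filter.1 hi).2
  have hcard : #s = 2 * #(s.filter (f · = -1)) := by
    rw [← sum_filter_add_sum_filter_not s (f · = -1), sum_congr rfl hneg,
      sum_congr rfl hone] at hsum
    have := card_filter_add_card_filter_not (s := s) (f · = -1)
    simp only [sum_const, smul_neg, nsmul_eq_mul, mul_one] at hsum
    omega
  rw [← prod_filter_mul_prod_filter_not s (f · = -1), prod_congr rfl hneg, prod_congr rfl hone,
    prod_const, prod_const_one, mul_one, hcard, Nat.mul_div_cancel_left _ two_pos]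

lemma prod_range_neg_one_pow {R : Type*} [CommMonoid R] [HasDistribNeg R] :
    ∀ m : ℕ, ∏ i ∈ range m, (-1 : R) ^ i = (-1) ^ (m / 2)
  | 0 => by simp
  | 1 => by simp
  | m + 2 => by
    rw [prod_range_succ, prod_range_succ, prod_range_neg_one_pow m, mul_assoc, ← pow_add,
      show (m + 2) / 2 = m / 2 + 1 by omega, show m + (m + 1) = 2 * m + 1 by ring, pow_succ,
      pow_mul, neg_one_sq, one_pow, one_mul, pow_succ]

lemma sum_range_two_mul {β : Type*} [AddCommMonoid β] (f : ℕ → β) (m : ℕ) :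
    ∑ i ∈ range (2 * m), f i = ∑ i ∈ range m, (f (2 * i) + f (2 * i + 1)) := by
  induction m with
  | zero => simp
  | succ m ih =>
    rw [mul_add, mul_one, sum_range_succ, sum_range_succ, ih, sum_range_succ, add_assoc]

lemma Nat.superFactorial_two_mul_eq_prod (m : ℕ) :
    sf (2 * m) = ∏ i ∈ range m, ((i + 1)! * (2 * m - i)!) := by
  rw [← prod_range_factorial_succ, two_mul, prod_range_add, prod_mul_distrib,
    ← prod_range_reflect (fun i => (m + i + 1)!)]
  congr 1
  refine prod_congr rfl fun i hi => ?_
  rw [mem_range] at hi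
  congr 1
  omega

lemma zpow_neg_natCast_eq_pow_orderOf_sub {G : Type*} [Group G] (x : G) {k : ℕ}
    (hk : k ≤ orderOf x) : x ^ (-(k : ℤ)) = x ^ (orderOf x - k) := by
  rw [zpow_neg, zpow_natCast]
  exact inv_eq_of_mul_eq_one_right (by rw [← pow_add, Nat.add_sub_cancel' hk, pow_orderOf_eq_one])

lemma ZMod.natCast_eq_neg_of_add_eq {p a b : ℕ} (h : a + b = p) : (a : ZMod p) = -b :=
  eq_neg_of_add_eq_zero_left (by rw [← Nat.cast_add, h, ZMod.natCast_self])

variable {p : ℕ} [Fact p.Prime]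

lemma ZMod.natCast_ne_zero_of_lt {a : ℕ} (h0 : 0 < a) (h : a < p) : (a : ZMod p) ≠ 0 := by
  rw [Ne, ZMod.natCast_eq_zero_iff]
  exact fun hdvd => absurd (Nat.le_of_dvd h0 hdvd) (by omega)

lemma ZMod.natCast_factorial_ne_zero {m : ℕ} (h : m < p) : (m ! : ZMod p) ≠ 0 := by
  rw [Ne, ZMod.natCast_eq_zero_iff, (Fact.out : p.Prime).dvd_factorial]
  omega

lemma ZMod.factorial_mul_factorial_eq_neg_one_pow {k : ℕ} (hk : k < p) :
    (((p - 1 - k)! * k ! : ℕ) : ZMod p) = (-1) ^ (k + 1) := by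
  induction k with
  | zero => simp [ZMod.wilsons_lemma]
  | succ k ih =>
    have hcast : ((p - 1 - k : ℕ) : ZMod p) = -(k + 1) := by
      exact_mod_cast ZMod.natCast_eq_neg_of_add_eq (show p - 1 - k + (k + 1) = p by omega)
    have hsucc : p - 1 - k = p - 1 - (k + 1) + 1 := by omega
    have := ih (by omega)
    rw [hsucc, Nat.factorial_succ, ← hsucc] at this
    push_cast [hcast, Nat.factorial_succ] at this ⊢
    linear_combination -this

end Elementary

section QuadraticChar

open scoped Nat

variable {p : ℕ} [Fact p.Prime]

lemma quadraticChar_neg_one_of_mod_four_eq_three (hp : p % 4 = 3) :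
    quadraticChar (ZMod p) (-1) = -1 := by
  rw [quadraticChar_neg_one (by rw [ZMod.ringChar_zmod_n]; omega), ZMod.card,
    ZMod.χ₄_nat_three_mod_four hp]

lemma quadraticChar_two_of_eq_four_mul_add_three {M : ℕ} (hp : p = 4 * M + 3) :
    quadraticChar (ZMod p) 2 = (-1) ^ (M + 1) := by
  rw [quadraticChar_two (by rw [ZMod.ringChar_zmod_n]; omega), ZMod.card, ZMod.χ₈_nat_mod_eight]
  rcases Nat.even_or_odd M with ⟨t, rfl⟩ | ⟨t, rfl⟩
  · rw [show p % 8 = 3 by omega, show t + t + 1 = 2 * t + 1 by ring, pow_succ, pow_mul]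
    simp
  · rw [show p % 8 = 7 by omega, show 2 * t + 1 + 1 = 2 * (t + 1) by ring, pow_mul]
    simp

variable {M : ℕ}

-- Split `[0, 2M + 1]` into halves and by parity; the odd numbers are reflected onto the upper
-- half by `2i + 1 = p - 2 (2M + 1 - i)`.
lemma one_sub_quadraticChar_two_mul_sum (hp : p = 4 * M + 3) :
    (1 - quadraticChar (ZMod p) 2) * ∑ i ∈ range (M + 1), quadraticChar (ZMod p) i
      = (1 + quadraticChar (ZMod p) 2) *
          ∑ i ∈ range (M + 1), quadraticChar (ZMod p) (2 * i + 1 : ℕ) := by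
  have hc : quadraticChar (ZMod p) 2 ^ 2 = 1 := by
    rw [quadraticChar_two_of_eq_four_mul_add_three hp, ← pow_mul, pow_mul', neg_one_sq, one_pow]
  set c := quadraticChar (ZMod p) 2
  have hhalves : ∑ i ∈ range (2 * (M + 1)), quadraticChar (ZMod p) i
      = ∑ i ∈ range (M + 1), quadraticChar (ZMod p) i
        + ∑ i ∈ range (M + 1), quadraticChar (ZMod p) (M + 1 + i : ℕ) := by
    rw [two_mul, sum_range_add]
  have hparity : ∑ i ∈ range (2 * (M + 1)), quadraticChar (ZMod p) i
      = c * ∑ i ∈ range (M + 1), quadraticChar (ZMod p) i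
        + ∑ i ∈ range (M + 1), quadraticChar (ZMod p) (2 * i + 1 : ℕ) := by
    rw [sum_range_two_mul, sum_add_distrib, mul_sum]
    push_cast
    simp only [map_mul, c]
  have hreflect : ∑ i ∈ range (M + 1), quadraticChar (ZMod p) (2 * i + 1 : ℕ)
      = -c * ∑ i ∈ range (M + 1), quadraticChar (ZMod p) (M + 1 + i : ℕ) := by
    rw [← sum_range_reflect, mul_sum]
    refine sum_congr rfl fun i hi => ?_
    rw [mem_range] at hi
    have h : ((2 * (M + 1 - 1 - i) + 1 : ℕ) : ZMod p) = -1 * (2 * (M + 1 + i : ℕ)) := by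
      rw [ZMod.natCast_eq_neg_of_add_eq
        (show 2 * (M + 1 - 1 - i) + 1 + 2 * (M + 1 + i) = p by omega)]
      push_cast; ring
    rw [h, map_mul, map_mul, quadraticChar_neg_one_of_mod_four_eq_three (by omega), neg_one_mul,
      neg_mul]
  linear_combination hhalves.symm.trans hparity - c * hreflect
    + (∑ i ∈ range (M + 1), quadraticChar (ZMod p) (M + 1 + i : ℕ)) * hc

lemma quadraticChar_factorial_of_even (hp : p = 4 * M + 3) (hM : Even M) :
    quadraticChar (ZMod p) (M ! : ℕ) = (-1) ^ (M / 2) := by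
  have hsum : ∑ i ∈ range M, quadraticChar (ZMod p) (i + 1 : ℕ) = 0 := by
    have h := one_sub_quadraticChar_two_mul_sum hp
    rw [quadraticChar_two_of_eq_four_mul_add_three hp, (Even.add_one hM).neg_one_pow,
      sum_range_succ', Nat.cast_zero, MulChar.map_zero, add_zero] at h
    linarith
  rw [← prod_range_add_one_eq_factorial, Nat.cast_prod, map_prod,
    prod_eq_neg_one_pow_of_sum_eq_zero (fun i hi => quadraticChar_dichotomy
      (ZMod.natCast_ne_zero_of_lt (by omega) (by rw [mem_range] at hi; omega))) hsum, card_range]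

lemma quadraticChar_doubleFactorial_of_odd (hp : p = 4 * M + 3) (hM : Odd M) :
    quadraticChar (ZMod p) ((2 * M + 1)‼ : ℕ) = (-1) ^ ((M + 1) / 2) := by
  have hsum : ∑ i ∈ range (M + 1), quadraticChar (ZMod p) (2 * i + 1 : ℕ) = 0 := by
    have h := one_sub_quadraticChar_two_mul_sum hp
    rw [quadraticChar_two_of_eq_four_mul_add_three hp, (Odd.add_one hM).neg_one_pow] at h
    linarith
  have hprod : (2 * M + 1)‼ = ∏ i ∈ range (M + 1), (2 * i + 1) := by
    rw [prod_range_succ', ← Nat.doubleFactorial_eq_prod_odd, mul_zero, zero_add, mul_one]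
  rw [hprod, Nat.cast_prod, map_prod,
    prod_eq_neg_one_pow_of_sum_eq_zero (fun i hi => quadraticChar_dichotomy
      (ZMod.natCast_ne_zero_of_lt (by omega) (by rw [mem_range] at hi; omega))) hsum, card_range]

lemma quadraticChar_superFactorial_two_mul (h : 2 * M < p) :
    quadraticChar (ZMod p) (sf (2 * M) : ℕ)
      = quadraticChar (ZMod p) 2 ^ M * quadraticChar (ZMod p) (M ! : ℕ) := by
  have hne : ((∏ i ∈ range M, (2 * i + 1)! : ℕ) : ZMod p) ≠ 0 := by
    rw [Nat.cast_prod]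
    exact prod_ne_zero_iff.2 fun i hi =>
      ZMod.natCast_factorial_ne_zero (by rw [mem_range] at hi; omega)
  rw [Nat.superFactorial_two_mul, Nat.cast_mul, Nat.cast_mul, Nat.cast_pow, Nat.cast_pow,
    map_mul, map_mul, map_pow, map_pow, quadraticChar_sq_one hne, one_mul, Nat.cast_ofNat]

-- `C(2n - k, n) n! (n - k)! = (p - 1 - k)!`, Wilson gives `(p - 1 - k)! k! = ±1`, and the
-- factors `(n - k)! k!` for `1 ≤ k ≤ M` make up `sf (2M)`.
lemma natCast_prod_choose_mul_factorial_pow_mul_superFactorial {n : ℕ} (hp : p = 2 * n + 1)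
    (hn : n = 2 * M + 1) :
    (((∏ i ∈ range M, (2 * n - (i + 1)).choose n) * n ! ^ M * sf (2 * M) : ℕ) : ZMod p)
      = (-1) ^ (M / 2) := by
  have hsplit : (∏ i ∈ range M, (2 * n - (i + 1)).choose n) * n ! ^ M * sf (2 * M)
      = ∏ i ∈ range M, (2 * n - (i + 1)).choose n * n ! * ((i + 1)! * (2 * M - i)!) := by
    rw [Nat.superFactorial_two_mul_eq_prod]
    simp only [prod_mul_distrib, prod_const, card_range]
  rw [hsplit, Nat.cast_prod, ← prod_range_neg_one_pow]
  refine prod_congr rfl fun i hi => ?_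
  rw [mem_range] at hi
  have hchoose := Nat.choose_mul_factorial_mul_factorial (show n ≤ 2 * n - (i + 1) by omega)
  rw [show 2 * n - (i + 1) - n = 2 * M - i by omega] at hchoose
  rw [show (2 * n - (i + 1)).choose n * n ! * ((i + 1)! * (2 * M - i)!)
      = (p - 1 - (i + 1))! * (i + 1)! by
        rw [show p - 1 - (i + 1) = 2 * n - (i + 1) by omega, ← hchoose]; ring,
    ZMod.factorial_mul_factorial_eq_neg_one_pow (by omega)]
  ring

lemma quadraticChar_prod_choose_mul {n : ℕ} (hp : p = 2 * n + 1) (hn : n = 2 * M + 1) :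
    quadraticChar (ZMod p) (∏ i ∈ range M, (2 * n - (i + 1)).choose n : ℕ)
        * quadraticChar (ZMod p) (n ! : ℕ) ^ M
        * (quadraticChar (ZMod p) 2 ^ M * quadraticChar (ZMod p) (M ! : ℕ))
      = (-1) ^ (M / 2) := by
  have h := congrArg (quadraticChar (ZMod p))
    (natCast_prod_choose_mul_factorial_pow_mul_superFactorial hp hn)
  rwa [Nat.cast_mul, Nat.cast_mul, Nat.cast_pow, map_mul, map_mul, map_pow,
    quadraticChar_superFactorial_two_mul (by omega), map_pow,
    quadraticChar_neg_one_of_mod_four_eq_three (by omega)] at h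

lemma quadraticChar_factorial_two_mul_add_one (M : ℕ) :
    quadraticChar (ZMod p) ((2 * M + 1)! : ℕ) = quadraticChar (ZMod p) ((2 * M + 1)‼ : ℕ)
      * quadraticChar (ZMod p) 2 ^ M * quadraticChar (ZMod p) (M ! : ℕ) := by
  rw [Nat.factorial_eq_mul_doubleFactorial, Nat.doubleFactorial_two_mul]
  push_cast
  rw [map_mul, map_mul, map_pow, mul_assoc]

theorem quadraticChar_prod_choose {n : ℕ} (hp : p = 2 * n + 1) (hn : n = 2 * M + 1) :
    quadraticChar (ZMod p) (∏ i ∈ range M, (2 * n - (i + 1)).choose n : ℕ) = (-1) ^ M := by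
  have hp4 : p = 4 * M + 3 := by omega
  have key := quadraticChar_prod_choose_mul hp hn
  have hsq_n : quadraticChar (ZMod p) (n ! : ℕ) ^ 2 = 1 :=
    quadraticChar_sq_one (ZMod.natCast_factorial_ne_zero (by omega))
  have hsq_M : quadraticChar (ZMod p) (M ! : ℕ) ^ 2 = 1 :=
    quadraticChar_sq_one (ZMod.natCast_factorial_ne_zero (by omega))
  have hsq_s : ((-1 : ℤ) ^ (M / 2)) ^ 2 = 1 := by rw [← pow_mul, pow_mul', neg_one_sq, one_pow]
  have hc := quadraticChar_two_of_eq_four_mul_add_three hp4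
  set T := quadraticChar (ZMod p) (∏ i ∈ range M, (2 * n - (i + 1)).choose n : ℕ)
  rcases Nat.even_or_odd M with hM | hM
  · have hpow : quadraticChar (ZMod p) (n ! : ℕ) ^ M = 1 := by
      obtain ⟨t, ht⟩ := hM
      rw [ht, ← two_mul, pow_mul, hsq_n, one_pow]
    rw [hpow, hc, (hM.add_one).neg_one_pow, hM.neg_one_pow,
      quadraticChar_factorial_of_even hp4 hM] at key
    rw [hM.neg_one_pow]
    linear_combination (-1 : ℤ) ^ (M / 2) * key + (1 - T) * hsq_s
  · have hpow : quadraticChar (ZMod p) (n ! : ℕ) ^ M = quadraticChar (ZMod p) (n ! : ℕ) := by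
      obtain ⟨t, ht⟩ := hM
      rw [ht, pow_succ, pow_mul, hsq_n, one_pow, one_mul]
    have hfact : quadraticChar (ZMod p) (n ! : ℕ)
        = -(-1) ^ (M / 2) * quadraticChar (ZMod p) (M ! : ℕ) := by
      rw [hn, quadraticChar_factorial_two_mul_add_one, hc, (hM.add_one).neg_one_pow, one_pow,
        mul_one, quadraticChar_doubleFactorial_of_odd hp4 hM,
        show (M + 1) / 2 = M / 2 + 1 by obtain ⟨t, rfl⟩ := hM; omega, pow_succ, mul_neg_one]
    rw [hpow, hfact, hc, (hM.add_one).neg_one_pow, one_pow, one_mul] at key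
    rw [hM.neg_one_pow]
    linear_combination (-(-1 : ℤ) ^ (M / 2)) * key - T * ((-1 : ℤ) ^ (M / 2)) ^ 2 * hsq_M
      - (T + 1) * hsq_s

end QuadraticChar

namespace FiniteField

variable {K : Type*} [Field K] [Fintype K]

lemma sum_pow_eq_ite {m : ℕ} (h0 : 0 < m) (h : m < 2 * (Fintype.card K - 1)) :
    ∑ x : K, x ^ m = if m = Fintype.card K - 1 then -1 else 0 := by
  classical
  have hunits : ∑ x : K, x ^ m = ∑ u : Kˣ, (u : K) ^ m :=
    calc ∑ x : K, x ^ m = ∑ x ∈ univ.filter (· ≠ 0), x ^ m :=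
          (sum_filter_of_ne fun x _ hx => by rintro rfl; exact hx (zero_pow h0.ne')).symm
      _ = ∑ x : {x : K // x ≠ 0}, (x : K) ^ m := sum_subtype _ (by simp) _
      _ = ∑ u : Kˣ, (u : K) ^ m := (Fintype.sum_equiv unitsEquivNeZero _ _ fun _ => rfl).symm
  rw [hunits, sum_pow_units]
  congr 1
  exact propext ⟨fun hd => Nat.eq_of_dvd_of_lt_two_mul h0.ne' hd h, fun hm => hm ▸ dvd_rfl⟩

lemma sum_pow_mul_one_sub_pow {a b : ℕ} (ha0 : 0 < a) (ha : a ≤ Fintype.card K - 1)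
    (hab : a + b < 2 * (Fintype.card K - 1)) :
    ∑ x : K, x ^ a * (1 - x) ^ b
      = -(-1) ^ (Fintype.card K - 1 - a) * b.choose (Fintype.card K - 1 - a) := by
  set q := Fintype.card K
  calc ∑ x : K, x ^ a * (1 - x) ^ b
      = ∑ j ∈ range (b + 1), (-1) ^ j * b.choose j * ∑ x : K, x ^ (a + j) := by
        simp_rw [mul_sum]
        rw [sum_comm]
        refine sum_congr rfl fun x _ => ?_
        rw [sub_eq_neg_add, add_pow, mul_sum]
        refine sum_congr rfl fun j _ => ?_
        rw [neg_pow, one_pow, pow_add]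
        ring
    _ = ∑ j ∈ range (b + 1),
          if j = q - 1 - a then -(-1) ^ (q - 1 - a) * (b.choose (q - 1 - a) : K) else 0 := by
        refine sum_congr rfl fun j hj => ?_
        rw [mem_range] at hj
        rw [sum_pow_eq_ite (by omega) (by omega)]
        by_cases hj' : j = q - 1 - a
        · rw [if_pos (by omega), if_pos hj', hj']
          ring
        · rw [if_neg (by omega), if_neg hj', mul_zero]
    _ = -(-1) ^ (q - 1 - a) * b.choose (q - 1 - a) := by
        rw [sum_ite_eq']
        split_ifs with h
        · rfl
        · rw [mem_range, not_lt] at h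
          rw [Nat.choose_eq_zero_of_lt (by omega), Nat.cast_zero, mul_zero]

lemma isPrimitiveRoot_of_forall_mem_zpowers {g : Kˣ} (hg : ∀ x, x ∈ Subgroup.zpowers g) :
    IsPrimitiveRoot (g : K) (Fintype.card K - 1) := by
  classical
  have := IsPrimitiveRoot.orderOf (g : K)
  rwa [orderOf_units, orderOf_eq_card_of_forall_mem_zpowers hg, Nat.card_eq_fintype_card,
    Fintype.card_units] at this

lemma exists_pow_eq_of_forall_mem_zpowers {g : Kˣ} (hg : ∀ x, x ∈ Subgroup.zpowers g) :
    ∃ E : K → ℕ, ∀ x ≠ 0, (g : K) ^ E x = x := by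
  have : ∀ x : K, ∃ i : ℕ, x ≠ 0 → (g : K) ^ i = x := fun x => by
    by_cases hx : x = 0
    · exact ⟨0, fun h => (h hx).elim⟩
    obtain ⟨i, hi : g ^ i = _⟩ := mem_powers_iff_mem_zpowers.2 (hg (Units.mk0 x hx))
    exact ⟨i, fun _ => by rw [← Units.val_pow_eq_pow_val, hi, Units.val_mk0]⟩
  choose E hE using this
  exact ⟨E, hE⟩

end FiniteField

lemma ZMod.sum_pow_mul_one_sub_pow_eq_choose {p n b : ℕ} [Fact p.Prime] (hp : p = 2 * n + 1)
    (hn : Odd n) (hb0 : 0 < b) (hb : b < 2 * n) :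
    ∑ x ∈ univ \ {0, 1}, (x : ZMod p) ^ n * (1 - x) ^ b = b.choose n := by
  have hn0 : n ≠ 0 := by rintro rfl; simp at hn
  rw [sum_sdiff_eq_sub (subset_univ _), sum_pair zero_ne_one,
    FiniteField.sum_pow_mul_one_sub_pow (by omega) (by rw [ZMod.card]; omega)
      (by rw [ZMod.card]; omega), ZMod.card, show p - 1 - n = n by omega, hn.neg_one_pow]
  simp [hn0, hb0.ne']

namespace MulChar

variable {M R : Type*} [CommMonoid M] {g : Mˣ}

lemma isPrimitiveRoot_apply_of_forall_mem_zpowers [CommMonoidWithZero R]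
    (hg : ∀ x, x ∈ Subgroup.zpowers g) (χ : MulChar M R) :
    IsPrimitiveRoot (χ g) (orderOf χ) := by
  have key : ∀ k, χ g ^ k = 1 ↔ χ ^ k = 1 := fun k => by
    rw [MulChar.eq_iff hg, MulChar.pow_apply_coe, MulChar.one_apply_coe]
  exact ⟨(key _).2 (pow_orderOf_eq_one χ),
    fun k hk => orderOf_dvd_of_pow_eq_one ((key k).1 hk)⟩

lemma eq_pow_of_sq_eq_one [CommRing R] [IsDomain R] (hg : ∀ x, x ∈ Subgroup.zpowers g)
    {χ ψ : MulChar M R} {n : ℕ} (hn : n ≠ 0) (hχ : orderOf χ = 2 * n) (hψ : ψ ^ 2 = 1)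
    (hψ1 : ψ ≠ 1) : ψ = χ ^ n := by
  have hζ := hχ ▸ isPrimitiveRoot_apply_of_forall_mem_zpowers hg χ
  have hχn : χ g ^ n = -1 := by
    have := hζ.pow_of_dvd hn (dvd_mul_left n 2)
    rw [Nat.mul_div_cancel _ (Nat.pos_of_ne_zero hn)] at this
    exact this.eq_neg_one_of_two_right
  have hsq : ψ g ^ 2 = 1 := by rw [← MulChar.pow_apply_coe, hψ, MulChar.one_apply_coe]
  have hne : ψ g ≠ 1 := fun h =>
    hψ1 ((MulChar.eq_iff hg ψ 1).2 (by rw [h, MulChar.one_apply_coe]))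
  rw [MulChar.eq_iff hg, MulChar.pow_apply_coe, hχn]
  exact (sq_eq_one_iff.1 hsq).resolve_left hne

lemma orderOf_eq_card_sub_one_of_forall_mem_zpowers {F : Type*} [Field F] [Fintype F]
    [CommRing R] [HasEnoughRootsOfUnity R (Monoid.exponent Fˣ)] {χ : MulChar F R}
    (hχ : ∀ ψ : MulChar F R, ψ ∈ Subgroup.zpowers χ) : orderOf χ = Fintype.card F - 1 := by
  classical
  rw [orderOf_eq_card_of_forall_mem_zpowers hχ, card_eq_card_units_of_hasEnoughRootsOfUnity,
    Nat.card_eq_fintype_card, Fintype.card_units]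

end MulChar


theorem Polynomial.aeval_eq_intCast_of_isRoot_cyclotomic {K R : Type*} [Field K] [CharZero K]
    [CommRing R] {m : ℕ} (hm : 0 < m) {ζ : K} (hζ : IsPrimitiveRoot ζ m) {g : R}
    (hg : (cyclotomic m R).IsRoot g) {Q : ℤ[X]} {r : ℤ} (h : aeval ζ Q = r) :
    aeval g Q = r := by
  obtain ⟨B, hB⟩ : cyclotomic m ℤ ∣ Q - C r := by
    rw [cyclotomic_eq_minpoly hζ hm]
    exact minpoly.isIntegrallyClosed_dvd (hζ.isIntegral hm) (by simp [h])
  have hg' : aeval g (cyclotomic m ℤ) = 0 := by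
    rwa [aeval_def, eval₂_eq_eval_map, map_cyclotomic]
  have := congrArg (aeval g) hB
  rwa [map_sub, map_mul, hg', zero_mul, aeval_C, sub_eq_zero, algebraMap_int_eq,
    eq_intCast] at this

section JacobiPoly

variable {F : Type*} [Field F] [Fintype F] [DecidableEq F]

/-- If `E` is a discrete logarithm to the base `g`, the value of this polynomial at `χ g` is the
Jacobi sum `J(χᵃ, χᵇ)`, and its value at `g` itself is `∑ xᵃ (1 - x)ᵇ`. -/
noncomputable def jacobiPoly (E : F → ℕ) (a b : ℕ) : ℤ[X] :=
  ∑ x ∈ univ \ {0, 1}, X ^ (a * E x + b * E (1 - x))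

lemma aeval_jacobiPoly {R : Type*} [CommRing R] {E : F → ℕ} {y : R} {f : F → R}
    (hf : ∀ x ≠ 0, y ^ E x = f x) (a b : ℕ) :
    aeval y (jacobiPoly E a b) = ∑ x ∈ univ \ {0, 1}, f x ^ a * f (1 - x) ^ b := by
  simp only [jacobiPoly, map_sum, map_pow, aeval_X]
  refine sum_congr rfl fun x hx => ?_
  have hx : x ≠ 0 ∧ x ≠ 1 := by simpa using hx
  rw [pow_add, mul_comm a, mul_comm b, pow_mul, pow_mul, hf x hx.1,
    hf (1 - x) (sub_ne_zero.2 hx.2.symm)]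

lemma aeval_jacobiPoly_eq_jacobiSum {R : Type*} [CommRing R] {g : F} {E : F → ℕ}
    (hE : ∀ x ≠ 0, g ^ E x = x) (χ : MulChar F R) (a b : ℕ) :
    aeval (χ g) (jacobiPoly E a b) = jacobiSum (χ ^ a) (χ ^ b) := by
  have hpow : ∀ y : F, y ≠ 0 → ∀ k : ℕ, (χ ^ k) y = χ y ^ k := fun y hy k => by
    simpa using MulChar.pow_apply_coe χ k (Units.mk0 y hy)
  rw [aeval_jacobiPoly (fun x hx => by rw [← map_pow, hE x hx]), jacobiSum_eq_sum_sdiff]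
  refine sum_congr rfl fun x hx => ?_
  have hx : x ≠ 0 ∧ x ≠ 1 := by simpa using hx
  rw [hpow x hx.1, hpow (1 - x) (sub_ne_zero.2 hx.2.symm)]

lemma ZMod.aeval_jacobiPoly_add_eq_choose {p n k : ℕ} [Fact p.Prime] (hp : p = 2 * n + 1)
    (hn : Odd n) {g : ZMod p} {E : ZMod p → ℕ} (hE : ∀ x ≠ 0, g ^ E x = x) (hk0 : 0 < k)
    (hk : k < n) :
    aeval g (jacobiPoly E n k + jacobiPoly E n (2 * n - k)) = (2 * n - k).choose n := by
  rw [map_add, aeval_jacobiPoly (f := id) hE, aeval_jacobiPoly (f := id) hE]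
  simp only [id]
  rw [ZMod.sum_pow_mul_one_sub_pow_eq_choose hp hn hk0 (by omega),
    ZMod.sum_pow_mul_one_sub_pow_eq_choose hp hn (by omega) (by omega),
    Nat.choose_eq_zero_of_lt hk, Nat.cast_zero, zero_add]

end JacobiPoly


/-- Let `p ≡ 3 (mod 4)` be a prime. Then the Legendre symbol
`(R_p/p) = (-1)^{(p-3)/4}`. -/
theorem stmt_7 (p : ℕ) [Fact p.Prime] (n : ℕ)
    (hcard : p = 2 * n + 1)
    (hp : p % 4 = 3)
    (φ χ : MulChar (ZMod p) ℂ)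
    (hφ : φ ^ 2 = 1 ∧ φ ≠ 1)
    (hχ : ∀ ψ : MulChar (ZMod p) ℂ, ψ ∈ Subgroup.zpowers χ)
    (r : ℤ)
    (hr : (∏ k ∈ (Finset.range n).filter (fun k => 0 < k ∧ 2 * k < n),
        (jacobiSum φ (χ ^ k) + jacobiSum φ (χ ^ (-(k : ℤ))))) = (r : ℂ)) :
    legendreSym p r = (-1) ^ ((p - 3) / 4) := by
  obtain ⟨M, hM⟩ : ∃ M, n = 2 * M + 1 := ⟨n / 2, by omega⟩
  obtain ⟨g, hg⟩ := IsCyclic.exists_generator (α := (ZMod p)ˣ)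
  obtain ⟨E, hE⟩ := FiniteField.exists_pow_eq_of_forall_mem_zpowers hg
  have hgprim : IsPrimitiveRoot (g : ZMod p) (2 * n) := by
    simpa [ZMod.card, hcard] using FiniteField.isPrimitiveRoot_of_forall_mem_zpowers hg
  have hχord : orderOf χ = 2 * n := by
    rw [MulChar.orderOf_eq_card_sub_one_of_forall_mem_zpowers hχ, ZMod.card]
    omega
  have hφχ : φ = χ ^ n := MulChar.eq_pow_of_sq_eq_one hg (by omega) hχord hφ.1 hφ.2
  set Q := ∏ i ∈ range M, (jacobiPoly E n (i + 1) + jacobiPoly E n (2 * n - (i + 1)))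
  have hQχ : aeval (χ g) Q = r := by
    rw [← hr, show (range n).filter (fun k => 0 < k ∧ 2 * k < n) = Ico 1 (M + 1) by
      ext; simp; omega, prod_Ico_eq_prod_range, map_prod, Nat.add_sub_cancel]
    refine prod_congr rfl fun i hi => ?_
    rw [mem_range] at hi
    rw [map_add, aeval_jacobiPoly_eq_jacobiSum hE, aeval_jacobiPoly_eq_jacobiSum hE, hφχ,
      zpow_neg_natCast_eq_pow_orderOf_sub χ (by omega), hχord, add_comm 1 i]
  have hQg : aeval (g : ZMod p) Q
      = ((∏ i ∈ range M, (2 * n - (i + 1)).choose n : ℕ) : ZMod p) := by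
    rw [map_prod, Nat.cast_prod]
    exact prod_congr rfl fun i hi => ZMod.aeval_jacobiPoly_add_eq_choose hcard ⟨M, hM⟩ hE
      (by omega) (by rw [mem_range] at hi; omega)
  have hrmod := aeval_eq_intCast_of_isRoot_cyclotomic (by omega)
    (hχord ▸ MulChar.isPrimitiveRoot_apply_of_forall_mem_zpowers hg χ)
    (hgprim.isRoot_cyclotomic (by omega)) hQχ
  rw [hQg] at hrmod
  rw [legendreSym, ← hrmod, quadraticChar_prod_choose hcard hM, show (p - 3) / 4 = M by omega]
end

section
/- Let p ≡ 1 (mod 4) be a prime. Then the Legendre symbol (R_p/p) equals 1; in particular R_p is a nonzero quadratic residue modulo p. -/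
open Finset

lemma natCast_ne_zero_of_lt (p k : ℕ) [Fact p.Prime] (h : 0 < k) (h2 : k < p) :
    ((k : ZMod p) ≠ 0) := by
  rw [Ne, ZMod.natCast_eq_zero_iff]
  intro hd
  have := Nat.le_of_dvd h hd
  omega

lemma chooseCong (p n : ℕ) [Fact p.Prime] (hcard : p = 2 * n + 1) :
    ∀ t, t ≤ n → (((n + t).choose t : ZMod p) = (-1) ^ t * (n.choose t : ZMod p)) := by
  intro t
  induction t with
  | zero => simp
  | succ t ih =>
    intro ht
    have ht' : t ≤ n := le_of_lt (Nat.lt_of_succ_le ht)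
    have h1 : (n + t + 1).choose (t + 1) * (t + 1) = (n + t + 1) * (n + t).choose t := by
      have := (Nat.add_one_mul_choose_eq (n + t) t).symm
      simpa [Nat.succ_eq_add_one] using this
    have h2 : n.choose (t + 1) * (t + 1) = n.choose t * (n - t) :=
      Nat.choose_succ_right_eq n t
    have hs : (n + t + 1) + (n - t) = p := by omega
    have hcast1 : ((n + t + 1 : ℕ) : ZMod p) = -(((n - t : ℕ) : ZMod p)) := by
      have h3 := congrArg (fun x : ℕ => (x : ZMod p)) hs
      push_cast at h3
      rw [ZMod.natCast_self] at h3
      push_cast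
      linear_combination h3
    have hne : ((t + 1 : ℕ) : ZMod p) ≠ 0 := natCast_ne_zero_of_lt p (t+1) (by omega) (by omega)
    have key : (((n + t + 1).choose (t + 1) : ZMod p)) * ((t+1 : ℕ) : ZMod p)
        = ((-1) ^ (t+1) * (n.choose (t+1) : ZMod p)) * ((t+1 : ℕ) : ZMod p) := by
      have c1 := congrArg (fun x : ℕ => (x : ZMod p)) h1
      have c2 := congrArg (fun x : ℕ => (x : ZMod p)) h2
      simp only [Nat.cast_mul] at c1 c2
      rw [hcast1, ih ht'] at c1
      rw [c1]
      linear_combination ((-1:ZMod p)^t) * c2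
    have h4 := mul_right_cancel₀ hne key
    rw [show n + (t+1) = n + t + 1 by ring]
    exact h4

-- L1: prod of factorials = prod j^(N-j)
lemma prodFactIco (N : ℕ) : ∏ k ∈ Ico 1 N, Nat.factorial k = ∏ j ∈ Ico 1 N, j ^ (N - j) := by
  induction N with
  | zero => simp
  | succ N ih =>
    rcases Nat.eq_zero_or_pos N with h | h
    · subst h; simp
    rw [Finset.prod_Ico_succ_top (by omega), Finset.prod_Ico_succ_top (by omega), ih]
    have h1 : ∏ j ∈ Ico 1 N, j ^ (N + 1 - j) = (∏ j ∈ Ico 1 N, j ^ (N - j)) * ∏ j ∈ Ico 1 N, j := by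
      rw [← Finset.prod_mul_distrib]
      apply Finset.prod_congr rfl
      intro j hj
      simp only [Finset.mem_Ico] at hj
      rw [← pow_succ]
      congr 1
      omega
    have h2 : (∏ j ∈ Ico 1 N, j) * N = ∏ j ∈ Ico 1 (N + 1), j := by
      rw [Finset.prod_Ico_succ_top (by omega)]
    have h3 : ∏ j ∈ Ico 1 (N + 1), j = Nat.factorial N := Finset.prod_Ico_id_eq_factorial N
    rw [show N + 1 - N = 1 from by omega, pow_one, h1, ← h3, ← h2]
    ring

-- L2
lemma prodPowSplit (N : ℕ) :
    (∏ j ∈ Ico 1 N, j ^ (N - j)) * (∏ j ∈ Ico 1 N, j ^ j) = (∏ j ∈ Ico 1 N, j) ^ N := by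
  rw [← Finset.prod_mul_distrib, ← Finset.prod_pow]
  apply Finset.prod_congr rfl
  intro j hj
  simp only [Finset.mem_Ico] at hj
  rw [← pow_add]
  congr 1
  omega

-- L3
lemma prodPowJJ (N : ℕ) :
    (∏ j ∈ Ico 1 N, j ^ j) = (∏ j ∈ Ico 1 N, j ^ (j / 2)) ^ 2 * ∏ j ∈ Ico 1 N, j ^ (j % 2) := by
  rw [← Finset.prod_pow, ← Finset.prod_mul_distrib]
  apply Finset.prod_congr rfl
  intro j _
  rw [← pow_mul, ← pow_add]
  congr 1
  omega

-- L4: double factorial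
lemma doubleFact (m : ℕ) :
    2 ^ m * Nat.factorial m * ∏ j ∈ Ico 1 (2 * m), j ^ (j % 2) = Nat.factorial (2 * m) := by
  induction m with
  | zero => simp
  | succ m ih =>
    rcases Nat.eq_zero_or_pos m with rfl | hm
    · decide
    have e1 : 2 * (m + 1) = (2 * m + 1) + 1 := by ring
    rw [e1, Finset.prod_Ico_succ_top (by omega), Finset.prod_Ico_succ_top (by omega)]
    rw [show (2 * m) % 2 = 0 from by omega, show (2 * m + 1) % 2 = 1 from by omega,
      pow_zero, pow_one, mul_one]
    rw [Nat.factorial_succ, Nat.factorial_succ, pow_succ]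
    calc 2 ^ m * 2 * ((m + 1) * Nat.factorial m) * ((∏ j ∈ Ico 1 (2 * m), j ^ (j % 2)) * (2 * m + 1))
        = (2 * (m + 1)) * ((2 * m + 1) * (2 ^ m * Nat.factorial m * ∏ j ∈ Ico 1 (2 * m), j ^ (j % 2))) := by ring
      _ = (2 * m + 1 + 1) * ((2 * m + 1) * Nat.factorial (2 * m)) := by rw [ih]; ring

-- claim1
lemma prodChooseFact (n m : ℕ) (h : m ≤ n) :
    (∏ k ∈ Ico 1 m, n.choose k) * (∏ k ∈ Ico 1 m, Nat.factorial k * Nat.factorial (n - k))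
      = Nat.factorial n ^ (m - 1) := by
  rw [← Finset.prod_mul_distrib]
  have : ∀ k ∈ Ico 1 m, n.choose k * (Nat.factorial k * Nat.factorial (n - k)) = Nat.factorial n := by
    intro k hk
    simp only [Finset.mem_Ico] at hk
    rw [← mul_assoc]
    exact Nat.choose_mul_factorial_mul_factorial (by omega)
  rw [Finset.prod_congr rfl this, Finset.prod_const, Nat.card_Ico]

-- claim2
lemma factProdSplit (n m : ℕ) (hn : n = 2 * m) (hm : 1 ≤ m) :
    Nat.factorial m * ∏ k ∈ Ico 1 m, (Nat.factorial k * Nat.factorial (n - k))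
      = ∏ k ∈ Ico 1 n, Nat.factorial k := by
  rw [Finset.prod_mul_distrib]
  have hrefl : ∏ k ∈ Ico 1 m, Nat.factorial (n - k) = ∏ k ∈ Ico (m + 1) n, Nat.factorial k := by
    apply Finset.prod_nbij' (fun k => n - k) (fun k => n - k)
    · intro a ha; simp only [Finset.mem_Ico] at *; omega
    · intro a ha; simp only [Finset.mem_Ico] at *; omega
    · intro a ha; simp only [Finset.mem_Ico] at ha; omega
    · intro a ha; simp only [Finset.mem_Ico] at ha; omega
    · intro a ha; rfl
  rw [hrefl]
  have h1 : ∏ k ∈ Ico 1 (m + 1), Nat.factorial k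
      = (∏ k ∈ Ico 1 m, Nat.factorial k) * Nat.factorial m :=
    Finset.prod_Ico_succ_top (by omega) _
  have h2 : (∏ k ∈ Ico 1 (m + 1), Nat.factorial k) * ∏ k ∈ Ico (m + 1) n, Nat.factorial k
      = ∏ k ∈ Ico 1 n, Nat.factorial k :=
    Finset.prod_Ico_consecutive _ (by omega) (by omega)
  calc Nat.factorial m * ((∏ k ∈ Ico 1 m, Nat.factorial k) * ∏ k ∈ Ico (m + 1) n, Nat.factorial k)
      = (∏ k ∈ Ico 1 (m + 1), Nat.factorial k) * ∏ k ∈ Ico (m + 1) n, Nat.factorial k := by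
        rw [h1]; ring
    _ = ∏ k ∈ Ico 1 n, Nat.factorial k := h2

-- master identity (natural numbers)
lemma masterNat (t : ℕ) :
    (∏ k ∈ Ico 1 (t + 1), (2 * (t + 1)).choose k)
      * (2 ^ (t + 1) * (∏ j ∈ Ico 1 (2 * (t + 1)), j) ^ (2 * (t + 1)))
    = Nat.factorial (2 * (t + 1)) ^ (t + 1)
      * (∏ j ∈ Ico 1 (2 * (t + 1)), j ^ (j / 2)) ^ 2 := by
  set m := t + 1 with hm
  set n := 2 * m with hn
  have e1 : (∏ j ∈ Ico 1 n, j) ^ n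
      = (∏ k ∈ Ico 1 n, Nat.factorial k) * ∏ j ∈ Ico 1 n, j ^ j := by
    rw [prodFactIco, prodPowSplit]
  have e2 : ∏ k ∈ Ico 1 n, Nat.factorial k
      = Nat.factorial m * ∏ k ∈ Ico 1 m, (Nat.factorial k * Nat.factorial (n - k)) :=
    (factProdSplit n m hn (by omega)).symm
  have e3 := prodPowJJ n
  have e4 : 2 ^ m * Nat.factorial m * ∏ j ∈ Ico 1 n, j ^ (j % 2) = Nat.factorial n :=
    doubleFact m
  have e5 : (∏ k ∈ Ico 1 m, n.choose k) * (∏ k ∈ Ico 1 m, Nat.factorial k * Nat.factorial (n - k))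
      = Nat.factorial n ^ (m - 1) := prodChooseFact n m (by omega)
  have hm1 : m - 1 = t := by omega
  rw [hm1] at e5
  calc (∏ k ∈ Ico 1 m, n.choose k) * (2 ^ m * (∏ j ∈ Ico 1 n, j) ^ n)
      = (∏ k ∈ Ico 1 m, n.choose k)
        * (2 ^ m * ((Nat.factorial m * ∏ k ∈ Ico 1 m, (Nat.factorial k * Nat.factorial (n - k)))
            * ∏ j ∈ Ico 1 n, j ^ j)) := by rw [e1, ← e2]
    _ = ((∏ k ∈ Ico 1 m, n.choose k) * (∏ k ∈ Ico 1 m, Nat.factorial k * Nat.factorial (n - k)))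
        * ((2 ^ m * Nat.factorial m * ∏ j ∈ Ico 1 n, j ^ (j % 2))
            * (∏ j ∈ Ico 1 n, j ^ (j / 2)) ^ 2) := by rw [e3]; ring
    _ = Nat.factorial n ^ m * (∏ j ∈ Ico 1 n, j ^ (j / 2)) ^ 2 := by
          rw [e4, e5, hm]; ring

-- Wilson: (n!)^2 = -1 in ZMod p for p = 2n+1, n even
lemma wilsonHalf (p n : ℕ) [Fact p.Prime] (hcard : p = 2 * n + 1) (hev : n % 2 = 0) :
    ((Nat.factorial n : ZMod p)) ^ 2 = -1 := by
  have h1 : ((Nat.factorial (p - 1) : ZMod p)) = -1 := ZMod.wilsons_lemma p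
  have h2 : p - 1 = 2 * n := by omega
  rw [h2] at h1
  have h3 : Nat.factorial (2 * n) = ∏ j ∈ Ico 1 (2 * n + 1), j := (Finset.prod_Ico_id_eq_factorial (2 * n)).symm
  rw [h3, Nat.cast_prod] at h1
  have h4 : (∏ j ∈ Ico 1 (n + 1), (j : ZMod p)) * ∏ j ∈ Ico (n + 1) (2 * n + 1), (j : ZMod p)
      = ∏ j ∈ Ico 1 (2 * n + 1), (j : ZMod p) :=
    Finset.prod_Ico_consecutive _ (by omega) (by omega)
  have h5 : ∏ j ∈ Ico 1 (n + 1), (j : ZMod p) = (Nat.factorial n : ZMod p) := by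
    rw [← Nat.cast_prod]
    congr 1
    exact Finset.prod_Ico_id_eq_factorial n
  have h6 : ∏ j ∈ Ico (n + 1) (2 * n + 1), (j : ZMod p)
      = ∏ j ∈ Ico (n + 1) (2 * n + 1), (-1 : ZMod p) * ((2 * n + 1 - j : ℕ) : ZMod p) := by
    apply Finset.prod_congr rfl
    intro j hj
    simp only [Finset.mem_Ico] at hj
    have hs : (j + (2 * n + 1 - j) : ℕ) = p := by omega
    have := congrArg (fun x : ℕ => (x : ZMod p)) hs
    push_cast at this
    rw [ZMod.natCast_self] at this
    linear_combination this
  have h7 : ∏ j ∈ Ico (n + 1) (2 * n + 1), ((2 * n + 1 - j : ℕ) : ZMod p)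
      = ∏ j ∈ Ico 1 (n + 1), (j : ZMod p) := by
    apply Finset.prod_nbij' (fun k => 2 * n + 1 - k) (fun k => 2 * n + 1 - k)
    · intro a ha; simp only [Finset.mem_Ico] at *; omega
    · intro a ha; simp only [Finset.mem_Ico] at *; omega
    · intro a ha; simp only [Finset.mem_Ico] at ha; omega
    · intro a ha; simp only [Finset.mem_Ico] at ha; omega
    · intro a ha; rfl
  have hc : 2 * n + 1 - (n + 1) = n := by omega
  have hev' : (-1 : ZMod p) ^ n = 1 := Even.neg_one_pow (Nat.even_iff.mpr hev)
  rw [← h4, h6, Finset.prod_mul_distrib, Finset.prod_const, h7, h5, Nat.card_Ico, hc, hev'] at h1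
  linear_combination h1

lemma isSquare_neg_one_pow (p : ℕ) [Fact p.Prime] (hp : p % 4 = 1) (j : ℕ) :
    IsSquare ((-1 : ZMod p) ^ j) := by
  rcases Nat.even_or_odd j with h | h
  · exact h.isSquare_pow _
  · rw [h.neg_one_pow]
    exact ZMod.exists_sq_eq_neg_one_iff.mpr (by omega)

lemma not_isSquare_fact (p n m : ℕ) [Fact p.Prime] (hcard : p = 2 * n + 1) (hn : n = 2 * m)
    (hodd : m % 2 = 1) : ¬ IsSquare ((Nat.factorial n : ZMod p)) := by
  rintro ⟨w, hw⟩
  have hF2 : ((Nat.factorial n : ZMod p)) ^ 2 = -1 := wilsonHalf p n hcard (by omega)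
  have hne2 : ((2 : ℕ) : ZMod p) ≠ 0 := natCast_ne_zero_of_lt p 2 (by omega) (by omega)
  have hne1 : (-1 : ZMod p) ≠ 1 := by
    intro h
    apply hne2
    push_cast
    linear_combination -h
  have w4 : w ^ 4 = -1 := by
    rw [show (4 : ℕ) = 2 * 2 from rfl, pow_mul, show w ^ 2 = w * w from sq w, ← hw, hF2]
  have w8 : w ^ 8 = 1 := by
    rw [show (8 : ℕ) = 4 * 2 from rfl, pow_mul, w4]
    ring
  have hne0 : (-1 : ZMod p) ≠ 0 := neg_ne_zero.mpr one_ne_zero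
  have hw0 : w ≠ 0 := by
    intro h
    rw [h, zero_pow (by norm_num)] at w4
    exact hne0 w4.symm
  have hd8 : orderOf w ∣ 2 ^ 3 := orderOf_dvd_of_pow_eq_one (by norm_num at w8 ⊢; exact w8)
  obtain ⟨i, hi, hdi⟩ := (Nat.dvd_prime_pow Nat.prime_two).mp hd8
  have hi3 : i = 3 := by
    by_contra hne
    have hle : i ≤ 2 := by omega
    have : orderOf w ∣ 2 ^ 2 := hdi ▸ pow_dvd_pow 2 hle
    have : w ^ 4 = 1 := by
      have := orderOf_dvd_iff_pow_eq_one.mp (show orderOf w ∣ 4 by norm_num at this ⊢; exact this)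
      exact this
    rw [w4] at this
    exact hne1 this
  have worder : w ^ (p - 1) = 1 := ZMod.pow_card_sub_one_eq_one hw0
  have hdvd : orderOf w ∣ p - 1 := orderOf_dvd_of_pow_eq_one worder
  rw [hdi, hi3] at hdvd
  obtain ⟨c, hc⟩ := hdvd
  omega

lemma factCast_ne_zero (p a : ℕ) [Fact p.Prime] (h : a < p) :
    ((Nat.factorial a : ZMod p)) ≠ 0 := by
  rw [Ne, ZMod.natCast_eq_zero_iff]
  intro hd
  have := (Nat.Prime.dvd_factorial (Fact.out)).mp hd
  omega

lemma partB (p n m : ℕ) [Fact p.Prime] (hcard : p = 2 * n + 1) (hn : n = 2 * m) (hm : 1 ≤ m) :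
    IsSquare ((-1 : ZMod p) ^ (m - 1) * ∏ k ∈ Ico 1 m, ((2 * n - k).choose n : ZMod p))
    ∧ ((-1 : ZMod p) ^ (m - 1) * ∏ k ∈ Ico 1 m, ((2 * n - k).choose n : ZMod p)) ≠ 0 := by
  have hp4 : p % 4 = 1 := by omega
  have hne0 : (-1 : ZMod p) ≠ 0 := neg_ne_zero.mpr one_ne_zero
  -- factor conversion
  have hfac : ∀ k ∈ Ico 1 m, ((2 * n - k).choose n : ZMod p)
      = (-1) ^ k * (n.choose k : ZMod p) := by
    intro k hk
    simp only [Finset.mem_Ico] at hk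
    have h1 : (2 * n - k).choose n = (2 * n - k).choose (n - k) := by
      have h := Nat.choose_symm (show n ≤ 2 * n - k by omega)
      rw [show 2 * n - k - n = n - k from by omega] at h
      exact h.symm
    have h2 : 2 * n - k = n + (n - k) := by omega
    rw [h1, h2, chooseCong p n hcard (n - k) (by omega),
      Nat.choose_symm (show k ≤ n by omega)]
    congr 1
    have e1 : (-1 : ZMod p) ^ (n - k) * (-1) ^ k = 1 := by
      rw [← pow_add, show n - k + k = n from by omega, hn, pow_mul]
      norm_num
    have e2 : (-1 : ZMod p) ^ k * (-1) ^ k = 1 := by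
      rw [← pow_add, show k + k = 2 * k from by omega, pow_mul]
      norm_num
    exact mul_right_cancel₀ (pow_ne_zero k hne0) (e1.trans e2.symm)
  have hprod : ∏ k ∈ Ico 1 m, ((2 * n - k).choose n : ZMod p)
      = (-1) ^ (∑ k ∈ Ico 1 m, k) * ∏ k ∈ Ico 1 m, (n.choose k : ZMod p) := by
    rw [Finset.prod_congr rfl hfac, Finset.prod_mul_distrib, Finset.prod_pow_eq_pow_sum]
  obtain ⟨t, rfl⟩ : ∃ t, m = t + 1 := ⟨m - 1, by omega⟩
  subst hn
  set m := t + 1 with hmdef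
  set n := 2 * m with hndef
  -- cast master identity
  have ME := congrArg (fun x : ℕ => (x : ZMod p)) (masterNat t)
  push_cast at ME
  -- abbreviations
  set P1 : ZMod p := ∏ k ∈ Ico 1 m, (n.choose k : ZMod p) with hP1def
  set g : ZMod p := ∏ j ∈ Ico 1 n, (j : ZMod p) with hgdef
  set E : ZMod p := ∏ j ∈ Ico 1 n, (j : ZMod p) ^ (j / 2) with hEdef
  set F : ZMod p := ((Nat.factorial n : ℕ) : ZMod p) with hFdef
  -- nonzero facts
  have hF0 : F ≠ 0 := factCast_ne_zero p n (by omega)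
  have hg0 : g ≠ 0 := by
    rw [hgdef]
    apply Finset.prod_ne_zero_iff.mpr
    intro j hj
    simp only [Finset.mem_Ico] at hj
    exact natCast_ne_zero_of_lt p j (by omega) (by omega)
  have hE0 : E ≠ 0 := by
    rw [hEdef]
    apply Finset.prod_ne_zero_iff.mpr
    intro j hj
    simp only [Finset.mem_Ico] at hj
    exact pow_ne_zero _ (natCast_ne_zero_of_lt p j (by omega) (by omega))
  have h20 : (2 : ZMod p) ≠ 0 := by
    have := natCast_ne_zero_of_lt p 2 (by omega) (by omega)
    push_cast at this
    exact this
  have hP0 : P1 ≠ 0 := by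
    rw [hP1def]
    apply Finset.prod_ne_zero_iff.mpr
    intro k hk
    simp only [Finset.mem_Ico] at hk
    intro hz
    apply hF0
    have hid := congrArg (fun x : ℕ => (x : ZMod p))
      (Nat.choose_mul_factorial_mul_factorial (show k ≤ n by omega))
    push_cast at hid
    rw [hz] at hid
    rw [hFdef, ← hid]
    ring
  -- quadratic character computation
  have hq := congrArg (quadraticChar (ZMod p)) ME
  simp only [map_mul, map_pow] at hq
  set qc := quadraticChar (ZMod p) with hqc
  have hg1 : qc g ^ (2 * (t + 1)) = 1 := by
    rw [pow_mul, quadraticChar_sq_one hg0, one_pow]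
  have hE1 : qc E ^ 2 = 1 := quadraticChar_sq_one hE0
  rw [hg1, hE1, mul_one, mul_one] at hq
  have h2sq : qc 2 ^ 2 = 1 := quadraticChar_sq_one h20
  have hqP : qc P1 = (qc F * qc 2) ^ (t + 1) := by
    calc qc P1 = qc P1 * ((qc 2 ^ 2) ^ (t + 1)) := by rw [h2sq, one_pow, mul_one]
      _ = (qc P1 * qc 2 ^ (t + 1)) * qc 2 ^ (t + 1) := by ring
      _ = qc F ^ (t + 1) * qc 2 ^ (t + 1) := by rw [hq]
      _ = (qc F * qc 2) ^ (t + 1) := (mul_pow _ _ _).symm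
  have hqP1 : qc P1 = 1 := by
    rcases Nat.even_or_odd m with he | ho
    · obtain ⟨s, hs⟩ := he
      have hFsq : (qc F * qc 2) ^ 2 = 1 := by
        rw [mul_pow, quadraticChar_sq_one hF0, h2sq, one_mul]
      rw [hqP, show t + 1 = 2 * s from by omega, pow_mul, hFsq, one_pow]
    · have hqF : qc F = -1 :=
        quadraticChar_neg_one_iff_not_isSquare.mpr
          (not_isSquare_fact p n m hcard hndef (Nat.odd_iff.mp ho))
      have hq2 : qc 2 = -1 := by
        apply quadraticChar_neg_one_iff_not_isSquare.mpr
        intro hsq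
        have h8 := (ZMod.exists_sq_eq_two_iff (show p ≠ 2 by omega)).mp hsq
        have hmo := Nat.odd_iff.mp ho
        omega
      obtain ⟨s, hs⟩ := ho
      rw [hqP, hqF, hq2, show t + 1 = 2 * s + 1 from by omega, pow_succ, pow_mul]
      norm_num
  have hsqP1 : IsSquare P1 := (quadraticChar_one_iff_isSquare hP0).mp hqP1
  constructor
  · rw [hprod, ← mul_assoc, ← pow_add]
    exact (isSquare_neg_one_pow p hp4 _).mul hsqP1
  · rw [hprod, ← mul_assoc, ← pow_add]
    exact mul_ne_zero (pow_ne_zero _ hne0) hP0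

lemma sumPow (p n : ℕ) [Fact p.Prime] (hcard : p = 2 * n + 1) (t : ℕ) (h1 : 0 < t)
    (h2 : t < 4 * n) : (∑ x : ZMod p, x ^ t) = if t = 2 * n then (-1 : ZMod p) else 0 := by
  have hcardF : Fintype.card (ZMod p) = p := ZMod.card p
  rcases lt_trichotomy t (2 * n) with h | h | h
  · rw [if_neg (by omega)]
    exact FiniteField.sum_pow_lt_card_sub_one (ZMod p) t (by omega)
  · subst h
    rw [if_pos rfl]
    have hcalc : ∀ x : ZMod p, x ^ (2 * n) = if x = 0 then 0 else 1 := by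
      intro x
      split_ifs with hx
      · rw [hx, zero_pow (by omega)]
      · have := ZMod.pow_card_sub_one_eq_one hx
        rw [show p - 1 = 2 * n from by omega] at this
        exact this
    rw [Finset.sum_congr rfl (fun x _ => hcalc x)]
    have hsplit : (∑ x : ZMod p, if x = 0 then (0 : ZMod p) else 1)
        = (∑ _x : ZMod p, (1 : ZMod p)) - ∑ x : ZMod p, (if x = 0 then (1 : ZMod p) else 0) := by
      rw [← Finset.sum_sub_distrib]
      apply Finset.sum_congr rfl
      intro x _
      split_ifs <;> ring
    rw [hsplit, Finset.sum_ite_eq' Finset.univ (0 : ZMod p) (fun _ => (1 : ZMod p)),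
      if_pos (Finset.mem_univ _), Finset.sum_const, Finset.card_univ, hcardF, nsmul_eq_mul,
      ZMod.natCast_self]
    ring
  · rw [if_neg (by omega)]
    have ht' : 0 < t - 2 * n ∧ t - 2 * n < 2 * n := by omega
    have hstep : ∀ x : ZMod p, x ^ t = x ^ (t - 2 * n) := by
      intro x
      by_cases hx : x = 0
      · rw [hx, zero_pow (by omega), zero_pow (by omega)]
      · have h1' := ZMod.pow_card_sub_one_eq_one hx
        rw [show p - 1 = 2 * n from by omega] at h1'
        calc x ^ t = x ^ (2 * n) * x ^ (t - 2 * n) := by rw [← pow_add]; congr 1; omega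
          _ = x ^ (t - 2 * n) := by rw [h1', one_mul]
    rw [Finset.sum_congr rfl (fun x _ => hstep x)]
    exact FiniteField.sum_pow_lt_card_sub_one (ZMod p) _ (by omega)

lemma jacobiEval (p n : ℕ) [Fact p.Prime] (hcard : p = 2 * n + 1) (hev : n % 2 = 0)
    (hn1 : 1 ≤ n) (b : ℕ) (hb1 : 1 ≤ b) (hb2 : b < 2 * n) :
    (∑ x : ZMod p, x ^ n * (1 - x) ^ b) = -((b.choose n : ZMod p)) := by
  have hexp : ∀ x : ZMod p, x ^ n * (1 - x) ^ b
      = ∑ j ∈ range (b + 1), (-1) ^ j * (b.choose j : ZMod p) * x ^ (n + j) := by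
    intro x
    have hbin : (1 - x) ^ b = ∑ j ∈ range (b + 1), (-x) ^ j * 1 ^ (b - j) * (b.choose j : ZMod p) := by
      rw [show (1 : ZMod p) - x = -x + 1 from by ring, add_pow]
    rw [hbin, Finset.mul_sum]
    apply Finset.sum_congr rfl
    intro j _
    rw [neg_pow, pow_add]
    ring
  rw [Finset.sum_congr rfl (fun x _ => hexp x), Finset.sum_comm]
  have hinner : ∀ j ∈ range (b + 1),
      (∑ x : ZMod p, (-1) ^ j * (b.choose j : ZMod p) * x ^ (n + j))
      = if j = n then (-1) ^ n * (b.choose n : ZMod p) * (-1) else 0 := by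
    intro j hj
    simp only [Finset.mem_range] at hj
    rw [← Finset.mul_sum]
    rw [sumPow p n hcard (n + j) (by omega) (by omega),
      if_congr (show n + j = 2 * n ↔ j = n by omega) rfl rfl]
    split_ifs with h1
    · rw [h1]
    · ring
  rw [Finset.sum_congr rfl hinner, Finset.sum_ite_eq' (range (b + 1)) n
    (fun _ => (-1 : ZMod p) ^ n * (b.choose n : ZMod p) * (-1))]
  have hneg : (-1 : ZMod p) ^ n = 1 := Even.neg_one_pow (Nat.even_iff.mpr hev)
  split_ifs with h
  · rw [hneg]; ring
  · simp only [Finset.mem_range] at h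
    rw [Nat.choose_eq_zero_of_lt (by omega)]
    push_cast
    ring

set_option maxHeartbeats 1000000 in
/-- Let `p ≡ 1 (mod 4)` be a prime. Then the Legendre symbol
`(R_p/p) = 1`; in particular `R_p` is a nonzero quadratic residue mod `p`. -/
theorem stmt_8 (p : ℕ) [Fact p.Prime] (n : ℕ)
    (hcard : p = 2 * n + 1)
    (hp : p % 4 = 1)
    (φ χ : MulChar (ZMod p) ℂ)
    (hφ : φ ^ 2 = 1 ∧ φ ≠ 1)
    (hχ : ∀ ψ : MulChar (ZMod p) ℂ, ψ ∈ Subgroup.zpowers χ)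
    (r : ℤ)
    (hr : (∏ k ∈ (Finset.range n).filter (fun k => 0 < k ∧ 2 * k < n),
        (jacobiSum φ (χ ^ k) + jacobiSum φ (χ ^ (-(k : ℤ))))) = (r : ℂ)) :
    legendreSym p r = 1 := by
  have hprime : p.Prime := Fact.out
  have hp5 : 5 ≤ p := by
    have := hprime.two_le
    omega
  obtain ⟨m, hn⟩ : ∃ m, n = 2 * m := ⟨n / 2, by omega⟩
  have hm : 1 ≤ m := by omega
  -- Step 1: generator of units, order of χ
  obtain ⟨gu, hgu⟩ := IsCyclic.exists_generator (α := (ZMod p)ˣ)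
  have hcardu : Nat.card (ZMod p)ˣ = 2 * n := by
    rw [Nat.card_eq_fintype_card, ZMod.card_units_eq_totient, Nat.totient_prime hprime]
    omega
  have hordgu : orderOf gu = 2 * n := by
    rw [orderOf_eq_card_of_forall_mem_zpowers hgu, hcardu]
  have htop : Subgroup.zpowers χ = ⊤ := (Subgroup.eq_top_iff' _).mpr hχ
  have hordχ : orderOf χ = 2 * n := by
    have h1 : Nat.card (MulChar (ZMod p) ℂ) = Nat.card (ZMod p)ˣ :=
      MulChar.card_eq_card_units_of_hasEnoughRootsOfUnity (ZMod p) ℂ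
    have h2 := Nat.card_zpowers χ
    rw [htop, Subgroup.card_top, h1, hcardu] at h2
    exact h2.symm
  -- Step 2: ζ := χ(gu) is a primitive (2n)-th root of unity
  set ζ : ℂ := χ ↑gu with hζdef
  have hgu2n : (↑gu : ZMod p) ^ (2 * n) = 1 := by
    have := pow_orderOf_eq_one gu
    rw [hordgu] at this
    rw [← Units.val_pow_eq_pow_val, this, Units.val_one]
  have hζpow : ζ ^ (2 * n) = 1 := by
    rw [hζdef, ← map_pow, hgu2n, map_one]
  have hallpow : ∀ x : ZMod p, IsUnit x → ∃ t : ℕ, x = (↑gu : ZMod p) ^ t := by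
    intro x hx
    obtain ⟨t, ht⟩ := mem_powers_iff_mem_zpowers.mpr (hgu hx.unit)
    exact ⟨t, by rw [← hx.unit_spec, ← ht, Units.val_pow_eq_pow_val]⟩
  have hχpow1 : ∀ l : ℕ, 0 < l → ζ ^ l = 1 → χ ^ l = 1 := by
    intro l hl hz
    apply MulChar.ext
    intro a
    obtain ⟨t, ht⟩ := hallpow ↑a a.isUnit
    rw [MulChar.one_apply_coe, MulChar.pow_apply' χ (by omega), ht, map_pow, ← hζdef,
      ← pow_mul, mul_comm t l, pow_mul, hz, one_pow]
  have hprim : IsPrimitiveRoot ζ (2 * n) := by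
    refine ⟨hζpow, fun l hl => ?_⟩
    rcases Nat.eq_zero_or_pos l with rfl | hlpos
    · exact Dvd.intro 0 rfl
    · have := hχpow1 l hlpos hl
      have hd := orderOf_dvd_of_pow_eq_one this
      rwa [hordχ] at hd
  -- Step 3: the ring homomorphisms from the cyclotomic ring
  have hcyc1 : Polynomial.eval₂ (Int.castRingHom ℂ) ζ (Polynomial.cyclotomic (2 * n) ℤ) = 0 := by
    rw [Polynomial.eval₂_eq_eval_map, Polynomial.map_cyclotomic_int]
    exact hprim.isRoot_cyclotomic (by omega)
  set R0 := AdjoinRoot (Polynomial.cyclotomic (2 * n) ℤ) with hR0def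
  set f1 : R0 →+* ℂ := AdjoinRoot.lift (Int.castRingHom ℂ) ζ hcyc1 with hf1def
  have hf1root : f1 (AdjoinRoot.root _) = ζ := AdjoinRoot.lift_root hcyc1
  have hminpoly : Polynomial.cyclotomic (2 * n) ℤ = minpoly ℤ ζ :=
    Polynomial.cyclotomic_eq_minpoly hprim (by omega)
  have hf1inj : Function.Injective f1 := by
    rw [injective_iff_map_eq_zero]
    intro a ha
    obtain ⟨q, rfl⟩ := AdjoinRoot.mk_surjective a
    rw [hf1def, AdjoinRoot.lift_mk] at ha
    have hdvd : minpoly ℤ ζ ∣ q := by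
      apply minpoly.isIntegrallyClosed_dvd (hprim.isIntegral (by omega))
      rw [Polynomial.aeval_def, algebraMap_int_eq]
      exact ha
    rw [← hminpoly] at hdvd
    exact AdjoinRoot.mk_eq_zero.mpr hdvd
  have hordb : orderOf (↑gu : ZMod p) = 2 * n := by rw [orderOf_units]; exact hordgu
  have hbprim : IsPrimitiveRoot (↑gu : ZMod p) (2 * n) := by
    have := IsPrimitiveRoot.orderOf (↑gu : ZMod p)
    rwa [hordb] at this
  have hcyc2 : Polynomial.eval₂ (Int.castRingHom (ZMod p)) (↑gu : ZMod p)
      (Polynomial.cyclotomic (2 * n) ℤ) = 0 := by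
    rw [Polynomial.eval₂_eq_eval_map, Polynomial.map_cyclotomic_int]
    exact hbprim.isRoot_cyclotomic (by omega)
  set f2 : R0 →+* ZMod p := AdjoinRoot.lift (Int.castRingHom (ZMod p)) (↑gu : ZMod p) hcyc2
    with hf2def
  have hf2root : f2 (AdjoinRoot.root _) = (↑gu : ZMod p) := AdjoinRoot.lift_root hcyc2
  -- Step 4: lift χ to a character with values in R0
  have hmem : ∀ x : ZMod p, χ x ∈ f1.range := by
    intro x
    by_cases hx : IsUnit x
    · obtain ⟨t, ht⟩ := hallpow x hx
      refine ⟨(AdjoinRoot.root _) ^ t, ?_⟩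
      rw [map_pow, hf1root, ht, map_pow]
    · rw [χ.map_nonunit hx]
      exact ⟨0, map_zero f1⟩
  set χr : MulChar (ZMod p) f1.range :=
    { toFun := fun x => ⟨χ x, hmem x⟩,
      map_one' := Subtype.ext (by simpa using χ.map_one),
      map_mul' := fun x y => Subtype.ext (by simpa using map_mul χ x y),
      map_nonunit' := fun a ha => Subtype.ext (by simpa using χ.map_nonunit ha) } with hχrdef
  have hχrval : ∀ x : ZMod p, (χr x : ℂ) = χ x := fun x => rfl
  set e1 : R0 ≃+* f1.range := RingEquiv.ofBijective f1.rangeRestrict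
    ⟨fun a b hab => hf1inj (by
        have := congrArg (Subtype.val : f1.range → ℂ) hab
        rwa [RingHom.coe_rangeRestrict, RingHom.coe_rangeRestrict] at this),
      RingHom.rangeRestrict_surjective f1⟩ with he1def
  have he1app : ∀ z : R0, ((e1 z : f1.range) : ℂ) = f1 z := fun z => rfl
  set Χ : MulChar (ZMod p) R0 := χr.ringHomComp (e1.symm : f1.range ≃+* R0).toRingHom with hΧdef
  have hXapp : ∀ x : ZMod p, f1 (Χ x) = χ x := by
    intro x
    rw [hΧdef, MulChar.ringHomComp_apply]
    have h1 : f1 ((e1.symm : f1.range ≃+* R0).toRingHom (χr x)) = ((e1 (e1.symm (χr x))) : ℂ) := by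
      rw [he1app]
      rfl
    rw [h1, e1.apply_symm_apply]
    exact hχrval x
  have hXroot : Χ ↑gu = AdjoinRoot.root _ := by
    apply hf1inj
    rw [hXapp ↑gu, hf1root]
  -- Step 5: the reduced character is the identity
  set χ₀ : MulChar (ZMod p) (ZMod p) := Χ.ringHomComp f2 with hχ₀def
  have hχ₀app : ∀ x : ZMod p, χ₀ x = x := by
    intro x
    by_cases hx : IsUnit x
    · obtain ⟨t, ht⟩ := hallpow x hx
      rw [ht, map_pow]
      congr 1
      rw [hχ₀def, MulChar.ringHomComp_apply, hXroot, hf2root]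
    · have hx0 : x = 0 := by
        by_contra h
        exact hx (isUnit_iff_ne_zero.mpr h)
      rw [χ₀.map_nonunit hx, hx0]
  -- Step 6: φ = χ ^ e with e = n * c, c odd
  obtain ⟨e, he⟩ : ∃ e : ℕ, χ ^ e = φ := by
    obtain ⟨e, he⟩ := mem_powers_iff_mem_zpowers.mpr (hχ φ)
    exact ⟨e, he⟩
  have he0 : e ≠ 0 := by
    rintro rfl
    exact hφ.2 (by rw [← he, pow_zero])
  have hdvd2e : 2 * n ∣ 2 * e := by
    have h1 : χ ^ (2 * e) = 1 := by
      rw [mul_comm 2 e, pow_mul, he, hφ.1]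
    have := orderOf_dvd_of_pow_eq_one h1
    rwa [hordχ] at this
  have hnotdvd : ¬ (2 * n ∣ e) := by
    intro h
    have : χ ^ e = 1 := orderOf_dvd_iff_pow_eq_one.mp (by rwa [hordχ])
    exact hφ.2 (by rw [← he, this])
  obtain ⟨c, hc⟩ : ∃ c, e = n * c := by
    obtain ⟨c0, hc0⟩ := hdvd2e
    refine ⟨c0, Nat.eq_of_mul_eq_mul_left (show 0 < 2 by norm_num) ?_⟩
    rw [hc0]
    ring
  have hcodd : c % 2 = 1 := by
    rcases Nat.even_or_odd c with hev | hod
    · exfalso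
      obtain ⟨d, hd⟩ := hev
      exact hnotdvd ⟨d, by rw [hc, hd]; ring⟩
    · exact Nat.odd_iff.mp hod
  -- Step 7: pointwise form of the reduced characters
  have hχ₀pow : ∀ (a : ℕ), a ≠ 0 → ∀ x : ZMod p, ((Χ ^ a).ringHomComp f2) x = x ^ a := by
    intro a ha x
    rw [MulChar.ringHomComp_apply, MulChar.pow_apply' Χ ha, map_pow]
    rw [show f2 (Χ x) = χ₀ x from rfl, hχ₀app]
  have hxen : ∀ x : ZMod p, x ^ e = x ^ n := by
    intro x
    by_cases hx : x = 0
    · rw [hx, zero_pow he0, zero_pow (by omega)]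
    · have hx2n : x ^ (2 * n) = 1 := by
        have := ZMod.pow_card_sub_one_eq_one hx
        rwa [show p - 1 = 2 * n from by omega] at this
      have hsq : x ^ n * x ^ n = 1 := by rw [← pow_add, show n + n = 2 * n from by omega, hx2n]
      rw [hc, pow_mul]
      rcases mul_self_eq_one_iff.mp hsq with h1 | h1
      · rw [h1, one_pow]
      · rw [h1, Odd.neg_one_pow (Nat.odd_iff.mpr hcodd)]
  -- Step 8: transfer the hypothesis to R0, then to ZMod p
  have hfilter : (Finset.range n).filter (fun k => 0 < k ∧ 2 * k < n) = Ico 1 m := by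
    ext k
    simp only [Finset.mem_filter, Finset.mem_range, Finset.mem_Ico]
    omega
  have hzpowneg : ∀ k : ℕ, 1 ≤ k → k < m → χ ^ (-(k : ℤ)) = χ ^ (2 * n - k) := by
    intro k h1 h2
    have hmul : χ ^ (2 * n - k) * χ ^ k = 1 := by
      rw [← pow_add, show 2 * n - k + k = 2 * n from by omega, ← hordχ, pow_orderOf_eq_one]
    rw [zpow_neg, zpow_natCast]
    exact (eq_inv_of_mul_eq_one_left hmul).symm
  have hcomp_pow : ∀ a : ℕ, a ≠ 0 → (Χ ^ a).ringHomComp f1 = χ ^ a := by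
    intro a ha
    apply MulChar.ext
    intro u
    rw [MulChar.ringHomComp_apply, MulChar.pow_apply' Χ ha, map_pow, hXapp,
      MulChar.pow_apply' χ ha]
  have hr' : (∏ k ∈ Ico 1 m,
      (jacobiSum (Χ ^ e) (Χ ^ k) + jacobiSum (Χ ^ e) (Χ ^ (2 * n - k)))) = (r : R0) := by
    apply hf1inj
    rw [map_prod, map_intCast, ← hr, hfilter]
    apply Finset.prod_congr rfl
    intro k hk
    simp only [Finset.mem_Ico] at hk
    rw [map_add, ← jacobiSum_ringHomComp, ← jacobiSum_ringHomComp,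
      hcomp_pow e he0, hcomp_pow k (by omega), hcomp_pow (2 * n - k) (by omega),
      he, hzpowneg k hk.1 hk.2]
  have hr2 : (∏ k ∈ Ico 1 m,
      (jacobiSum ((Χ ^ e).ringHomComp f2) ((Χ ^ k).ringHomComp f2)
        + jacobiSum ((Χ ^ e).ringHomComp f2) ((Χ ^ (2 * n - k)).ringHomComp f2)))
      = ((r : ℤ) : ZMod p) := by
    have := congrArg f2 hr'
    rw [map_prod, map_intCast] at this
    rw [← this]
    apply Finset.prod_congr rfl
    intro k hk
    rw [map_add, jacobiSum_ringHomComp, jacobiSum_ringHomComp]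
  -- Step 9: evaluate the Jacobi sums
  have hJ : ∀ b : ℕ, 1 ≤ b → b < 2 * n →
      jacobiSum ((Χ ^ e).ringHomComp f2) ((Χ ^ b).ringHomComp f2) = -((b.choose n : ZMod p)) := by
    intro b hb1 hb2
    have hsum : jacobiSum ((Χ ^ e).ringHomComp f2) ((Χ ^ b).ringHomComp f2)
        = ∑ x : ZMod p, x ^ n * (1 - x) ^ b := by
      show (∑ x : ZMod p, ((Χ ^ e).ringHomComp f2) x * ((Χ ^ b).ringHomComp f2) (1 - x))
        = ∑ x : ZMod p, x ^ n * (1 - x) ^ b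
      apply Finset.sum_congr rfl
      intro x _
      rw [hχ₀pow e he0 x, hχ₀pow b (by omega) (1 - x), hxen x]
    rw [hsum]
    exact jacobiEval p n hcard (by omega) (by omega) b hb1 hb2
  have hr3 : ((r : ℤ) : ZMod p)
      = (-1 : ZMod p) ^ (m - 1) * ∏ k ∈ Ico 1 m, ((2 * n - k).choose n : ZMod p) := by
    rw [← hr2]
    have hterm : ∀ k ∈ Ico 1 m,
        (jacobiSum ((Χ ^ e).ringHomComp f2) ((Χ ^ k).ringHomComp f2)
          + jacobiSum ((Χ ^ e).ringHomComp f2) ((Χ ^ (2 * n - k)).ringHomComp f2))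
        = (-1) * (((2 * n - k).choose n : ZMod p)) := by
      intro k hk
      simp only [Finset.mem_Ico] at hk
      rw [hJ k (by omega) (by omega), hJ (2 * n - k) (by omega) (by omega),
        Nat.choose_eq_zero_of_lt (show k < n from by omega)]
      push_cast
      ring
    rw [Finset.prod_congr rfl hterm, Finset.prod_mul_distrib, Finset.prod_const, Nat.card_Ico]
  -- Step 10: conclude with part B
  have hB := partB p n m hcard hn hm
  rw [← hr3] at hB
  have hne0 : ((r : ℤ) : ZMod p) ≠ 0 := hB.2
  rw [legendreSym.eq_one_iff p hne0]
  exact hB.1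
end

section
/- Let q = 2n+1 be an odd prime power and χ_q a generator of the group of multiplicative characters of F_q. For each k with 1 ≤ k ≤ n, set λ_k(χ_q) = Σ_{x ∈ S_q} φ_q(1+x)χ_q^k(x), where S_q is the set of nonzero squares of F_q. Then for each such k, the vector v_k = (χ_q^k(s_1), …, χ_q^k(s_n))ᵀ satisfies A_q v_k = λ_k(χ_q) v_k, the vectors v_1, …, v_n are linearly independent over ℂ, and λ_1(χ_q), …, λ_n(χ_q) are precisely all the eigenvalues of A_q; in particular det A_q = ∏_{k=1}^n λ_k(χ_q). -/
/-!
Write `S` for the nonzero squares. Since the quadratic character `φ` is `1` on `S` and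
multiplication by `s ∈ S` permutes `S`, for every character `ψ`
`∑_{x ∈ S} φ(s + x) ψ(x) = ψ(s) ∑_{x ∈ S} φ(1 + x) ψ(x)`, so `(ψ(s_i))_i` is an eigenvector of
`A_q`. For `ψ = χ^k`, `k = 1, …, n`, these vectors are the columns of
`diag(z) · vandermonde(z)` with `z_i = χ(s_i)`; the `z_i` are distinct and nonzero because a
generator of the character group separates the points of `F_q^×`. Hence this matrix is
invertible and diagonalises `A_q`.
-/

open Finset

open scoped Classical in
/-- `λ_k(χ) = ∑_{x ∈ S_q} φ(1+x) χ^k(x)`, the sum over the nonzero squares `S_q` of `F_q`. -/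
noncomputable def lamSum {F : Type*} [Field F] [Fintype F] (φ χ : MulChar F ℂ) (k : ℕ) : ℂ :=
  ∑ x ∈ Finset.univ.filter (fun x : F => x ≠ 0 ∧ IsSquare x), φ (1 + x) * (χ ^ k) x

namespace MulChar

variable {F R : Type*} [Field F] [CommRing R]

lemma injOn_of_forall_mem_zpowers [Finite F] [Nontrivial R]
    [HasEnoughRootsOfUnity R (Monoid.exponent Fˣ)] {χ : MulChar F R}
    (hχ : ∀ ψ : MulChar F R, ψ ∈ Subgroup.zpowers χ) : Set.InjOn χ {0}ᶜ := by
  intro a ha b hb hab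
  by_contra hne
  have hquot : a * b⁻¹ ≠ 1 := by
    rwa [Ne, mul_inv_eq_one₀ hb]
  obtain ⟨ψ, hψ⟩ := exists_apply_ne_one_of_hasEnoughRootsOfUnity F R hquot
  obtain ⟨m, rfl⟩ := Subgroup.mem_zpowers_iff.mp (hχ ψ)
  set u : Fˣ := Units.mk0 _ (mul_ne_zero ha (inv_ne_zero hb))
  have hu : χ.toUnitHom u = 1 := by
    ext
    rw [coe_toUnitHom, Units.val_mk0, map_mul, hab, ← map_mul, mul_inv_cancel₀ hb, map_one,
      Units.val_one]
  apply hψ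
  rw [show a * b⁻¹ = u from rfl, zpow_apply_coe, ← coe_toUnitHom, map_zpow, hu, one_zpow,
    Units.val_one]

lemma apply_eq_one_of_sq_eq_one {φ : MulChar F R} (hφ : φ ^ 2 = 1) {a : F} (ha : a ≠ 0)
    (hsq : IsSquare a) : φ a = 1 := by
  obtain ⟨b, rfl⟩ := hsq
  have hb : IsUnit b := (left_ne_zero_of_mul ha).isUnit
  rw [map_mul, ← pow_two, ← pow_apply' φ two_ne_zero, hφ, ← hb.unit_spec, one_apply_coe]

end MulChar

section NonzeroSquares

variable (F : Type*) [Field F] [Fintype F]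

open scoped Classical in
noncomputable def nonzeroSquares : Finset F :=
  univ.filter fun x : F => x ≠ 0 ∧ IsSquare x

variable {F}

lemma mem_nonzeroSquares {x : F} : x ∈ nonzeroSquares F ↔ x ≠ 0 ∧ IsSquare x := by
  simp [nonzeroSquares]

lemma sum_nonzeroSquares_mul_left {M : Type*} [AddCommMonoid M] {a : F} (ha : a ≠ 0)
    (hsq : IsSquare a) (f : F → M) :
    ∑ x ∈ nonzeroSquares F, f (a * x) = ∑ x ∈ nonzeroSquares F, f x := by
  refine sum_nbij' (a * ·) (a⁻¹ * ·) ?_ ?_ ?_ ?_ fun _ _ => rfl <;> intro x hx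
  · obtain ⟨hx0, hxsq⟩ := mem_nonzeroSquares.mp hx
    exact mem_nonzeroSquares.mpr ⟨mul_ne_zero ha hx0, hsq.mul hxsq⟩
  · obtain ⟨hx0, hxsq⟩ := mem_nonzeroSquares.mp hx
    exact mem_nonzeroSquares.mpr ⟨mul_ne_zero (inv_ne_zero ha) hx0, hsq.inv.mul hxsq⟩
  · exact inv_mul_cancel_left₀ ha x
  · exact mul_inv_cancel_left₀ ha x

lemma sum_nonzeroSquares_apply_add_mul {R : Type*} [CommRing R] {φ : MulChar F R}
    (hφ : φ ^ 2 = 1) (ψ : MulChar F R) {a : F} (ha : a ≠ 0) (hsq : IsSquare a) :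
    ∑ x ∈ nonzeroSquares F, φ (a + x) * ψ x =
      ψ a * ∑ x ∈ nonzeroSquares F, φ (1 + x) * ψ x := by
  rw [← sum_nonzeroSquares_mul_left ha hsq, mul_sum]
  refine sum_congr rfl fun x _ => ?_
  rw [← mul_one_add, map_mul, map_mul, MulChar.apply_eq_one_of_sq_eq_one hφ ha hsq]
  ring

lemma sum_comp_eq_sum_nonzeroSquares {ι M : Type*} [Fintype ι] [AddCommMonoid M] {s : ι → F}
    (hs : Function.Injective s) (hs' : ∀ x : F, (∃ i, s i = x) ↔ (x ≠ 0 ∧ IsSquare x))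
    (f : F → M) : ∑ i, f (s i) = ∑ x ∈ nonzeroSquares F, f x := by
  have : univ.map ⟨s, hs⟩ = nonzeroSquares F := by
    ext x
    simp [mem_nonzeroSquares, hs']
  rw [← this, sum_map]
  rfl

end NonzeroSquares

lemma mulVec_apply_add_eq_smul {F ι : Type*} [Field F] [Fintype F] [Fintype ι] {φ : MulChar F ℂ}
    (hφ : φ ^ 2 = 1) (ψ : MulChar F ℂ) {s : ι → F} (hs : Function.Injective s)
    (hs' : ∀ x : F, (∃ i, s i = x) ↔ (x ≠ 0 ∧ IsSquare x)) :
    (Matrix.of fun i j : ι => φ (s i + s j)).mulVec (fun i => ψ (s i)) =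
      (∑ x ∈ nonzeroSquares F, φ (1 + x) * ψ x) • (fun i => ψ (s i)) := by
  ext i
  obtain ⟨hs0, hsq⟩ := (hs' (s i)).mp ⟨i, rfl⟩
  rw [Pi.smul_apply, smul_eq_mul, mul_comm, ← sum_nonzeroSquares_apply_add_mul hφ ψ hs0 hsq]
  exact sum_comp_eq_sum_nonzeroSquares hs hs' (fun x => φ (s i + x) * ψ x)

namespace Matrix

variable {ι K : Type*} [Fintype ι] [DecidableEq ι]

lemma mul_eq_mul_diagonal_of_mulVec_col [CommRing K] {A P : Matrix ι ι K} {d : ι → K}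
    (h : ∀ k, A *ᵥ P.col k = d k • P.col k) : A * P = P * diagonal d := by
  ext i k
  rw [mul_diagonal, mul_apply]
  simpa [mulVec, dotProduct, mul_comm] using congrFun (h k) i

lemma det_eq_prod_of_mul_eq_mul_diagonal [CommRing K] {A P : Matrix ι ι K} {d : ι → K}
    (hP : IsUnit P) (h : A * P = P * diagonal d) : A.det = ∏ i, d i := by
  have hdet := congrArg det h
  rw [det_mul, det_mul, det_diagonal, mul_comm] at hdet
  exact ((isUnit_iff_isUnit_det P).mp hP).mul_left_cancel hdet

lemma spectrum_eq_range_of_mul_eq_mul_diagonal [Field K] {A P : Matrix ι ι K} {d : ι → K}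
    (hP : IsUnit P) (h : A * P = P * diagonal d) : spectrum K A = Set.range d := by
  rw [← hP.unit_spec] at h
  rw [← Units.mul_inv_cancel_right A hP.unit, h, spectrum.units_conjugate, spectrum_diagonal]

lemma isUnit_of_pow_succ [Field K] {n : ℕ} {z : Fin n → K} (hz : Function.Injective z)
    (hz0 : ∀ i, z i ≠ 0) : IsUnit (of fun i k : Fin n => z i ^ ((k : ℕ) + 1)) := by
  have hfac : (of fun i k : Fin n => z i ^ ((k : ℕ) + 1)) = diagonal z * vandermonde z := by
    ext i k
    simp [diagonal_mul, vandermonde, pow_succ']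
  rw [hfac, isUnit_iff_isUnit_det, det_mul, det_diagonal, isUnit_iff_ne_zero]
  exact mul_ne_zero (prod_ne_zero_iff.mpr fun i _ => hz0 i) (det_vandermonde_ne_zero_iff.mpr hz)

end Matrix

lemma Fin.prod_univ_add_one_eq_prod_Icc {M : Type*} [CommMonoid M] (f : ℕ → M) (n : ℕ) :
    ∏ k : Fin n, f (k + 1) = ∏ k ∈ Icc 1 n, f k := by
  rw [Fin.prod_univ_eq_prod_range (fun k => f (k + 1)), ← Ico_add_one_right_eq_Icc,
    prod_Ico_eq_prod_range, Nat.add_sub_cancel]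
  simp only [add_comm]

lemma Fin.range_add_one_eq_image_Icc {α : Type*} (f : ℕ → α) (n : ℕ) :
    Set.range (fun k : Fin n => f (k + 1)) = f '' ↑(Icc 1 n) := by
  ext x
  simp only [Set.mem_range, Set.mem_image, coe_Icc, Set.mem_Icc]
  constructor
  · rintro ⟨k, rfl⟩
    exact ⟨k + 1, ⟨by omega, k.isLt⟩, rfl⟩
  · rintro ⟨k, ⟨hk1, hkn⟩, rfl⟩
    exact ⟨⟨k - 1, by omega⟩, by rw [Nat.sub_add_cancel hk1]⟩

theorem stmt_10_general {F : Type*} [Field F] [Fintype F] (n : ℕ)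
    (φ χ : MulChar F ℂ)
    (hφ : φ ^ 2 = 1 ∧ φ ≠ 1)
    (hχ : ∀ ψ : MulChar F ℂ, ψ ∈ Subgroup.zpowers χ)
    (s : Fin n → F)
    (hs : Function.Injective s)
    (hs' : ∀ x : F, (∃ i, s i = x) ↔ (x ≠ 0 ∧ IsSquare x)) :
    (∀ k ∈ Finset.Icc 1 n,
        (Matrix.of fun i j : Fin n => φ (s i + s j)).mulVec (fun i => (χ ^ k) (s i)) =
          lamSum φ χ k • (fun i => (χ ^ k) (s i))) ∧
      LinearIndependent ℂ (fun k : Fin n => (fun i : Fin n => (χ ^ ((k : ℕ) + 1)) (s i))) ∧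
      spectrum ℂ (Matrix.of fun i j : Fin n => φ (s i + s j)) =
        {μ : ℂ | ∃ k ∈ Finset.Icc 1 n, lamSum φ χ k = μ} ∧
      (Matrix.of fun i j : Fin n => φ (s i + s j)).det =
        ∏ k ∈ Finset.Icc 1 n, lamSum φ χ k := by
  -- `lamSum φ χ k` is definitionally the sum over `nonzeroSquares F` in `heig`.
  have heig (k : ℕ) := mulVec_apply_add_eq_smul hφ.1 (χ ^ k) hs hs'
  set P : Matrix (Fin n) (Fin n) ℂ := Matrix.of fun i k : Fin n => (χ ^ ((k : ℕ) + 1)) (s i)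
  have hP : IsUnit P := by
    have hs0 (i : Fin n) : s i ≠ 0 := ((hs' (s i)).mp ⟨i, rfl⟩).1
    have hχs : P = Matrix.of fun i k : Fin n => χ (s i) ^ ((k : ℕ) + 1) := by
      ext i k
      exact MulChar.pow_apply' χ k.val.succ_ne_zero (s i)
    rw [hχs]
    exact Matrix.isUnit_of_pow_succ
      (fun i j hij => hs (MulChar.injOn_of_forall_mem_zpowers hχ (hs0 i) (hs0 j) hij))
      fun i => ((hs0 i).isUnit.map χ).ne_zero
  have hAP := Matrix.mul_eq_mul_diagonal_of_mulVec_col (P := P)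
    (d := fun k : Fin n => lamSum φ χ (k + 1)) fun k => heig (k + 1)
  refine ⟨fun k _ => heig k, Matrix.linearIndependent_cols_iff_isUnit.mpr hP, ?_, ?_⟩
  · rw [Matrix.spectrum_eq_range_of_mul_eq_mul_diagonal hP hAP, Fin.range_add_one_eq_image_Icc]
    rfl
  · rw [Matrix.det_eq_prod_of_mul_eq_mul_diagonal hP hAP, Fin.prod_univ_add_one_eq_prod_Icc]

/-- Let `q = 2n+1` be an odd prime power and `χ` a generator of the group of
multiplicative characters of `F_q`. For `1 ≤ k ≤ n` set `λ_k = ∑_{x ∈ S_q} φ(1+x)χ^k(x)`.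
Then each vector `v_k = (χ^k(s_1), …, χ^k(s_n))ᵀ` satisfies `A_q v_k = λ_k v_k`, the vectors
`v_1, …, v_n` are linearly independent over `ℂ`, the numbers `λ_1, …, λ_n` are precisely all
the eigenvalues of `A_q`, and `det A_q = ∏_{k=1}^n λ_k`. -/
theorem stmt_10 {F : Type*} [Field F] [Fintype F] (n : ℕ)
    (hcard : Fintype.card F = 2 * n + 1)
    (φ χ : MulChar F ℂ)
    (hφ : φ ^ 2 = 1 ∧ φ ≠ 1)
    (hχ : ∀ ψ : MulChar F ℂ, ψ ∈ Subgroup.zpowers χ)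
    (s : Fin n → F)
    (hs : Function.Injective s)
    (hs' : ∀ x : F, (∃ i, s i = x) ↔ (x ≠ 0 ∧ IsSquare x)) :
    (∀ k ∈ Finset.Icc 1 n,
        (Matrix.of fun i j : Fin n => φ (s i + s j)).mulVec (fun i => (χ ^ k) (s i)) =
          lamSum φ χ k • (fun i => (χ ^ k) (s i))) ∧
      LinearIndependent ℂ (fun k : Fin n => (fun i : Fin n => (χ ^ ((k : ℕ) + 1)) (s i))) ∧
      spectrum ℂ (Matrix.of fun i j : Fin n => φ (s i + s j)) =
        {μ : ℂ | ∃ k ∈ Finset.Icc 1 n, lamSum φ χ k = μ} ∧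
      (Matrix.of fun i j : Fin n => φ (s i + s j)).det =
        ∏ k ∈ Finset.Icc 1 n, lamSum φ χ k :=
  stmt_10_general n φ χ hφ hχ s hs hs'
end

section
/- Let q = 2n+1 be an odd prime power and χ_q a generator of the group of multiplicative characters of F_q. Then for every integer k with 1 ≤ k ≤ n, 2·Σ_{x ∈ S_q} φ_q(1+x)χ_q^k(x) = (−1)^k·(J_q(φ_q,χ_q^k) + J_q(φ_q,χ_q^{−k})), where S_q is the set of nonzero squares of F_q. -/
/-!
Since `1 + φ x` is `2` on nonzero squares and `0` on nonsquares, twice the sum over `S_q` is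
`∑ ψ(x) φ(1+x) + ∑ (φψ)(x) φ(1+x)` with `ψ = χ^k`. The shift `x ↦ -x` turns both into Jacobi
sums, and the substitution `x ↦ x / (x - 1)` gives `J(φ, φψ) = φ(-1) J(φ, ψ⁻¹)`. Finally
`ψ(-1) = (-1)^k`, since a generator `χ` of the character group is odd: some character
separates `-1` from `1`.
-/

open Finset

lemma MulChar.apply_neg_one_mul_self_s11 {F R : Type*} [CommRing F] [CommRing R] (χ : MulChar F R) :
    χ (-1) * χ (-1) = 1 := by
  rw [← map_mul, neg_mul_neg, mul_one, map_one]

section JacobiSum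

variable {F R : Type*} [Field F] [Fintype F] [CommRing R]

lemma sum_apply_mul_apply_one_add (γ δ : MulChar F R) :
    ∑ x : F, γ x * δ (1 + x) = γ (-1) * jacobiSum γ δ := by
  rw [jacobiSum, mul_sum]
  refine Fintype.sum_equiv (Equiv.neg F) _ _ fun x => ?_
  rw [Equiv.neg_apply, sub_neg_eq_add, ← mul_assoc, ← map_mul, neg_one_mul, neg_neg]

-- Substitute `x ↦ x / (x - 1) = -(x * (1 - x)⁻¹)`, an involution of `F \ {0, 1}`;
-- then `1 - x / (x - 1) = (1 - x)⁻¹`.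
lemma jacobiSum_eq_apply_neg_one_mul_jacobiSum_inv_mul (α β : MulChar F R) :
    jacobiSum α β = α (-1) * jacobiSum α (α * β)⁻¹ := by
  classical
  rw [jacobiSum_eq_sum_sdiff, jacobiSum_eq_sum_sdiff, mul_sum]
  have hmem : ∀ x ∈ (univ \ {0, 1} : Finset F), x ≠ 0 ∧ 1 - x ≠ 0 := fun x hx => by
    simp only [mem_sdiff, mem_univ, mem_insert, mem_singleton, not_or, true_and] at hx
    exact ⟨hx.1, sub_ne_zero.mpr (Ne.symm hx.2)⟩
  have hσ : ∀ x ∈ (univ \ {0, 1} : Finset F), -(x * (1 - x)⁻¹) ∈ (univ \ {0, 1} : Finset F) :=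
    fun x hx => by
    obtain ⟨hx0, hx1⟩ := hmem x hx
    simp only [mem_sdiff, mem_univ, mem_insert, mem_singleton, not_or, true_and]
    refine ⟨by simp [hx0, hx1], fun h => ?_⟩
    field_simp at h
    exact one_ne_zero (by linear_combination -h : (1 : F) = 0)
  refine sum_nbij' (fun x => -(x * (1 - x)⁻¹)) (fun x => -(x * (1 - x)⁻¹)) hσ hσ
    (fun x hx => ?_) (fun x hx => ?_) (fun x hx => ?_)
  · obtain ⟨hx0, hx1⟩ := hmem x hx
    field_simp
    ring
  · obtain ⟨hx0, hx1⟩ := hmem x hx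
    field_simp
    ring
  · obtain ⟨hx0, hx1⟩ := hmem x hx
    have h1 : 1 - -(x * (1 - x)⁻¹) = (1 - x)⁻¹ := by field_simp; ring
    have hinv : α (1 - x)⁻¹ * α (1 - x) = 1 := by rw [← map_mul, inv_mul_cancel₀ hx1, map_one]
    rw [h1, MulChar.inv_apply', inv_inv, MulChar.mul_apply, neg_eq_neg_one_mul (x * _), map_mul,
      map_mul]
    linear_combination (-(α x * β (1 - x)) * (α (-1) * α (-1) * hinv + α.apply_neg_one_mul_self_s11))

end JacobiSum

lemma FiniteField.isSquare_div_of_not_isSquare {F : Type*} [Field F] [Fintype F] {a b : F}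
    (ha : ¬IsSquare a) (hb : ¬IsSquare b) : IsSquare (a / b) := by
  classical
  have ha0 : a ≠ 0 := by rintro rfl; exact ha IsSquare.zero
  have hb0 : b ≠ 0 := by rintro rfl; exact hb IsSquare.zero
  rw [← quadraticChar_one_iff_isSquare (div_ne_zero ha0 hb0)]
  have h := congrArg (quadraticChar F) (div_mul_cancel₀ a hb0)
  rw [map_mul, quadraticChar_neg_one_iff_not_isSquare.mpr ha,
    quadraticChar_neg_one_iff_not_isSquare.mpr hb] at h
  linarith

namespace MulChar

variable {F R : Type*} [Field F] [CommRing R] {φ : MulChar F R}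

lemma apply_eq_one_of_isSquare (hφ : φ ^ 2 = 1) {x : F} (hx0 : x ≠ 0) (hx : IsSquare x) :
    φ x = 1 := by
  obtain ⟨t, rfl⟩ := hx
  have ht : t ≠ 0 := by rintro rfl; simp at hx0
  rw [map_mul, ← sq, ← φ.pow_apply' two_ne_zero, hφ, one_apply (isUnit_iff_ne_zero.mpr ht)]

variable [Fintype F] [IsDomain R]

-- The nonsquares form a single coset of the squares, so `φ` is `1` on all of them or on none.
lemma apply_eq_neg_one_of_not_isSquare (hφ : φ ^ 2 = 1) (hφ1 : φ ≠ 1) {x : F}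
    (hx : ¬IsSquare x) : φ x = -1 := by
  have hx0 : x ≠ 0 := by rintro rfl; exact hx IsSquare.zero
  refine (mul_self_eq_one_iff.mp ?_).resolve_left fun h1 => hφ1 (ext fun a => ?_)
  · rw [← map_mul]
    exact apply_eq_one_of_isSquare hφ (mul_ne_zero hx0 hx0) ⟨x, rfl⟩
  rw [one_apply_coe]
  by_cases ha : IsSquare (a : F)
  · exact apply_eq_one_of_isSquare hφ a.ne_zero ha
  · rw [← div_mul_cancel₀ (a : F) hx0, map_mul, h1, mul_one]
    exact apply_eq_one_of_isSquare hφ (div_ne_zero a.ne_zero hx0)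
      (FiniteField.isSquare_div_of_not_isSquare ha hx)

open scoped Classical in
lemma sum_one_add_apply_mul (hφ : φ ^ 2 = 1) (hφ1 : φ ≠ 1) {f : F → R} (hf : f 0 = 0) :
    ∑ x : F, (1 + φ x) * f x = 2 * ∑ x ∈ univ.filter (fun x : F => x ≠ 0 ∧ IsSquare x), f x := by
  rw [← sum_filter_add_sum_filter_not univ (fun x : F => x ≠ 0 ∧ IsSquare x), mul_sum]
  have hnonsq : ∑ x ∈ univ.filter (fun x : F => ¬(x ≠ 0 ∧ IsSquare x)), (1 + φ x) * f x = 0 := by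
    refine sum_eq_zero fun x hx => ?_
    rw [mem_filter, not_and_or, not_not] at hx
    rcases hx.2 with rfl | hns
    · rw [hf, mul_zero]
    · rw [apply_eq_neg_one_of_not_isSquare hφ hφ1 hns, add_neg_cancel, zero_mul]
  rw [hnonsq, add_zero]
  refine sum_congr rfl fun x hx => ?_
  rw [mem_filter] at hx
  rw [apply_eq_one_of_isSquare hφ hx.2.1 hx.2.2, one_add_one_eq_two]

open scoped Classical in
theorem two_mul_sum_nonzero_squares_eq_jacobiSum_add (hφ : φ ^ 2 = 1) (hφ1 : φ ≠ 1)
    (ψ : MulChar F R) :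
    2 * ∑ x ∈ univ.filter (fun x : F => x ≠ 0 ∧ IsSquare x), φ (1 + x) * ψ x =
      ψ (-1) * (jacobiSum φ ψ + jacobiSum φ ψ⁻¹) := by
  have hinv : (φ * (φ * ψ))⁻¹ = ψ⁻¹ := by rw [← mul_assoc, ← sq, hφ, one_mul]
  calc 2 * ∑ x ∈ univ.filter (fun x : F => x ≠ 0 ∧ IsSquare x), φ (1 + x) * ψ x
      = ∑ x : F, (1 + φ x) * (φ (1 + x) * ψ x) :=
        (sum_one_add_apply_mul hφ hφ1 (by rw [ψ.map_zero, mul_zero])).symm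
    _ = ∑ x : F, ψ x * φ (1 + x) + ∑ x : F, (φ * ψ) x * φ (1 + x) := by
        rw [← sum_add_distrib]
        exact sum_congr rfl fun x _ => by rw [mul_apply]; ring
    _ = ψ (-1) * jacobiSum φ ψ + (φ (-1) * ψ (-1)) * (φ (-1) * jacobiSum φ ψ⁻¹) := by
        rw [sum_apply_mul_apply_one_add, sum_apply_mul_apply_one_add, jacobiSum_comm ψ,
          jacobiSum_comm (φ * ψ), jacobiSum_eq_apply_neg_one_mul_jacobiSum_inv_mul φ (φ * ψ),
          hinv, mul_apply]
    _ = ψ (-1) * (jacobiSum φ ψ + jacobiSum φ ψ⁻¹) := by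
        linear_combination (ψ (-1) * jacobiSum φ ψ⁻¹) * φ.apply_neg_one_mul_self_s11

variable [HasEnoughRootsOfUnity R (Monoid.exponent Fˣ)]

lemma apply_neg_one_eq_neg_one_of_forall_mem_zpowers {χ : MulChar F R}
    (hχ : ∀ ψ : MulChar F R, ψ ∈ Subgroup.zpowers χ) (h : (-1 : F) ≠ 1) : χ (-1) = -1 := by
  refine (mul_self_eq_one_iff.mp χ.apply_neg_one_mul_self_s11).resolve_left fun h1 => ?_
  -- `ψ ↦ ψ (-1)` is a homomorphism; if it killed `χ` it would kill every character.
  let ev : MulChar F R →* Rˣ := (MonoidHom.eval (-1 : Fˣ)).comp mulEquivToUnitHom.toMonoidHom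
  have hev : ∀ ψ : MulChar F R, (ev ψ : R) = ψ (-1) := fun ψ => by
    simp [ev, coe_equivToUnitHom]
  obtain ⟨ψ, hψ⟩ := exists_apply_ne_one_of_hasEnoughRootsOfUnity F R h
  have hker : χ ∈ ev.ker := Units.ext (by rw [hev, h1, Units.val_one])
  exact hψ (by rw [← hev, Subgroup.zpowers_le.mpr hker (hχ ψ), Units.val_one])

end MulChar

open scoped Classical in
/-- Let `q = 2n+1` be an odd prime power and `χ` a generator of the group of
multiplicative characters of `F_q`. Then for every `1 ≤ k ≤ n`,
`2·∑_{x ∈ S_q} φ(1+x)χ^k(x) = (-1)^k·(J_q(φ,χ^k) + J_q(φ,χ^{-k}))`,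
where `S_q` is the set of nonzero squares of `F_q`. -/
theorem stmt_11 {F : Type*} [Field F] [Fintype F] (n : ℕ)
    (hcard : Fintype.card F = 2 * n + 1)
    (φ χ : MulChar F ℂ)
    (hφ : φ ^ 2 = 1 ∧ φ ≠ 1)
    (hχ : ∀ ψ : MulChar F ℂ, ψ ∈ Subgroup.zpowers χ) :
    ∀ k ∈ Finset.Icc 1 n,
      2 * ∑ x ∈ Finset.univ.filter (fun x : F => x ≠ 0 ∧ IsSquare x), φ (1 + x) * (χ ^ k) x =
        (-1) ^ k * (jacobiSum φ (χ ^ k) + jacobiSum φ (χ ^ (-(k : ℤ)))) := by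
  intro k _
  have hchar : ringChar F ≠ 2 := fun h => by
    have := FiniteField.even_card_of_char_two h
    omega
  have hχ1 : χ (-1) = -1 :=
    χ.apply_neg_one_eq_neg_one_of_forall_mem_zpowers hχ (Ring.neg_one_ne_one_of_char_ne_two hchar)
  have hχk : (χ ^ k) (-1) = (-1) ^ k := by
    simpa [hχ1] using χ.pow_apply_coe k (-1)
  rw [MulChar.two_mul_sum_nonzero_squares_eq_jacobiSum_add hφ.1 hφ.2, hχk, zpow_neg, zpow_natCast]
end

section
/- Let m be a positive odd integer and a ∈ ℤ with gcd(a,m) = 1. Then the Jacobi symbol (a/m) satisfies (a/m) = (−1)^{N}, where N = #{k ∈ ℤ : 0 < k < m/2 and {ak}_m > m/2}; moreover (a/m) = (−1)^{K_a}, where K_a = Σ_{0<k<m/2} ⌊2ak/m⌋. -/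
/-!
Write `G_m(a) = ∏_{0 < k < m/2} ε(a k)`, where `ε(x) = -1` exactly when the least non-negative
residue of `x` exceeds `m/2`; it is `(-1)^N`. For a unit `b`, folding the residues `b k` into
`[1, m/2]` permutes the half system, which makes `G_m` multiplicative. A direct count gives
`G_m(2) = χ₈(m) = (2/m)`. For odd `A`, reading `A k = m ⌊A k/m⌋ + {A k}_m` modulo `2` shows
`G_m(A) = (-1)^{∑ ⌊k A/m⌋}`, and counting lattice points on either side of the diagonal of the
rectangle `(0, m/2) × (0, A/2)` turns this into `G_m(A) G_A(m) = (-1)^{(m-1)/2 · (A-1)/2}`.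
So `G_m` obeys the rules that compute the Jacobi symbol (reduction mod `m`, multiplicativity, the
supplement at `2`, reciprocity), and induction on the numerator gives `(a/m) = G_m(a)`.
The floor-sum form follows from `⌊2ak/m⌋ = 2⌊ak/m⌋ + [{ak}_m > m/2]`.
-/

open Finset

lemma Nat.mul_div_eq_card_filter_Ico {p q x : ℕ} (hp : 0 < p) (hx : x ≤ p / 2) :
    x * q / p = #{y ∈ Ico 1 (q / 2 + 1) | y * p ≤ x * q} :=
  ZMod.div_eq_filter_card hp <| calc
    x * q / p ≤ p / 2 * q / p := by gcongr
    _ ≤ q / 2 := Nat.div_mul_div_le_div _ _ _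

lemma Nat.sum_Ico_mul_div_add_sum_Ico_mul_div {p q : ℕ} (hp : 0 < p) (hq : 0 < q)
    (hpq : p.Coprime q) :
    ∑ x ∈ Ico 1 (p / 2 + 1), x * q / p + ∑ y ∈ Ico 1 (q / 2 + 1), y * p / q =
      p / 2 * (q / 2) := by
  have hne : ∀ x ∈ Ico 1 (p / 2 + 1), ∀ y, x * q ≠ y * p := by
    intro x hx y h
    have hx := mem_Ico.mp hx
    have := Nat.le_of_dvd (by omega) (hpq.dvd_of_dvd_mul_right ⟨y, h.trans (mul_comm y p)⟩)
    omega
  have hone : ∀ x ∈ Ico 1 (p / 2 + 1), ∀ y ∈ Ico 1 (q / 2 + 1),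
      ((if y * p ≤ x * q then 1 else 0) + if x * q ≤ y * p then 1 else 0) = 1 := by
    intro x hx y _
    have := hne x hx y
    split_ifs <;> omega
  have hcount : ∀ {r s : ℕ}, 0 < r → ∀ x ∈ Ico 1 (r / 2 + 1),
      x * s / r = ∑ y ∈ Ico 1 (s / 2 + 1), if y * r ≤ x * s then 1 else 0 := fun hr x hx => by
    rw [Nat.mul_div_eq_card_filter_Ico hr (Nat.le_of_lt_succ (mem_Ico.mp hx).2), card_filter]
  rw [sum_congr rfl (hcount hp), sum_congr rfl (hcount hq), sum_comm (s := Ico 1 (q / 2 + 1)),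
    ← sum_add_distrib,
    sum_congr rfl fun x hx => (sum_add_distrib).symm.trans (sum_congr rfl (hone x hx))]
  simp

lemma Int.two_mul_ediv_natCast_of_odd {m : ℕ} (hm : Odd m) (x : ℤ) :
    2 * x / m = 2 * (x / m) + if (m : ℤ) < 2 * (x % m) then 1 else 0 := by
  have hm0 : (0 : ℤ) < m := by exact_mod_cast hm.pos
  have hdiv := Int.emod_add_mul_ediv x m
  have hlo := Int.emod_nonneg x hm0.ne'
  have hhi := Int.emod_lt_of_pos x hm0
  have hm2 := Nat.odd_iff.mp hm
  split_ifs with h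
  · refine ((Int.ediv_emod_unique (r := 2 * (x % m) - m) hm0).mpr ⟨?_, by omega, by omega⟩).1
    linear_combination 2 * hdiv
  · refine ((Int.ediv_emod_unique (r := 2 * (x % m)) hm0).mpr ⟨?_, by omega, by omega⟩).1
    linear_combination 2 * hdiv

namespace ZMod

variable {m : ℕ}

def halfSign (x : ZMod m) : ℤ := if x.val ≤ m / 2 then 1 else -1

lemma halfSign_neg (hm : Odd m) {x : ZMod m} (hx : x ≠ 0) : halfSign (-x) = -halfSign x := by
  have : NeZero m := ⟨hm.pos.ne'⟩
  have hval : x.val ≠ 0 := (val_ne_zero x).mpr hx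
  have hlt := val_lt x
  obtain ⟨t, rfl⟩ := hm
  unfold halfSign
  rw [neg_val, if_neg hx]
  split_ifs <;> omega

lemma halfSign_mul_natAbs_valMinAbs (hm : Odd m) {c x : ZMod m} (hcx : c * x ≠ 0) :
    halfSign (c * x) = halfSign (c * (x.valMinAbs.natAbs : ZMod m)) * halfSign x := by
  have : NeZero m := ⟨hm.pos.ne'⟩
  rw [natCast_natAbs_valMinAbs]
  by_cases hx : x.val ≤ m / 2
  · simp [halfSign, hx]
  · rw [if_neg hx, mul_neg, halfSign_neg hm hcx]
    simp [halfSign, hx]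

lemma natAbs_valMinAbs_mul_natAbs_valMinAbs [NeZero m] (c x : ZMod m) :
    (c * (x.valMinAbs.natAbs : ZMod m)).valMinAbs.natAbs = (c * x).valMinAbs.natAbs := by
  rw [natCast_natAbs_valMinAbs]
  split_ifs
  · rfl
  · rw [mul_neg, natAbs_valMinAbs_neg]

lemma natCast_ne_zero_of_mem_Ico [NeZero m] {k : ℕ} (hk : k ∈ Ico 1 (m / 2 + 1)) :
    (k : ZMod m) ≠ 0 := by
  rw [mem_Ico] at hk
  rw [Ne, natCast_eq_zero_iff]
  exact fun h => (Nat.le_of_dvd (by omega) h).not_gt (by have := NeZero.pos m; omega)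

lemma natAbs_valMinAbs_mem_Ico [NeZero m] {x : ZMod m} (hx : x ≠ 0) :
    x.valMinAbs.natAbs ∈ Ico 1 (m / 2 + 1) := by
  have h1 : x.valMinAbs.natAbs ≠ 0 := by rwa [Int.natAbs_ne_zero, Ne, valMinAbs_eq_zero]
  have h2 := natAbs_valMinAbs_le x
  rw [mem_Ico]
  omega

@[to_additive]
lemma prod_Ico_comp_natAbs_valMinAbs {M : Type*} [CommMonoid M] [NeZero m] {b : ZMod m}
    (hb : IsUnit b) (f : ℕ → M) :
    ∏ k ∈ Ico 1 (m / 2 + 1), f (b * k).valMinAbs.natAbs = ∏ k ∈ Ico 1 (m / 2 + 1), f k := by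
  obtain ⟨u, rfl⟩ := hb
  have hmem : ∀ (v : (ZMod m)ˣ) k, k ∈ Ico 1 (m / 2 + 1) →
      (v * k : ZMod m).valMinAbs.natAbs ∈ Ico 1 (m / 2 + 1) := fun v k hk =>
    natAbs_valMinAbs_mem_Ico ((Units.mul_right_eq_zero v).not.mpr (natCast_ne_zero_of_mem_Ico hk))
  have hinv : ∀ (v : (ZMod m)ˣ) k, k ∈ Ico 1 (m / 2 + 1) →
      (v⁻¹ * ((v * k : ZMod m).valMinAbs.natAbs : ZMod m)).valMinAbs.natAbs = k := by
    intro v k hk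
    rw [natAbs_valMinAbs_mul_natAbs_valMinAbs, Units.inv_mul_cancel_left,
      valMinAbs_natCast_of_le_half (by rw [mem_Ico] at hk; omega), Int.natAbs_natCast]
  exact prod_nbij' _ (fun k => (u⁻¹ * k : ZMod m).valMinAbs.natAbs) (hmem u) (hmem u⁻¹)
    (hinv u) (by simpa using hinv u⁻¹) fun _ _ => rfl

def gaussSign (a : ZMod m) : ℤ := ∏ k ∈ Ico 1 (m / 2 + 1), halfSign (a * ((k : ℕ) : ZMod m))

lemma gaussSign_eq_neg_one_pow (a : ZMod m) :
    gaussSign a = (-1) ^ #{k ∈ Ico 1 (m / 2 + 1) | m / 2 < (a * (k : ℕ)).val} := by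
  simp only [gaussSign, halfSign, prod_ite, prod_const_one, prod_const, one_mul, not_le]

lemma gaussSign_mul_self (a : ZMod m) : gaussSign a * gaussSign a = 1 := by
  rw [gaussSign_eq_neg_one_pow, ← pow_add, ← two_mul, pow_mul, neg_one_sq, one_pow]

lemma gaussSign_mul (hm : Odd m) {a b : ZMod m} (ha : IsUnit a) (hb : IsUnit b) :
    gaussSign (a * b) = gaussSign a * gaussSign b := by
  have : NeZero m := ⟨hm.pos.ne'⟩
  have hfactor : ∀ k ∈ Ico 1 (m / 2 + 1), halfSign (a * b * ((k : ℕ) : ZMod m)) =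
      halfSign (a * ((b * k : ZMod m).valMinAbs.natAbs : ZMod m)) *
        halfSign (b * (k : ZMod m)) := by
    intro k hk
    rw [mul_assoc]
    refine halfSign_mul_natAbs_valMinAbs hm ?_
    rw [Ne, ha.mul_right_eq_zero, hb.mul_right_eq_zero]
    exact natCast_ne_zero_of_mem_Ico hk
  rw [gaussSign, prod_congr rfl hfactor, prod_mul_distrib,
    prod_Ico_comp_natAbs_valMinAbs hb fun j => halfSign (a * (j : ZMod m))]
  rfl

lemma gaussSign_two (hm : Odd m) : gaussSign (2 : ZMod m) = χ₈ m := by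
  have hfilter : {k ∈ Ico 1 (m / 2 + 1) | m / 2 < ((2 : ZMod m) * (k : ℕ)).val} =
      Ico (m / 4 + 1) (m / 2 + 1) := by
    ext k
    have hval : ((2 : ZMod m) * k).val = 2 * k % m := by
      rw [← val_natCast, Nat.cast_mul, Nat.cast_ofNat]
    obtain ⟨t, rfl⟩ := hm
    simp only [mem_filter, mem_Ico, hval]
    constructor
    · rintro ⟨⟨hk1, hk2⟩, hc⟩
      rw [Nat.mod_eq_of_lt (by omega)] at hc
      omega
    · rintro ⟨hk1, hk2⟩
      rw [Nat.mod_eq_of_lt (by omega)]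
      omega
  have hparity : Even (m / 2 - m / 4) ↔ m % 8 = 1 ∨ m % 8 = 7 := by
    have := Nat.odd_iff.mp hm
    rw [Nat.even_iff]
    omega
  rw [gaussSign_eq_neg_one_pow, hfilter, Nat.card_Ico, Nat.add_sub_add_right,
    χ₈_nat_eq_if_mod_eight,
    if_neg (by have := Nat.odd_iff.mp hm; omega)]
  split_ifs with h
  · exact (hparity.mpr h).neg_one_pow
  · exact (Nat.not_even_iff_odd.mp (hparity.not.mpr h)).neg_one_pow

lemma natCast_val_eq_natAbs_valMinAbs_add (hm : Odd m) (x : ZMod m) :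
    (x.val : ZMod 2) = (x.valMinAbs.natAbs : ZMod 2) + if m / 2 < x.val then 1 else 0 := by
  have : NeZero m := ⟨hm.pos.ne'⟩
  have hlt := val_lt x
  rw [valMinAbs_def_pos]
  split_ifs with hle hgt hgt
  · omega
  · rw [Int.natAbs_natCast, add_zero]
  · have hnatAbs : ((x.val : ℤ) - m).natAbs + 1 = m - x.val + 1 := by omega
    rw [← Nat.cast_one, ← Nat.cast_add, hnatAbs, natCast_eq_natCast_iff']
    obtain ⟨t, rfl⟩ := hm
    omega
  · omega

lemma gaussSign_natCast_eq_neg_one_pow_sum (hm : Odd m) {A : ℕ} (hA : Odd A)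
    (hAm : IsUnit (A : ZMod m)) :
    gaussSign (A : ZMod m) = (-1) ^ ∑ k ∈ Ico 1 (m / 2 + 1), k * A / m := by
  have : NeZero m := ⟨hm.pos.ne'⟩
  have hA2 : (A : ZMod 2) = 1 := natCast_eq_one_iff_odd.mpr hA
  have hm2 : (m : ZMod 2) = 1 := natCast_eq_one_iff_odd.mpr hm
  have hterm : ∀ k ∈ Ico 1 (m / 2 + 1), (k : ZMod 2) = ((k * A / m : ℕ) : ZMod 2) +
      (((A : ZMod m) * k).valMinAbs.natAbs : ZMod 2) +
      if m / 2 < ((A : ZMod m) * k).val then 1 else 0 := by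
    intro k _
    have hval : ((A : ZMod m) * k).val = k * A % m := by
      rw [← Nat.cast_mul, val_natCast, mul_comm]
    rw [add_assoc, ← natCast_val_eq_natAbs_valMinAbs_add hm, hval]
    conv_lhs =>
      rw [← mul_one (k : ZMod 2), ← hA2, ← Nat.cast_mul, ← Nat.div_add_mod (k * A) m]
    push_cast
    rw [hm2, one_mul]
  have hsum := sum_congr rfl hterm
  rw [sum_add_distrib, sum_add_distrib, sum_boole,
    sum_Ico_comp_natAbs_valMinAbs hAm fun j => (j : ZMod 2)] at hsum
  rw [gaussSign_eq_neg_one_pow]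
  apply neg_one_pow_congr
  rw [← natCast_eq_zero_iff_even, ← natCast_eq_zero_iff_even, Nat.cast_sum]
  have hchar2 : ∀ x y z : ZMod 2, x = y + x + z → (z = 0 ↔ y = 0) := by decide
  exact hchar2 _ _ _ hsum

lemma gaussSign_mul_gaussSign {A : ℕ} (hm : Odd m) (hA : Odd A) (hAm : A.Coprime m) :
    gaussSign (A : ZMod m) * gaussSign (m : ZMod A) = (-1) ^ (m / 2 * (A / 2)) := by
  rw [gaussSign_natCast_eq_neg_one_pow_sum hm hA ((isUnit_iff_coprime A m).mpr hAm),
    gaussSign_natCast_eq_neg_one_pow_sum hA hm ((isUnit_iff_coprime m A).mpr hAm.symm),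
    ← pow_add, Nat.sum_Ico_mul_div_add_sum_Ico_mul_div hm.pos hA.pos hAm.symm]

end ZMod

open ZMod in
lemma jacobiSym_natCast_eq_gaussSign (B : ℕ) :
    ∀ {m : ℕ}, Odd m → IsUnit (B : ZMod m) → jacobiSym B m = gaussSign (B : ZMod m) := by
  induction B using Nat.strong_induction_on with
  | _ B ih =>
  intro m hm hB
  have hmod : ∀ {b n : ℕ}, Odd n → IsUnit (b : ZMod n) → b % n < B →
      jacobiSym b n = gaussSign (b : ZMod n) := by
    intro b n hn hb hlt
    rw [jacobiSym.mod_left, ← natCast_mod b n, ← Int.natCast_mod]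
    rw [← natCast_mod b n] at hb
    exact ih _ hlt hn hb
  rcases eq_or_ne m 1 with rfl | hm1
  · simp [gaussSign]
  rcases Nat.even_or_odd B with ⟨C, rfl⟩ | hBodd
  · have hC0 : C ≠ 0 := by
      rintro rfl
      rw [isUnit_iff_coprime, Nat.coprime_zero_left] at hB
      exact hm1 hB
    rw [← two_mul] at hB ⊢
    push_cast at hB ⊢
    rw [jacobiSym.mul_left, jacobiSym.at_two hm, ← gaussSign_two hm,
      ih C (by omega) hm (isUnit_of_mul_isUnit_right hB),
      gaussSign_mul hm (isUnit_of_mul_isUnit_left hB) (isUnit_of_mul_isUnit_right hB)]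
  rcases le_or_gt m B with hmB | hBm
  · exact hmod hm hB ((Nat.mod_lt B hm.pos).trans_le hmB)
  · have hBm' := (isUnit_iff_coprime B m).mp hB
    have hmB : IsUnit (m : ZMod B) := (isUnit_iff_coprime m B).mpr hBm'.symm
    have hrec := gaussSign_mul_gaussSign hm hBodd hBm'
    rw [jacobiSym.quadratic_reciprocity hBodd hm, hmod hBodd hmB (Nat.mod_lt m hBodd.pos),
      mul_comm (B / 2)]
    linear_combination (-gaussSign (m : ZMod B)) * hrec +
      gaussSign (B : ZMod m) * gaussSign_mul_self (m : ZMod B)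

lemma jacobiSym_eq_gaussSign {m : ℕ} (hm : Odd m) {a : ℤ} (ha : IsCoprime a m) :
    jacobiSym a m = ZMod.gaussSign (a : ZMod m) := by
  have : NeZero m := ⟨hm.pos.ne'⟩
  have hval : ((a : ZMod m).val : ZMod m) = a := ZMod.natCast_zmod_val _
  have hunit : IsUnit ((a : ZMod m).val : ZMod m) := by
    rw [hval, ZMod.coe_int_isUnit_iff_isCoprime]
    exact ha.symm
  rw [jacobiSym.mod_left' (a₂ := (a : ZMod m).val) (by rw [ZMod.val_intCast, Int.emod_emod]),
    jacobiSym_natCast_eq_gaussSign _ hm hunit, hval]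

lemma jacobiSym_eq_neg_one_pow_card {m : ℕ} (hm : Odd m) {a : ℤ} (ha : IsCoprime a m) :
    jacobiSym a m = (-1) ^ #{k ∈ Ico 1 (m / 2 + 1) | (m : ℤ) < 2 * (a * (k : ℕ) % m)} := by
  have : NeZero m := ⟨hm.pos.ne'⟩
  rw [jacobiSym_eq_gaussSign hm ha, ZMod.gaussSign_eq_neg_one_pow]
  refine congrArg _ (congrArg card (filter_congr fun k _ => ?_))
  have hval : (((a : ZMod m) * (k : ZMod m)).val : ℤ) = a * k % m := by
    rw [← ZMod.val_intCast]
    push_cast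
    rfl
  omega

theorem stmt_12_general (m : ℕ) (hodd : Odd m) (a : ℤ) (ha : IsCoprime a (m : ℤ)) :
    jacobiSym a m =
      (-1 : ℤ) ^
        ((Finset.range m).filter
          (fun k => 0 < k ∧ 2 * k < m ∧ (m : ℤ) < 2 * ((a * k) % (m : ℤ)))).card ∧
    jacobiSym a m =
      (((-1 : ℤˣ) ^
        (∑ k ∈ (Finset.range m).filter (fun k => 0 < k ∧ 2 * k < m),
          Int.fdiv (2 * a * k) m) : ℤˣ) : ℤ) := by
  have hhalf : (range m).filter (fun k => 0 < k ∧ 2 * k < m) = Ico 1 (m / 2 + 1) := by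
    ext k
    simp only [mem_filter, mem_range, mem_Ico]
    have := Nat.odd_iff.mp hodd
    omega
  have hJ := jacobiSym_eq_neg_one_pow_card hodd ha
  simp only [← and_assoc, ← filter_filter, hhalf]
  refine ⟨hJ, ?_⟩
  have hfdiv : ∀ k ∈ Ico 1 (m / 2 + 1), Int.fdiv (2 * a * k) m =
      2 * (a * k / m) + if (m : ℤ) < 2 * (a * k % m) then 1 else 0 := fun k _ => by
    rw [Int.fdiv_eq_ediv_of_nonneg _ (Int.natCast_nonneg m), mul_assoc,
      Int.two_mul_ediv_natCast_of_odd hodd]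
  rw [sum_congr rfl hfdiv, sum_add_distrib, ← mul_sum, sum_boole, zpow_add,
    zpow_mul, show (-1 : ℤˣ) ^ (2 : ℤ) = 1 by rfl, one_zpow, one_mul, zpow_natCast, hJ,
    Units.val_pow_eq_pow_val, Units.val_neg, Units.val_one]

/-- **Jenkins' generalization of Gauss' lemma.** Let `m` be a positive odd
integer and `a ∈ ℤ` with `gcd(a,m) = 1`. Then the Jacobi symbol `(a/m)` equals `(-1)^N`, where
`N = #{k : 0 < k < m/2, {ak}_m > m/2}`, and moreover `(a/m) = (-1)^{K_a}` with
`K_a = ∑_{0<k<m/2} ⌊2ak/m⌋`. -/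
theorem stmt_12 (m : ℕ) (hm : 0 < m) (hodd : Odd m) (a : ℤ) (ha : IsCoprime a (m : ℤ)) :
    jacobiSym a m =
      (-1 : ℤ) ^
        ((Finset.range m).filter
          (fun k => 0 < k ∧ 2 * k < m ∧ (m : ℤ) < 2 * ((a * k) % (m : ℤ)))).card ∧
    jacobiSym a m =
      (((-1 : ℤˣ) ^
        (∑ k ∈ (Finset.range m).filter (fun k => 0 < k ∧ 2 * k < m),
          Int.fdiv (2 * a * k) m) : ℤˣ) : ℤ) :=
  stmt_12_general m hodd a ha
end

section
/- Let q = 2n+1 ≡ 3 (mod 4) be an odd prime power. Then for any integer a with 0 < a < q and gcd(a, q−1) = 1, the cardinality #{k ∈ ℤ : 0 < k < n/2 and n/2 < {ak}_{2n} < 3n/2} is even. -/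
open Finset

/-- Let `q = 2n+1 ≡ 3 (mod 4)` be an odd prime power. Then for any integer
`a` with `0 < a < q` and `gcd(a, q-1) = 1`, the number of integers `k` with `0 < k < n/2` and
`n/2 < {ak}_{2n} < 3n/2` is even. -/
theorem stmt_14 (q n : ℕ) (hq : IsPrimePow q) (hn : q = 2 * n + 1) (h4 : q % 4 = 3)
    (a : ℕ) (ha0 : 0 < a) (haq : a < q) (ha : Nat.gcd a (q - 1) = 1) :
    Even (((Finset.range n).filter
      (fun k => 0 < k ∧ 2 * k < n ∧
        n < 2 * ((a * k) % (2 * n)) ∧ 2 * ((a * k) % (2 * n)) < 3 * n)).card) := by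
  have hn1 : n % 2 = 1 := by omega
  have hq1 : q - 1 = 2 * n := by omega
  rw [hq1] at ha
  have hco2n : Nat.Coprime a (2 * n) := ha
  have hcon : Nat.Coprime a n := hco2n.coprime_dvd_right ⟨2, by ring⟩
  have haodd : a % 2 = 1 := by
    have h2 : Nat.Coprime a 2 := hco2n.coprime_dvd_right ⟨n, rfl⟩
    rcases Nat.even_or_odd a with he | ho
    · exfalso
      have : (2 : ℕ) ∣ Nat.gcd a 2 := Nat.dvd_gcd he.two_dvd ⟨1, rfl⟩
      omega
    · exact Nat.odd_iff.mp ho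
  set m := (n - 1) / 2 with hm
  have hnm : n = 2 * m + 1 := by omega
  have hsn : ∀ k, (a * k) % n < n := fun k => Nat.mod_lt _ (by omega)
  have hs1 : ∀ k ∈ Finset.Icc 1 m, 1 ≤ (a * k) % n := by
    intro k hk
    simp only [Finset.mem_Icc] at hk
    rcases Nat.eq_zero_or_pos ((a * k) % n) with h0 | h1
    · exfalso
      have hdvd : n ∣ a * k := Nat.dvd_of_mod_eq_zero h0
      have : n ∣ k := (Nat.Coprime.dvd_of_dvd_mul_left (hcon.symm) hdvd)
      have := Nat.le_of_dvd (by omega) this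
      omega
    · exact h1
  -- rewrite the filter set
  have hset : ((Finset.range n).filter
      (fun k => 0 < k ∧ 2 * k < n ∧
        n < 2 * ((a * k) % (2 * n)) ∧ 2 * ((a * k) % (2 * n)) < 3 * n))
      = ((Finset.Icc 1 m).filter
        (fun k => n < 2 * ((a * k) % (2 * n)) ∧ 2 * ((a * k) % (2 * n)) < 3 * n)) := by
    ext k
    simp only [Finset.mem_filter, Finset.mem_range, Finset.mem_Icc]
    constructor
    · rintro ⟨h1, h2, h3, h4', h5⟩
      exact ⟨⟨h2, by omega⟩, h4', h5⟩
    · rintro ⟨⟨h1, h2⟩, h3, h4'⟩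
      exact ⟨by omega, h1, by omega, h3, h4'⟩
  rw [hset]
  rw [Nat.even_iff, ← Nat.dvd_iff_mod_eq_zero]
  rw [← ZMod.natCast_eq_zero_iff]
  rw [Finset.card_filter, Nat.cast_sum]
  -- pointwise key lemma
  have key : ∀ k ∈ Finset.Icc 1 m,
      (((if n < 2 * ((a * k) % (2 * n)) ∧ 2 * ((a * k) % (2 * n)) < 3 * n then 1 else 0 : ℕ)) : ZMod 2)
        = (if n < 2 * ((a * k) % n) then (1 : ZMod 2) else 0) + ((a * k / n : ℕ) : ZMod 2) := by
    intro k hk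
    have hsnk := hsn k
    have hdm := Nat.div_add_mod (a * k) n
    have hdm2 := Nat.div_add_mod (a * k / n) 2
    have ht : (a * k) % (2 * n) = (a * k) % n + n * ((a * k / n) % 2) := by
      have hmul : n * (a * k / n) = n * ((a * k / n) % 2) + (2 * n) * ((a * k / n) / 2) := by
        conv_lhs => rw [← hdm2]
        ring
      have h2 : a * k = ((a * k) % n + n * ((a * k / n) % 2)) + (2 * n) * ((a * k / n) / 2) := by
        omega
      have hble : n * ((a * k / n) % 2) ≤ n * 1 := Nat.mul_le_mul_left _ (by omega)
      conv_lhs => rw [h2]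
      rw [Nat.add_mul_mod_self_left]
      exact Nat.mod_eq_of_lt (by omega)
    have hcast : ((a * k / n : ℕ) : ZMod 2) = (((a * k / n) % 2 : ℕ) : ZMod 2) :=
      (ZMod.natCast_mod _ 2).symm
    rcases Nat.mod_two_eq_zero_or_one (a * k / n) with hb | hb
    · rw [hb] at ht
      rw [hcast, hb]
      have hiff : (n < 2 * ((a * k) % (2 * n)) ∧ 2 * ((a * k) % (2 * n)) < 3 * n)
          ↔ n < 2 * ((a * k) % n) := by
        rw [ht]; omega
      rw [if_congr hiff rfl rfl]
      split_ifs <;> simp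
    · rw [hb] at ht
      rw [hcast, hb]
      have hiff : (n < 2 * ((a * k) % (2 * n)) ∧ 2 * ((a * k) % (2 * n)) < 3 * n)
          ↔ ¬ (n < 2 * ((a * k) % n)) := by
        rw [ht]; omega
      rw [if_congr hiff rfl rfl]
      split_ifs <;> simp <;> decide
  rw [Finset.sum_congr rfl key, Finset.sum_add_distrib]
  -- the folding map
  set g : ℕ → ℕ := fun k => if n < 2 * ((a * k) % n) then n - (a * k) % n else (a * k) % n with hg
  have hinj : ∀ x ∈ Finset.Icc 1 m, ∀ y ∈ Finset.Icc 1 m, g x = g y → x = y := by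
    intro x hx y hy hxy
    simp only [Finset.mem_Icc] at hx hy
    have hsx := hsn x
    have hsy := hsn y
    have hcase : (a * x) % n = (a * y) % n ∨ (a * x) % n + (a * y) % n = n := by
      simp only [hg] at hxy
      split_ifs at hxy <;> omega
    rcases hcase with hc | hc
    · have hmod : a * x ≡ a * y [MOD n] := hc
      have := Nat.ModEq.cancel_left_of_coprime hcon.symm hmod
      have hx' : x % n = x := Nat.mod_eq_of_lt (by omega)
      have hy' : y % n = y := Nat.mod_eq_of_lt (by omega)
      unfold Nat.ModEq at this
      omega
    · exfalso
      have hdvd : n ∣ a * x + a * y := by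
        have : (a * x + a * y) % n = 0 := by
          rw [Nat.add_mod, hc, Nat.mod_self]
        exact Nat.dvd_of_mod_eq_zero this
      have hdvd2 : n ∣ a * (x + y) := by rw [mul_add]; exact hdvd
      have : n ∣ x + y := Nat.Coprime.dvd_of_dvd_mul_left hcon.symm hdvd2
      have := Nat.le_of_dvd (by omega) this
      omega
  have hsub : (Finset.Icc 1 m).image g ⊆ Finset.Icc 1 m := by
    intro j hj
    simp only [Finset.mem_image] at hj
    obtain ⟨k, hk, rfl⟩ := hj
    have := hs1 k hk
    have := hsn k
    simp only [Finset.mem_Icc] at hk ⊢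
    simp only [hg]
    split_ifs <;> omega
  have himage : (Finset.Icc 1 m).image g = Finset.Icc 1 m :=
    Finset.eq_of_subset_of_card_le hsub
      (le_of_eq (Finset.card_image_of_injOn (fun x hx y hy h => hinj x hx y hy h)).symm)
  have hsum_g : ∑ k ∈ Finset.Icc 1 m, g k = ∑ k ∈ Finset.Icc 1 m, k := by
    have h1 : ∑ j ∈ (Finset.Icc 1 m).image g, j = ∑ k ∈ Finset.Icc 1 m, g k :=
      Finset.sum_image hinj
    rw [himage] at h1
    exact h1.symm
  -- cast facts
  have hna : ((n : ℕ) : ZMod 2) = 1 := by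
    rw [← ZMod.natCast_mod, hn1]; rfl
  have haa : ((a : ℕ) : ZMod 2) = 1 := by
    rw [← ZMod.natCast_mod, haodd]; rfl
  have htwo : ∀ x : ZMod 2, x + x = 0 := by decide
  have hsolve : ∀ x y : ZMod 2, x + y = 1 → x = 1 + y := by decide
  -- Fact A : ∑ k = ∑ e + ∑ s   in ZMod 2
  have factA : (∑ k ∈ Finset.Icc 1 m, ((k : ℕ) : ZMod 2))
      = (∑ k ∈ Finset.Icc 1 m, ((a * k / n : ℕ) : ZMod 2))
        + (∑ k ∈ Finset.Icc 1 m, (((a * k) % n : ℕ) : ZMod 2)) := by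
    rw [← Finset.sum_add_distrib]
    apply Finset.sum_congr rfl
    intro k hk
    have hdm := Nat.div_add_mod (a * k) n
    have : ((a * k : ℕ) : ZMod 2) = ((n * (a * k / n) + (a * k) % n : ℕ) : ZMod 2) := by
      rw [hdm]
    push_cast at this
    rw [hna, haa, one_mul] at this
    rw [one_mul] at this
    exact this
  -- Fact B : ∑ k = G + ∑ s   in ZMod 2
  have factB : (∑ k ∈ Finset.Icc 1 m, ((k : ℕ) : ZMod 2))
      = (∑ k ∈ Finset.Icc 1 m, (if n < 2 * ((a * k) % n) then (1 : ZMod 2) else 0))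
        + (∑ k ∈ Finset.Icc 1 m, (((a * k) % n : ℕ) : ZMod 2)) := by
    have hcastg : ∀ k ∈ Finset.Icc 1 m, ((g k : ℕ) : ZMod 2)
        = (if n < 2 * ((a * k) % n) then (1 : ZMod 2) else 0) + (((a * k) % n : ℕ) : ZMod 2) := by
      intro k hk
      have hsnk := hsn k
      simp only [hg]
      split_ifs with h
      · have hsum : (n - (a * k) % n) + (a * k) % n = n := Nat.sub_add_cancel (le_of_lt hsnk)
        have : ((n - (a * k) % n : ℕ) : ZMod 2) + (((a * k) % n : ℕ) : ZMod 2) = 1 := by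
          rw [← Nat.cast_add, hsum, hna]
        exact hsolve _ _ this
      · rw [zero_add]
    calc (∑ k ∈ Finset.Icc 1 m, ((k : ℕ) : ZMod 2))
        = ((∑ k ∈ Finset.Icc 1 m, k : ℕ) : ZMod 2) := by rw [Nat.cast_sum]
      _ = ((∑ k ∈ Finset.Icc 1 m, g k : ℕ) : ZMod 2) := by rw [hsum_g]
      _ = ∑ k ∈ Finset.Icc 1 m, ((g k : ℕ) : ZMod 2) := by rw [Nat.cast_sum]
      _ = _ := by rw [Finset.sum_congr rfl hcastg, Finset.sum_add_distrib]
  have hGE : (∑ k ∈ Finset.Icc 1 m, (if n < 2 * ((a * k) % n) then (1 : ZMod 2) else 0))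
      = ∑ k ∈ Finset.Icc 1 m, ((a * k / n : ℕ) : ZMod 2) := by
    have := factB.symm.trans factA
    exact add_right_cancel this
  rw [hGE]
  exact htwo _
end
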